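/- arXiv:2107.02705 — 13 statements merged into one kernel-verified Lean document; each statement's English description precedes it below -/
import Mathlib

section
/- For every 1 ≤ i ≤ n one has a_i·S ⊆ S_i. Consequently, if M ⊆ {1,…,n} satisfies Σ_{i∈M} Ra_i = R, then S = Σ_{i∈M} S_i, and hence S is spanned over R by the set B_M = {v(i,j) : 1 ≤ i < j ≤ n, {i,j} ∩ M ≠ ∅}. -/
/-! For a solution `x`, the identity `a i • x = ∑ j ≠ i, x j • v(i,j)` holds coordinatewise: the
`j`-th coordinate is `x j * a i`, and the `i`-th is `-∑ j ≠ i, x j * a j = x i * a i` because `x`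
is a solution (centrality of `a i` lets it move across `x k`). Given `∑ i ∈ M, c i * a i = 1`, every
solution is `x = ∑ i ∈ M, c i • (a i • x) ∈ ∑ i ∈ M, Sᵢ`. Finally `v(i,j) = -v(j,i)`, so each
generator of `Sᵢ` is, up to sign, some `v(i,j)` with `i < j`. -/

section TrivialSyzygies

variable {R ι : Type*} [Ring R] {a : ι → R}

section Syzygies

variable [Fintype ι]

/-- Solutions are written `∑ i, x i * a i = 0`, coefficients on the left, so that they form the
kernel of an `R`-linear map without any centrality assumption. -/
def syzygies (a : ι → R) : Submodule R (ι → R) :=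
  LinearMap.ker (Fintype.linearCombination R a)

lemma mem_syzygies {x : ι → R} : x ∈ syzygies a ↔ ∑ i, x i * a i = 0 := by
  simp [syzygies, Fintype.linearCombination_apply]

lemma mem_syzygies_of_center (ha : ∀ i, a i ∈ Set.center R) {x : ι → R} :
    x ∈ syzygies a ↔ ∑ i, a i * x i = 0 := by
  simp only [mem_syzygies, fun i => ((Set.mem_center_iff.mp (ha i)).comm (x i)).eq]

end Syzygies

variable [DecidableEq ι] {i j : ι}

def trivialSyzygy (a : ι → R) (i j : ι) : ι → R :=
  fun k => if k = i then -a j else if k = j then a i else 0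

lemma trivialSyzygy_of_ne (hij : i ≠ j) :
    trivialSyzygy a i j = Pi.single i (-a j) + Pi.single j (a i) := by
  ext k
  rcases eq_or_ne k i with rfl | hki
  · simp [trivialSyzygy, hij]
  · rcases eq_or_ne k j with rfl | hkj <;> simp [trivialSyzygy, *]

lemma trivialSyzygy_swap (hij : i ≠ j) : trivialSyzygy a i j = -trivialSyzygy a j i := by
  rw [trivialSyzygy_of_ne hij, trivialSyzygy_of_ne hij.symm, Pi.single_neg, Pi.single_neg]
  abel

lemma trivialSyzygy_mem_syzygies [Fintype ι] (hij : i ≠ j) (hcomm : Commute (a i) (a j)) :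
    trivialSyzygy a i j ∈ syzygies a := by
  simp only [syzygies, LinearMap.mem_ker, trivialSyzygy_of_ne hij, map_add,
    Fintype.linearCombination_apply_single, smul_eq_mul, neg_mul, hcomm.eq, neg_add_cancel]

lemma smul_trivialSyzygy (x : ι → R) (hj : j ≠ i) :
    x j • trivialSyzygy a i j = Pi.single j (x j * a i) - Pi.single i (x j * a j) := by
  rw [trivialSyzygy_of_ne hj.symm, smul_add, ← Pi.single_smul, ← Pi.single_smul, smul_eq_mul,
    smul_eq_mul, mul_neg, Pi.single_neg]
  abel

lemma central_smul_eq_sum_trivialSyzygy [Fintype ι] (hi : a i ∈ Set.center R) {x : ι → R}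
    (hx : x ∈ syzygies a) :
    a i • x = ∑ j ∈ Finset.univ.erase i, x j • trivialSyzygy a i j := by
  rw [Finset.sum_congr rfl fun j hj => smul_trivialSyzygy x (Finset.ne_of_mem_erase hj),
    Finset.sum_erase _ (by simp)]
  ext k
  simp [Finset.sum_apply, Pi.single_apply, mem_syzygies.mp hx, ((Set.mem_center_iff.mp hi).comm (x k)).eq]

def trivialSyzygySpan (a : ι → R) (i : ι) : Submodule R (ι → R) :=
  Submodule.span R {x | ∃ j, j ≠ i ∧ x = trivialSyzygy a i j}

lemma trivialSyzygy_mem_trivialSyzygySpan (hji : j ≠ i) :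
    trivialSyzygy a i j ∈ trivialSyzygySpan a i :=
  Submodule.subset_span ⟨j, hji, rfl⟩

theorem sum_trivialSyzygySpan_eq_span [LinearOrder ι] (M : Finset ι) :
    ∑ i ∈ M, trivialSyzygySpan a i =
      Submodule.span R {x | ∃ i j, i < j ∧ (i ∈ M ∨ j ∈ M) ∧ x = trivialSyzygy a i j} := by
  set B := {x | ∃ i j, i < j ∧ (i ∈ M ∨ j ∈ M) ∧ x = trivialSyzygy a i j}
  have mem_span_of_mem {i : ι} (hi : i ∈ M) {j : ι} (hji : j ≠ i) :
      trivialSyzygy a i j ∈ Submodule.span R B := by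
    rcases hji.lt_or_gt with hlt | hgt
    · rw [trivialSyzygy_swap hji.symm]
      exact Submodule.neg_mem _ (Submodule.subset_span ⟨j, i, hlt, Or.inr hi, rfl⟩)
    · exact Submodule.subset_span ⟨i, j, hgt, Or.inl hi, rfl⟩
  refine le_antisymm (Finset.sup_le_iff.mpr fun i hi => ?_) ?_
  · rw [trivialSyzygySpan, Submodule.span_le]
    rintro _ ⟨j, hji, rfl⟩
    exact mem_span_of_mem hi hji
  · rw [Submodule.span_le]
    rintro _ ⟨i, j, hij, hi | hj, rfl⟩
    · exact Finset.le_sup (f := trivialSyzygySpan a) hi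
        (trivialSyzygy_mem_trivialSyzygySpan hij.ne')
    · rw [trivialSyzygy_swap hij.ne]
      exact Finset.le_sup (f := trivialSyzygySpan a) hj
        (Submodule.neg_mem _ (trivialSyzygy_mem_trivialSyzygySpan hij.ne))

variable [Fintype ι]

lemma central_smul_mem_trivialSyzygySpan (hi : a i ∈ Set.center R) {x : ι → R}
    (hx : x ∈ syzygies a) : a i • x ∈ trivialSyzygySpan a i := by
  rw [central_smul_eq_sum_trivialSyzygy hi hx]
  exact Submodule.sum_mem _ fun j hj => Submodule.smul_mem _ _ <|
    trivialSyzygy_mem_trivialSyzygySpan (Finset.ne_of_mem_erase hj)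

lemma trivialSyzygySpan_le_syzygies (hi : a i ∈ Set.center R) :
    trivialSyzygySpan a i ≤ syzygies a := by
  rw [trivialSyzygySpan, Submodule.span_le]
  rintro _ ⟨j, hji, rfl⟩
  exact trivialSyzygy_mem_syzygies hji.symm ((Set.mem_center_iff.mp hi).comm (a j))

theorem syzygies_eq_sum_trivialSyzygySpan {M : Finset ι} (ha : ∀ i ∈ M, a i ∈ Set.center R)
    (hM : Ideal.span (a '' M) = ⊤) : syzygies a = ∑ i ∈ M, trivialSyzygySpan a i := by
  refine le_antisymm (fun x hx => ?_) (Finset.sup_le_iff.mpr fun i hi =>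
    trivialSyzygySpan_le_syzygies (ha i hi))
  obtain ⟨c, hc⟩ := (Submodule.mem_span_image_finset_iff_exists_fun' R).mp
    (hM ▸ Submodule.mem_top : (1 : R) ∈ Ideal.span (a '' M))
  have hx_eq : x = ∑ i ∈ M, c i • a i • x := by
    simp_rw [smul_smul, ← Finset.sum_smul, ← smul_eq_mul, hc, one_smul]
  rw [hx_eq]
  exact Submodule.sum_mem _ fun i hi => (Finset.le_sup (f := trivialSyzygySpan a) hi)
    (Submodule.smul_mem _ _ (central_smul_mem_trivialSyzygySpan (ha i hi) hx))

end TrivialSyzygies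

theorem stmt_0_general {R : Type*} [Ring R]
    {n : ℕ} (a : Fin n → R)
    (hcen : ∀ i, a i ∈ Set.center R)
    (S : Submodule R (Fin n → R))
    (hS : ∀ x, x ∈ S ↔ ∑ i, a i * x i = 0)
    (v : Fin n → Fin n → Fin n → R)
    (hv : ∀ i j k, v i j k = if k = i then -a j else if k = j then a i else 0)
    (Si : Fin n → Submodule R (Fin n → R))
    (hSi : ∀ i, Si i = Submodule.span R {x | ∃ j, j ≠ i ∧ x = v i j})
    (M : Finset (Fin n))
    (hM : Ideal.span (a '' (M : Set (Fin n))) = ⊤) :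
    (∀ i, ∀ x ∈ S, a i • x ∈ Si i) ∧
    S = ∑ i ∈ M, Si i ∧
    S = Submodule.span R {x | ∃ i j, i < j ∧ (i ∈ M ∨ j ∈ M) ∧ x = v i j} := by
  obtain rfl : v = trivialSyzygy a := funext fun i => funext fun j => funext (hv i j)
  obtain rfl : Si = trivialSyzygySpan a := funext hSi
  obtain rfl : S = syzygies a :=
    Submodule.ext fun x => (hS x).trans (mem_syzygies_of_center hcen).symm
  have hsum := syzygies_eq_sum_trivialSyzygySpan (fun i _ => hcen i) hM
  exact ⟨fun i _ hx => central_smul_mem_trivialSyzygySpan (hcen i) hx, hsum,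
    hsum.trans (sum_trivialSyzygySpan_eq_span M)⟩

/-- Lemma `gen`: for every `i`, `aᵢ • S ⊆ Sᵢ`; consequently if `M` satisfies
`Σ_{i∈M} R aᵢ = R`, then `S = Σ_{i∈M} Sᵢ` and `S` is spanned by
`B_M = {v(i,j) : i < j, {i,j} ∩ M ≠ ∅}`. -/
theorem stmt_0 {R : Type*} [Ring R] [Nontrivial R]
    {n : ℕ} (hn : 2 ≤ n) (a : Fin n → R)
    (hcen : ∀ i, a i ∈ Set.center R)
    (huni : Ideal.span (Set.range a) = ⊤)
    (S : Submodule R (Fin n → R))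
    (hS : ∀ x, x ∈ S ↔ ∑ i, a i * x i = 0)
    (v : Fin n → Fin n → Fin n → R)
    (hv : ∀ i j k, v i j k = if k = i then -a j else if k = j then a i else 0)
    (Si : Fin n → Submodule R (Fin n → R))
    (hSi : ∀ i, Si i = Submodule.span R {x | ∃ j, j ≠ i ∧ x = v i j})
    (M : Finset (Fin n))
    (hM : Ideal.span (a '' (M : Set (Fin n))) = ⊤) :
    (∀ i, ∀ x ∈ S, a i • x ∈ Si i) ∧
    S = ∑ i ∈ M, Si i ∧
    S = Submodule.span R {x | ∃ i j, i < j ∧ (i ∈ M ∨ j ∈ M) ∧ x = v i j} :=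
  stmt_0_general a hcen S hS v hv Si hSi M hM
end

section
/- Suppose R is a principal ideal domain, n ≥ 3, and |M| ≥ 2. Let X be the free R-module with basis {x(i,j) : (i,j) ∈ D}, let Λ : X → S be the R-module homomorphism sending x(i,j) to v(i,j), and let Y ⊆ X be the R-span of the elements y(i,j,k) = a_k·x(i,j) − a_j·x(i,k) + a_i·x(j,k) for (i,j,k) ∈ E. Then ker Λ = Y. -/
/-- antisymmetric indicator -/
def epsAux {R : Type*} [CommRing R] {n : ℕ} (D : Set (Fin n × Fin n)) (p q : Fin n) (e : D) : R :=
  if (e : Fin n × Fin n) = (p, q) then 1 else if (e : Fin n × Fin n) = (q, p) then -1 else 0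

/-- image of a wedge-triple under the Koszul differential -/
def wAux {R : Type*} [CommRing R] {n : ℕ} (a : Fin n → R) (D : Set (Fin n × Fin n))
    (l i j : Fin n) (e : D) : R :=
  a l * epsAux (R := R) D i j e - a i * epsAux (R := R) D l j e + a j * epsAux (R := R) D l i e

/-- Theorem `rela2`: over a principal ideal domain, the relations
`a_k x(i,j) − a_j x(i,k) + a_i x(j,k) = 0`, for `(i,j,k) ∈ E`, are defining
relations for `S`; i.e. `ker Λ = Y`. -/
theorem stmt_2 {R : Type*} [CommRing R] [IsDomain R] [IsPrincipalIdealRing R]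
    {n : ℕ} (hn : 3 ≤ n) (a : Fin n → R)
    (huni : Ideal.span (Set.range a) = ⊤)
    (S : Submodule R (Fin n → R))
    (hS : ∀ x, x ∈ S ↔ ∑ i, a i * x i = 0)
    (v : Fin n → Fin n → Fin n → R)
    (hv : ∀ i j k, v i j k = if k = i then -a j else if k = j then a i else 0)
    (M : Finset (Fin n)) (hMcard : 2 ≤ M.card)
    (hM : Ideal.span (a '' (M : Set (Fin n))) = ⊤)
    (D : Set (Fin n × Fin n))
    (hD : D = {q | q.1 < q.2 ∧ (q.1 ∈ M ∨ q.2 ∈ M)})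
    (Λ : (D → R) →ₗ[R] (Fin n → R))
    (hΛ : ∀ d : D, Λ (fun e => if e = d then 1 else 0) = v (d : Fin n × Fin n).1 (d : Fin n × Fin n).2)
    (Y : Submodule R (D → R))
    (hY : Y = Submodule.span R {y | ∃ i j k : Fin n, i < j ∧ j < k ∧
      ((i ∈ M ∧ j ∈ M) ∨ (i ∈ M ∧ k ∈ M) ∨ (j ∈ M ∧ k ∈ M)) ∧
      y = fun d : D => a k * (if (d : Fin n × Fin n) = (i, j) then 1 else 0)
        - a j * (if (d : Fin n × Fin n) = (i, k) then 1 else 0)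
        + a i * (if (d : Fin n × Fin n) = (j, k) then 1 else 0)}) :
    LinearMap.ker Λ = Y := by
  classical
  haveI : Fintype D := Fintype.ofFinite _
  have hDiff : ∀ x : Fin n × Fin n, x ∈ D ↔ (x.1 < x.2 ∧ (x.1 ∈ M ∨ x.2 ∈ M)) := by
    intro x; rw [hD]; exact Iff.rfl
  have hmemD : ∀ d : D, (d : Fin n × Fin n).1 < (d : Fin n × Fin n).2 ∧
      ((d : Fin n × Fin n).1 ∈ M ∨ (d : Fin n × Fin n).2 ∈ M) := fun d => (hDiff _).mp d.2
  have hDmem : ∀ p q : Fin n, p < q → (p ∈ M ∨ q ∈ M) → (p, q) ∈ D := by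
    intro p q h1 h2; exact (hDiff _).mpr ⟨h1, h2⟩
  -- formula for Λ
  have hΛ' : ∀ c : D → R, Λ c = ∑ d : D, c d • v (d : Fin n × Fin n).1 (d : Fin n × Fin n).2 := by
    intro c
    have hc : c = ∑ d : D, c d • (fun e : D => if e = d then (1:R) else 0) := by
      funext e
      simp only [Finset.sum_apply, Pi.smul_apply, smul_eq_mul, mul_ite, mul_one, mul_zero]
      rw [Finset.sum_ite_eq Finset.univ e c, if_pos (Finset.mem_univ e)]
    conv_lhs => rw [hc]
    rw [map_sum]
    simp only [map_smul, hΛ]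
  -- epsilon evaluation lemmas
  have heps_lt : ∀ p q : Fin n, p < q → ∀ e : D,
      epsAux (R := R) D p q e = if (e : Fin n × Fin n) = (p, q) then 1 else 0 := by
    intro p q hpq e
    have he := (hmemD e).1
    have hne : (e : Fin n × Fin n) ≠ (q, p) := by
      intro h
      rw [h] at he
      exact absurd (hpq.trans he) (lt_irrefl p)
    by_cases h1 : (e : Fin n × Fin n) = (p, q) <;> simp [epsAux, h1, hne]
  have heps_diag : ∀ (p : Fin n) (e : D), epsAux (R := R) D p p e = 0 := by
    intro p e
    have he := (hmemD e).1
    have hne : (e : Fin n × Fin n) ≠ (p, p) := by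
      intro h; rw [h] at he; exact lt_irrefl p he
    simp [epsAux, hne]
  have heps_swap : ∀ p q : Fin n, p ≠ q → ∀ e : D, epsAux (R := R) D p q e = - epsAux (R := R) D q p e := by
    intro p q hpq e
    by_cases h1 : (e : Fin n × Fin n) = (p, q) <;>
      by_cases h2 : (e : Fin n × Fin n) = (q, p) <;>
        simp [epsAux, h1, h2, hpq, Ne.symm hpq]
  -- easy inclusion
  have hYker : Y ≤ LinearMap.ker Λ := by
    rw [hY, Submodule.span_le]
    rintro y ⟨i, j, k, hij, hjk, hMc, rfl⟩
    have hik : i < k := hij.trans hjk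
    have hdij : (i, j) ∈ D := hDmem i j hij (by tauto)
    have hdik : (i, k) ∈ D := hDmem i k hik (by tauto)
    have hdjk : (j, k) ∈ D := hDmem j k hjk (by tauto)
    have hy : (fun d : D => a k * (if (d : Fin n × Fin n) = (i, j) then 1 else 0)
        - a j * (if (d : Fin n × Fin n) = (i, k) then 1 else 0)
        + a i * (if (d : Fin n × Fin n) = (j, k) then 1 else 0))
        = a k • (fun e : D => if e = ⟨(i,j), hdij⟩ then (1:R) else 0)
        - a j • (fun e : D => if e = ⟨(i,k), hdik⟩ then (1:R) else 0)
        + a i • (fun e : D => if e = ⟨(j,k), hdjk⟩ then (1:R) else 0) := by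
      funext e
      simp [Subtype.ext_iff]
    simp only [SetLike.mem_coe, LinearMap.mem_ker]
    rw [hy, map_add, map_sub, map_smul, map_smul, map_smul, hΛ, hΛ, hΛ]
    funext t
    simp only [Pi.add_apply, Pi.sub_apply, Pi.smul_apply, smul_eq_mul, Pi.zero_apply, hv]
    split_ifs <;> (try ring) <;> exfalso <;> subst_vars <;>
      first
        | exact lt_irrefl _ hij
        | exact lt_irrefl _ hjk
        | exact lt_irrefl _ hik
  -- hard inclusion
  refine le_antisymm ?_ hYker
  intro c hcker
  rw [LinearMap.mem_ker, hΛ'] at hcker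
  -- kernel condition, coordinatewise
  have h0 : ∀ t : Fin n,
      (∑ d : D, if t = (d : Fin n × Fin n).2 then c d * a (d : Fin n × Fin n).1 else 0)
      - (∑ d : D, if t = (d : Fin n × Fin n).1 then c d * a (d : Fin n × Fin n).2 else 0) = 0 := by
    intro t
    have h1 := congrFun hcker t
    simp only [Finset.sum_apply, Pi.smul_apply, smul_eq_mul, Pi.zero_apply] at h1
    rw [← Finset.sum_sub_distrib]
    refine Eq.trans (Finset.sum_congr rfl fun d _ => ?_) h1
    have hd12 := (hmemD d).1
    have hdne := ne_of_lt hd12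
    rw [hv]
    by_cases ht1 : t = (d : Fin n × Fin n).1
    · have ht2 : t ≠ (d : Fin n × Fin n).2 := by
        rw [ht1]; exact hdne
      simp [ht1, ht2, hdne]
      try ring
    · by_cases ht2 : t = (d : Fin n × Fin n).2 <;>
        simp [ht1, ht2, hdne, Ne.symm hdne] <;> ring
  have hAB : ∀ t : Fin n,
      (∑ d : D, if t = (d : Fin n × Fin n).1 then c d * a (d : Fin n × Fin n).2 else 0)
      = (∑ d : D, if t = (d : Fin n × Fin n).2 then c d * a (d : Fin n × Fin n).1 else 0) := by
    intro t
    exact (sub_eq_zero.mp (h0 t)).symm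
  -- produce b supported on M with ∑ b l * a l = 1
  have h1M : (1 : R) ∈ Ideal.span (a '' (M : Set (Fin n))) := by
    rw [hM]; trivial
  rw [← Ideal.submodule_span_eq, Set.image_eq_range, Submodule.mem_span_range_iff_exists_fun] at h1M
  obtain ⟨cf, hcf⟩ := h1M
  set b : Fin n → R := fun t => if h : t ∈ (M : Set (Fin n)) then cf ⟨t, h⟩ else 0 with hbdef
  have hb1 : ∑ t : Fin n, b t * a t = 1 := by
    have e1 : ∑ t : Fin n, b t * a t = ∑ t ∈ M, b t * a t := by
      refine (Finset.sum_subset (Finset.subset_univ M) ?_).symm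
      intro t _ ht
      have hb0 : b t = 0 := dif_neg (by simpa using ht)
      rw [hb0, zero_mul]
    have e2 : ∑ t ∈ M, b t * a t
        = ∑ t : ((M : Set (Fin n)) : Type _), b ↑t * a ↑t :=
      (Finset.sum_finset_coe _ _).symm
    rw [e1, e2, ← hcf]
    refine Finset.sum_congr rfl fun t _ => ?_
    have hbt : b ↑t = cf t := by simp [hbdef, t.2]
    rw [hbt, smul_eq_mul]
    -- membership of the w elements in Y
  have hwY : ∀ l : Fin n, l ∈ M → ∀ d : D,
      wAux a D l (d : Fin n × Fin n).1 (d : Fin n × Fin n).2 ∈ Y := by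
    intro l hlM d
    obtain ⟨hd12, hdM⟩ := hmemD d
    set i := (d : Fin n × Fin n).1 with hi
    set j := (d : Fin n × Fin n).2 with hj
    rcases lt_trichotomy l i with hli | hli | hli
    · rw [hY]
      refine Submodule.subset_span ⟨l, i, j, hli, hd12, by tauto, ?_⟩
      funext e
      simp only [wAux]
      rw [heps_lt i j hd12 e, heps_lt l j (hli.trans hd12) e, heps_lt l i hli e]
      ring
    · have hw0 : wAux a D l i j = 0 := by
        funext e
        simp only [wAux, hli]
        rw [heps_diag i e]
        simp
      rw [hw0]; exact Submodule.zero_mem Y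
    · rcases lt_trichotomy l j with hlj | hlj | hlj
      · have hw : wAux a D l i j = - fun e : D =>
            a j * (if (e : Fin n × Fin n) = (i, l) then 1 else 0)
            - a l * (if (e : Fin n × Fin n) = (i, j) then 1 else 0)
            + a i * (if (e : Fin n × Fin n) = (l, j) then 1 else 0) := by
          funext e
          simp only [wAux, Pi.neg_apply]
          rw [heps_lt i j hd12 e, heps_lt l j hlj e,
            heps_swap l i (ne_of_gt hli) e, heps_lt i l hli e]
          ring
        rw [hY, hw]
        exact Submodule.neg_mem _
          (Submodule.subset_span ⟨i, l, j, hli, hlj, by tauto, rfl⟩)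
      · have hw0 : wAux a D l i j = 0 := by
          funext e
          simp only [wAux, hlj]
          rw [heps_diag j e, heps_swap j i (ne_of_gt hd12) e]
          simp
        rw [hw0]; exact Submodule.zero_mem Y
      · have hw : wAux a D l i j = fun e : D =>
            a l * (if (e : Fin n × Fin n) = (i, j) then 1 else 0)
            - a j * (if (e : Fin n × Fin n) = (i, l) then 1 else 0)
            + a i * (if (e : Fin n × Fin n) = (j, l) then 1 else 0) := by
          funext e
          simp only [wAux]
          rw [heps_lt i j hd12 e,
            heps_swap l j (ne_of_gt hlj) e, heps_lt j l hlj e,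
            heps_swap l i (ne_of_gt hli) e, heps_lt i l hli e]
          ring
        rw [hY, hw]
        exact Submodule.subset_span ⟨i, j, l, hd12, hlj, by tauto, rfl⟩
  -- the homotopy identity
  have keyfun : c = ∑ l : Fin n, ∑ d : D,
      (b l * c d) • wAux a D l (d : Fin n × Fin n).1 (d : Fin n × Fin n).2 := by
    funext e
    have helt := (hmemD e).1
    have hene := ne_of_lt helt
    simp only [Finset.sum_apply, Pi.smul_apply, smul_eq_mul]
    have hε1 : ∀ d : D, epsAux (R := R) D (d : Fin n × Fin n).1 (d : Fin n × Fin n).2 e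
        = if d = e then 1 else 0 := by
      intro d
      rw [heps_lt _ _ (hmemD d).1 e]
      have hiff : ((e : Fin n × Fin n) = ((d : Fin n × Fin n).1, (d : Fin n × Fin n).2))
          ↔ (d = e) := by
        constructor
        · intro h
          exact Subtype.ext (by rw [h])
        · intro h
          rw [h]
      simp only [hiff]
    have hε23 : ∀ l t : Fin n, epsAux (R := R) D l t e
        = (if (e : Fin n × Fin n).1 = l ∧ (e : Fin n × Fin n).2 = t then 1 else 0)
          - (if (e : Fin n × Fin n).2 = l ∧ (e : Fin n × Fin n).1 = t then 1 else 0) := by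
      intro l t
      simp only [epsAux]
      by_cases h1 : (e : Fin n × Fin n).1 = l ∧ (e : Fin n × Fin n).2 = t <;>
        by_cases h2 : (e : Fin n × Fin n).2 = l ∧ (e : Fin n × Fin n).1 = t
      · exact absurd (h1.1.trans h2.1.symm) hene
      · have c1 : (e : Fin n × Fin n) = (l, t) := Prod.ext_iff.mpr ⟨h1.1, h1.2⟩
        rw [if_pos c1, if_pos h1, if_neg h2]; norm_num
      · have c1 : (e : Fin n × Fin n) ≠ (l, t) :=
          fun h => h1 ⟨(Prod.ext_iff.mp h).1, (Prod.ext_iff.mp h).2⟩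
        have c2 : (e : Fin n × Fin n) = (t, l) := Prod.ext_iff.mpr ⟨h2.2, h2.1⟩
        rw [if_neg c1, if_pos c2, if_neg h1, if_pos h2]; norm_num
      · have c1 : (e : Fin n × Fin n) ≠ (l, t) :=
          fun h => h1 ⟨(Prod.ext_iff.mp h).1, (Prod.ext_iff.mp h).2⟩
        have c2 : (e : Fin n × Fin n) ≠ (t, l) :=
          fun h => h2 ⟨(Prod.ext_iff.mp h).2, (Prod.ext_iff.mp h).1⟩
        rw [if_neg c1, if_neg c2, if_neg h1, if_neg h2]; norm_num
    have hsum : ∀ (l : Fin n) (d : D),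
        b l * c d * wAux a D l (d : Fin n × Fin n).1 (d : Fin n × Fin n).2 e
        = (b l * a l * c d) * (if d = e then 1 else 0)
          - (b l * (c d * a (d : Fin n × Fin n).1)) *
              (if (e : Fin n × Fin n).1 = l ∧ (e : Fin n × Fin n).2 = (d : Fin n × Fin n).2 then 1 else 0)
          + (b l * (c d * a (d : Fin n × Fin n).1)) *
              (if (e : Fin n × Fin n).2 = l ∧ (e : Fin n × Fin n).1 = (d : Fin n × Fin n).2 then 1 else 0)
          + (b l * (c d * a (d : Fin n × Fin n).2)) *
              (if (e : Fin n × Fin n).1 = l ∧ (e : Fin n × Fin n).2 = (d : Fin n × Fin n).1 then 1 else 0)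
          - (b l * (c d * a (d : Fin n × Fin n).2)) *
              (if (e : Fin n × Fin n).2 = l ∧ (e : Fin n × Fin n).1 = (d : Fin n × Fin n).1 then 1 else 0) := by
      intro l d
      simp only [wAux]
      rw [hε1 d, hε23 l (d : Fin n × Fin n).2, hε23 l (d : Fin n × Fin n).1]
      ring
    rw [Finset.sum_congr rfl fun l _ => Finset.sum_congr rfl fun d _ => hsum l d]
    simp only [Finset.sum_add_distrib, Finset.sum_sub_distrib]
    have hP1 : ∑ l : Fin n, ∑ d : D, (b l * a l * c d) * (if d = e then 1 else 0) = c e := by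
      have inner : ∀ l : Fin n,
          ∑ d : D, (b l * a l * c d) * (if d = e then 1 else 0) = b l * a l * c e := by
        intro l
        simp only [mul_ite, mul_one, mul_zero]
        rw [Finset.sum_ite_eq' Finset.univ e (fun d => b l * a l * c d)]
        simp
      rw [Finset.sum_congr rfl fun l _ => inner l, ← Finset.sum_mul, hb1, one_mul]
    have hP2 : ∑ l : Fin n, ∑ d : D, (b l * (c d * a (d : Fin n × Fin n).1)) *
          (if (e : Fin n × Fin n).1 = l ∧ (e : Fin n × Fin n).2 = (d : Fin n × Fin n).2 then 1 else 0)
        = b (e : Fin n × Fin n).1 * ∑ d : D,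
            (if (e : Fin n × Fin n).2 = (d : Fin n × Fin n).2 then c d * a (d : Fin n × Fin n).1 else 0) := by
      rw [Finset.sum_comm]
      have inner : ∀ d : D, ∑ l : Fin n, (b l * (c d * a (d : Fin n × Fin n).1)) *
            (if (e : Fin n × Fin n).1 = l ∧ (e : Fin n × Fin n).2 = (d : Fin n × Fin n).2 then 1 else 0)
          = if (e : Fin n × Fin n).2 = (d : Fin n × Fin n).2
              then b (e : Fin n × Fin n).1 * (c d * a (d : Fin n × Fin n).1) else 0 := by
        intro d
        simp only [mul_ite, mul_one, mul_zero, ite_and]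
        rw [Finset.sum_ite_eq Finset.univ (e : Fin n × Fin n).1
          (fun l => if (e : Fin n × Fin n).2 = (d : Fin n × Fin n).2
            then b l * (c d * a (d : Fin n × Fin n).1) else 0)]
        simp
      rw [Finset.sum_congr rfl fun d _ => inner d, Finset.mul_sum]
      exact Finset.sum_congr rfl fun d _ => by rw [mul_ite, mul_zero]
    have hP3 : ∑ l : Fin n, ∑ d : D, (b l * (c d * a (d : Fin n × Fin n).1)) *
          (if (e : Fin n × Fin n).2 = l ∧ (e : Fin n × Fin n).1 = (d : Fin n × Fin n).2 then 1 else 0)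
        = b (e : Fin n × Fin n).2 * ∑ d : D,
            (if (e : Fin n × Fin n).1 = (d : Fin n × Fin n).2 then c d * a (d : Fin n × Fin n).1 else 0) := by
      rw [Finset.sum_comm]
      have inner : ∀ d : D, ∑ l : Fin n, (b l * (c d * a (d : Fin n × Fin n).1)) *
            (if (e : Fin n × Fin n).2 = l ∧ (e : Fin n × Fin n).1 = (d : Fin n × Fin n).2 then 1 else 0)
          = if (e : Fin n × Fin n).1 = (d : Fin n × Fin n).2
              then b (e : Fin n × Fin n).2 * (c d * a (d : Fin n × Fin n).1) else 0 := by
        intro d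
        simp only [mul_ite, mul_one, mul_zero, ite_and]
        rw [Finset.sum_ite_eq Finset.univ (e : Fin n × Fin n).2
          (fun l => if (e : Fin n × Fin n).1 = (d : Fin n × Fin n).2
            then b l * (c d * a (d : Fin n × Fin n).1) else 0)]
        simp
      rw [Finset.sum_congr rfl fun d _ => inner d, Finset.mul_sum]
      exact Finset.sum_congr rfl fun d _ => by rw [mul_ite, mul_zero]
    have hP4 : ∑ l : Fin n, ∑ d : D, (b l * (c d * a (d : Fin n × Fin n).2)) *
          (if (e : Fin n × Fin n).1 = l ∧ (e : Fin n × Fin n).2 = (d : Fin n × Fin n).1 then 1 else 0)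
        = b (e : Fin n × Fin n).1 * ∑ d : D,
            (if (e : Fin n × Fin n).2 = (d : Fin n × Fin n).1 then c d * a (d : Fin n × Fin n).2 else 0) := by
      rw [Finset.sum_comm]
      have inner : ∀ d : D, ∑ l : Fin n, (b l * (c d * a (d : Fin n × Fin n).2)) *
            (if (e : Fin n × Fin n).1 = l ∧ (e : Fin n × Fin n).2 = (d : Fin n × Fin n).1 then 1 else 0)
          = if (e : Fin n × Fin n).2 = (d : Fin n × Fin n).1
              then b (e : Fin n × Fin n).1 * (c d * a (d : Fin n × Fin n).2) else 0 := by
        intro d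
        simp only [mul_ite, mul_one, mul_zero, ite_and]
        rw [Finset.sum_ite_eq Finset.univ (e : Fin n × Fin n).1
          (fun l => if (e : Fin n × Fin n).2 = (d : Fin n × Fin n).1
            then b l * (c d * a (d : Fin n × Fin n).2) else 0)]
        simp
      rw [Finset.sum_congr rfl fun d _ => inner d, Finset.mul_sum]
      exact Finset.sum_congr rfl fun d _ => by rw [mul_ite, mul_zero]
    have hP5 : ∑ l : Fin n, ∑ d : D, (b l * (c d * a (d : Fin n × Fin n).2)) *
          (if (e : Fin n × Fin n).2 = l ∧ (e : Fin n × Fin n).1 = (d : Fin n × Fin n).1 then 1 else 0)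
        = b (e : Fin n × Fin n).2 * ∑ d : D,
            (if (e : Fin n × Fin n).1 = (d : Fin n × Fin n).1 then c d * a (d : Fin n × Fin n).2 else 0) := by
      rw [Finset.sum_comm]
      have inner : ∀ d : D, ∑ l : Fin n, (b l * (c d * a (d : Fin n × Fin n).2)) *
            (if (e : Fin n × Fin n).2 = l ∧ (e : Fin n × Fin n).1 = (d : Fin n × Fin n).1 then 1 else 0)
          = if (e : Fin n × Fin n).1 = (d : Fin n × Fin n).1
              then b (e : Fin n × Fin n).2 * (c d * a (d : Fin n × Fin n).2) else 0 := by
        intro d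
        simp only [mul_ite, mul_one, mul_zero, ite_and]
        rw [Finset.sum_ite_eq Finset.univ (e : Fin n × Fin n).2
          (fun l => if (e : Fin n × Fin n).1 = (d : Fin n × Fin n).1
            then b l * (c d * a (d : Fin n × Fin n).2) else 0)]
        simp
      rw [Finset.sum_congr rfl fun d _ => inner d, Finset.mul_sum]
      exact Finset.sum_congr rfl fun d _ => by rw [mul_ite, mul_zero]
    rw [hP1, hP2, hP3, hP4, hP5, hAB (e : Fin n × Fin n).1, hAB (e : Fin n × Fin n).2]
    ring
  rw [keyfun]
  refine Submodule.sum_mem Y fun l _ => Submodule.sum_mem Y fun d _ => ?_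
  by_cases hlM : l ∈ M
  · exact Submodule.smul_mem Y _ (hwY l hlM d)
  · have hb0 : b l = 0 := dif_neg (by simpa using hlM)
    rw [hb0, zero_mul, zero_smul]
    exact Submodule.zero_mem Y
end

section
/- Suppose R is a principal ideal domain, n ≥ 3, and |M| ≥ 2. Let X be the free R-module with basis {x(i,j) : (i,j) ∈ D} and let Y ⊆ X be the R-span of the elements y(i,j,k) = a_k·x(i,j) − a_j·x(i,k) + a_i·x(j,k) for (i,j,k) ∈ E. Then the quotient module X/Y is a free R-module of rank n−1; equivalently, writing d = |D|, the R-module Y is free of rank d − (n−1) and is a direct summand of X. -/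
section Aux
variable {R : Type*} [CommRing R] {n : ℕ}

noncomputable def fAux (a : Fin n → R) (D : Set (Fin n × Fin n)) [Fintype D] :
    (D → R) →ₗ[R] (Fin n → R) where
  toFun x := fun m => ∑ d : D, x d *
      ((if (d : Fin n × Fin n).2 = m then a (d : Fin n × Fin n).1 else 0)
        - (if (d : Fin n × Fin n).1 = m then a (d : Fin n × Fin n).2 else 0))
  map_add' x y := by funext m; simp [add_mul, Finset.sum_add_distrib]
  map_smul' r x := by funext m; simp [Finset.mul_sum, mul_assoc]

noncomputable def hAux (c : Fin n → R) (D : Set (Fin n × Fin n)) :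
    (Fin n → R) →ₗ[R] (D → R) where
  toFun v := fun d => c (d : Fin n × Fin n).1 * v (d : Fin n × Fin n).2
      - c (d : Fin n × Fin n).2 * v (d : Fin n × Fin n).1
  map_add' x y := by funext d; simp; ring
  map_smul' r x := by funext d; simp; ring

lemma sub_hAux_fAux_single_mem (a c : Fin n → R) (M : Finset (Fin n))
    (D : Set (Fin n × Fin n)) [Fintype D]
    (hD : ∀ p : Fin n × Fin n, p ∈ D ↔ p.1 < p.2 ∧ (p.1 ∈ M ∨ p.2 ∈ M))
    (hc0 : ∀ i, i ∉ M → c i = 0) (hc1 : ∑ i, c i * a i = 1)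
    (Y : Submodule R (D → R))
    (hYgen : ∀ i j k : Fin n, i < j → j < k →
      ((i ∈ M ∧ j ∈ M) ∨ (i ∈ M ∧ k ∈ M) ∨ (j ∈ M ∧ k ∈ M)) →
      (fun d : D => a k * (if (d : Fin n × Fin n) = (i, j) then 1 else 0)
        - a j * (if (d : Fin n × Fin n) = (i, k) then 1 else 0)
        + a i * (if (d : Fin n × Fin n) = (j, k) then 1 else 0)) ∈ Y)
    (d₀ : D) :
    (Pi.single d₀ 1 : D → R) - hAux c D (fAux a D (Pi.single d₀ 1)) ∈ Y := by
  classical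
  have hne : ∀ (d : D) (u w : Fin n), ¬ u < w → (d : Fin n × Fin n) ≠ (u, w) := by
    intro d u w h hEq
    have hlt := ((hD d).1 d.2).1
    rw [hEq] at hlt
    exact h hlt
  obtain ⟨⟨p, q⟩, hd₀⟩ := d₀
  have hpq : p < q := ((hD (p, q)).1 hd₀).1
  have hpqM : p ∈ M ∨ q ∈ M := ((hD (p, q)).1 hd₀).2
  set W : Fin n → (D → R) := fun m d =>
    a m * (if (d : Fin n × Fin n) = (p, q) then 1 else 0)
    + a q * ((if (d : Fin n × Fin n) = (m, p) then 1 else 0)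
        - (if (d : Fin n × Fin n) = (p, m) then 1 else 0))
    + a p * ((if (d : Fin n × Fin n) = (q, m) then 1 else 0)
        - (if (d : Fin n × Fin n) = (m, q) then 1 else 0)) with hW
  have hWmem : ∀ m : Fin n, c m • W m ∈ Y := by
    intro m
    by_cases hmM : m ∈ M
    · rcases lt_trichotomy m p with hmp | rfl | hpm
      · have hWe : W m = fun d : D => a q * (if (d : Fin n × Fin n) = (m, p) then 1 else 0)
            - a p * (if (d : Fin n × Fin n) = (m, q) then 1 else 0)
            + a m * (if (d : Fin n × Fin n) = (p, q) then 1 else 0) := by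
          funext d
          simp only [hW]
          rw [if_neg (hne d p m (not_lt.2 hmp.le)), if_neg (hne d q m (not_lt.2 (hmp.trans hpq).le))]
          ring
        rw [hWe]
        exact Submodule.smul_mem _ _ (hYgen m p q hmp hpq (by tauto))
      · have hWe : W m = 0 := by
          funext d
          simp only [hW]
          rw [if_neg (hne d q m (not_lt.2 hpq.le))]
          simp
        rw [hWe, smul_zero]; exact zero_mem Y
      · rcases lt_trichotomy m q with hmq | rfl | hqm
        · have hWe : W m = -(fun d : D => a q * (if (d : Fin n × Fin n) = (p, m) then 1 else 0)
              - a m * (if (d : Fin n × Fin n) = (p, q) then 1 else 0)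
              + a p * (if (d : Fin n × Fin n) = (m, q) then 1 else 0)) := by
            funext d
            simp only [hW]
            rw [if_neg (hne d m p (not_lt.2 hpm.le)), if_neg (hne d q m (not_lt.2 hmq.le))]
            simp only [Pi.neg_apply]
            ring
          rw [hWe, smul_neg]
          exact neg_mem (Submodule.smul_mem _ _ (hYgen p m q hpm hmq (by tauto)))
        · have hWe : W m = 0 := by
            funext d
            simp only [hW]
            rw [if_neg (hne d m p (not_lt.2 (le_of_lt hpq)))]
            simp
          rw [hWe, smul_zero]; exact zero_mem Y
        · have hWe : W m = fun d : D => a m * (if (d : Fin n × Fin n) = (p, q) then 1 else 0)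
              - a q * (if (d : Fin n × Fin n) = (p, m) then 1 else 0)
              + a p * (if (d : Fin n × Fin n) = (q, m) then 1 else 0) := by
            funext d
            simp only [hW]
            rw [if_neg (hne d m p (not_lt.2 (hpq.trans hqm).le)),
              if_neg (hne d m q (not_lt.2 hqm.le))]
            ring
          rw [hWe]
          exact Submodule.smul_mem _ _ (hYgen p q m hpq hqm (by tauto))
    · rw [hc0 m hmM, zero_smul]; exact zero_mem Y
  have hsum : (Pi.single (⟨(p,q),hd₀⟩ : D) 1 : D → R)
      - hAux c D (fAux a D (Pi.single (⟨(p,q),hd₀⟩ : D) 1)) = ∑ m : Fin n, c m • W m := by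
    have hf : ∀ m' : Fin n, fAux a D (Pi.single (⟨(p,q),hd₀⟩ : D) 1) m'
        = (if q = m' then a p else 0) - (if p = m' then a q else 0) := by
      intro m'
      simp only [fAux, LinearMap.coe_mk, AddHom.coe_mk, Pi.single_apply, ite_mul, one_mul,
        zero_mul, Finset.sum_ite_eq', Finset.mem_univ, if_true]
    funext d
    have col1 : ∀ w : Fin n, (∑ m : Fin n, c m * (if (d : Fin n × Fin n) = (m, w) then 1 else 0))
        = if (d : Fin n × Fin n).2 = w then c (d : Fin n × Fin n).1 else 0 := by
      intro w
      have : ∀ m : Fin n, c m * (if (d : Fin n × Fin n) = (m, w) then 1 else 0)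
          = if (d : Fin n × Fin n).1 = m then (if (d : Fin n × Fin n).2 = w then c m else 0) else 0 := by
        intro m
        by_cases h1 : (d : Fin n × Fin n).1 = m <;> by_cases h2 : (d : Fin n × Fin n).2 = w <;>
          simp [Prod.ext_iff, h1, h2]
      simp only [this, Finset.sum_ite_eq, Finset.mem_univ, if_true]
    have col2 : ∀ w : Fin n, (∑ m : Fin n, c m * (if (d : Fin n × Fin n) = (w, m) then 1 else 0))
        = if (d : Fin n × Fin n).1 = w then c (d : Fin n × Fin n).2 else 0 := by
      intro w
      have : ∀ m : Fin n, c m * (if (d : Fin n × Fin n) = (w, m) then 1 else 0)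
          = if (d : Fin n × Fin n).2 = m then (if (d : Fin n × Fin n).1 = w then c m else 0) else 0 := by
        intro m
        by_cases h1 : (d : Fin n × Fin n).2 = m <;> by_cases h2 : (d : Fin n × Fin n).1 = w <;>
          simp [Prod.ext_iff, h1, h2]
      simp only [this, Finset.sum_ite_eq, Finset.mem_univ, if_true]
    have hRHS : (∑ m : Fin n, c m • W m) d
        = (if (d : Fin n × Fin n) = (p, q) then 1 else 0)
          + a q * ((if (d : Fin n × Fin n).2 = p then c (d : Fin n × Fin n).1 else 0)
              - (if (d : Fin n × Fin n).1 = p then c (d : Fin n × Fin n).2 else 0))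
          + a p * ((if (d : Fin n × Fin n).1 = q then c (d : Fin n × Fin n).2 else 0)
              - (if (d : Fin n × Fin n).2 = q then c (d : Fin n × Fin n).1 else 0)) := by
      rw [Finset.sum_apply]
      have expand : ∀ m : Fin n, (c m • W m) d
          = (c m * a m) * (if (d : Fin n × Fin n) = (p, q) then 1 else 0)
            + (a q * (c m * (if (d : Fin n × Fin n) = (m, p) then 1 else 0))
              - a q * (c m * (if (d : Fin n × Fin n) = (p, m) then 1 else 0)))
            + (a p * (c m * (if (d : Fin n × Fin n) = (q, m) then 1 else 0))
              - a p * (c m * (if (d : Fin n × Fin n) = (m, q) then 1 else 0))) := by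
        intro m
        simp only [Pi.smul_apply, smul_eq_mul, hW]
        ring
      rw [Finset.sum_congr rfl fun m _ => expand m]
      rw [Finset.sum_add_distrib, Finset.sum_add_distrib, Finset.sum_sub_distrib,
        Finset.sum_sub_distrib, ← Finset.sum_mul, hc1, one_mul,
        ← Finset.mul_sum, ← Finset.mul_sum, ← Finset.mul_sum, ← Finset.mul_sum,
        col1 p, col2 p, col2 q, col1 q]
      ring
    rw [Pi.sub_apply, hRHS]
    simp only [hAux, LinearMap.coe_mk, AddHom.coe_mk, hf, Pi.single_apply]
    obtain ⟨⟨s, t⟩, hd⟩ := d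
    have hst : s < t := ((hD (s, t)).1 hd).1
    simp only [Subtype.mk.injEq, Prod.mk.injEq]
    clear hRHS col1 col2 hf hYgen hWmem hW hne hc0 hc1 hD hpqM W
    simp only [ite_and, @eq_comm _ q t, @eq_comm _ p t, @eq_comm _ q s, @eq_comm _ p s]
    split_ifs <;>
      first
        | ring
        | (exfalso; simp only [Fin.ext_iff, Fin.lt_def, not_and] at *; omega)
  rw [hsum]
  exact Submodule.sum_mem Y fun m _ => hWmem m

lemma fAux_gen (a : Fin n → R) (M : Finset (Fin n)) (D : Set (Fin n × Fin n)) [Fintype D]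
    (hD : ∀ p : Fin n × Fin n, p ∈ D ↔ p.1 < p.2 ∧ (p.1 ∈ M ∨ p.2 ∈ M))
    (i j k : Fin n) (hij : i < j) (hjk : j < k)
    (hM2 : (i ∈ M ∧ j ∈ M) ∨ (i ∈ M ∧ k ∈ M) ∨ (j ∈ M ∧ k ∈ M)) :
    fAux a D (fun d : D => a k * (if (d : Fin n × Fin n) = (i, j) then 1 else 0)
        - a j * (if (d : Fin n × Fin n) = (i, k) then 1 else 0)
        + a i * (if (d : Fin n × Fin n) = (j, k) then 1 else 0)) = 0 := by
  classical
  have hijD : (i, j) ∈ D := (hD _).2 ⟨hij, by tauto⟩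
  have hikD : (i, k) ∈ D := (hD _).2 ⟨hij.trans hjk, by tauto⟩
  have hjkD : (j, k) ∈ D := (hD _).2 ⟨hjk, by tauto⟩
  have col : ∀ (p : Fin n × Fin n) (hp : p ∈ D) (g : Fin n × Fin n → R),
      (∑ d : D, (if (d : Fin n × Fin n) = p then 1 else 0) * g d) = g p := by
    intro p hp g
    have he : ∀ d : D, (if (d : Fin n × Fin n) = p then 1 else 0) * g d
        = if d = (⟨p, hp⟩ : D) then g d else 0 := by
      intro d
      by_cases h : (d : Fin n × Fin n) = p
      · rw [if_pos h, if_pos (Subtype.ext h), one_mul]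
      · rw [if_neg h, if_neg (fun hh => h (by rw [hh])), zero_mul]
    rw [Finset.sum_congr rfl fun d _ => he d, Finset.sum_ite_eq', if_pos (Finset.mem_univ _)]
  funext m
  simp only [fAux, LinearMap.coe_mk, AddHom.coe_mk, Pi.zero_apply]
  have expand : ∀ d : D,
      (a k * (if (d : Fin n × Fin n) = (i, j) then 1 else 0)
        - a j * (if (d : Fin n × Fin n) = (i, k) then 1 else 0)
        + a i * (if (d : Fin n × Fin n) = (j, k) then 1 else 0)) *
      ((if (d : Fin n × Fin n).2 = m then a (d : Fin n × Fin n).1 else 0)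
        - (if (d : Fin n × Fin n).1 = m then a (d : Fin n × Fin n).2 else 0))
      = a k * ((if (d : Fin n × Fin n) = (i, j) then 1 else 0) *
          ((if (d : Fin n × Fin n).2 = m then a (d : Fin n × Fin n).1 else 0)
            - (if (d : Fin n × Fin n).1 = m then a (d : Fin n × Fin n).2 else 0)))
        - a j * ((if (d : Fin n × Fin n) = (i, k) then 1 else 0) *
          ((if (d : Fin n × Fin n).2 = m then a (d : Fin n × Fin n).1 else 0)
            - (if (d : Fin n × Fin n).1 = m then a (d : Fin n × Fin n).2 else 0)))
        + a i * ((if (d : Fin n × Fin n) = (j, k) then 1 else 0) *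
          ((if (d : Fin n × Fin n).2 = m then a (d : Fin n × Fin n).1 else 0)
            - (if (d : Fin n × Fin n).1 = m then a (d : Fin n × Fin n).2 else 0))) := by
    intro d; ring
  rw [Finset.sum_congr rfl fun d _ => expand d]
  rw [Finset.sum_add_distrib, Finset.sum_sub_distrib, ← Finset.mul_sum, ← Finset.mul_sum,
    ← Finset.mul_sum,
    col (i, j) hijD (fun p => (if p.2 = m then a p.1 else 0) - (if p.1 = m then a p.2 else 0)),
    col (i, k) hikD (fun p => (if p.2 = m then a p.1 else 0) - (if p.1 = m then a p.2 else 0)),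
    col (j, k) hjkD (fun p => (if p.2 = m then a p.1 else 0) - (if p.1 = m then a p.2 else 0))]
  have hij' : i ≠ j := ne_of_lt hij
  have hjk' : j ≠ k := ne_of_lt hjk
  have hik' : i ≠ k := ne_of_lt (hij.trans hjk)
  by_cases h1 : i = m <;> by_cases h2 : j = m <;> by_cases h3 : k = m <;>
    simp only [h1, h2, h3, if_pos, if_neg, if_true] <;>
    first
      | (exfalso; simp only [Fin.ext_iff] at *; omega)
      | (split_ifs <;> first | ring | (exfalso; simp only [Fin.ext_iff] at *; omega))

noncomputable def dAux (a : Fin n → R) : (Fin n → R) →ₗ[R] R where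
  toFun v := ∑ i, v i * a i
  map_add' x y := by simp [add_mul, Finset.sum_add_distrib]
  map_smul' r x := by simp [Finset.mul_sum, mul_assoc]

lemma fAux_hAux (a c : Fin n → R) (M : Finset (Fin n)) (D : Set (Fin n × Fin n)) [Fintype D]
    (hD : ∀ p : Fin n × Fin n, p ∈ D ↔ p.1 < p.2 ∧ (p.1 ∈ M ∨ p.2 ∈ M))
    (hc0 : ∀ i, i ∉ M → c i = 0) (hc1 : ∑ i, c i * a i = 1)
    (v : Fin n → R) (m : Fin n) :
    fAux a D (hAux c D v) m = v m - (∑ i, v i * a i) * c m := by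
  classical
  simp only [fAux, hAux, LinearMap.coe_mk, AddHom.coe_mk]
  set F : Fin n × Fin n → R := fun p => (c p.1 * v p.2 - c p.2 * v p.1) *
      ((if p.2 = m then a p.1 else 0) - (if p.1 = m then a p.2 else 0)) with hF
  have h1 : ∑ d : D, F d = ∑ p ∈ D.toFinset, F p := Finset.sum_set_coe (f := F) D
  have h2 : ∑ p ∈ D.toFinset, F p
      = ∑ p ∈ Finset.univ.filter (fun p : Fin n × Fin n => p.1 < p.2), F p := by
    refine Finset.sum_subset ?_ ?_
    · intro p hp
      simp only [Set.mem_toFinset] at hp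
      simp [((hD p).1 hp).1]
    · intro p hp hnp
      simp only [Set.mem_toFinset] at hnp
      simp only [Finset.mem_filter] at hp
      have : ¬(p.1 ∈ M ∨ p.2 ∈ M) := fun h => hnp ((hD p).2 ⟨hp.2, h⟩)
      push_neg at this
      simp [hF, hc0 _ this.1, hc0 _ this.2]
  rw [show (∑ d : D, (c (d : Fin n × Fin n).1 * v (d : Fin n × Fin n).2
      - c (d : Fin n × Fin n).2 * v (d : Fin n × Fin n).1) *
      ((if (d : Fin n × Fin n).2 = m then a (d : Fin n × Fin n).1 else 0)
        - (if (d : Fin n × Fin n).1 = m then a (d : Fin n × Fin n).2 else 0)))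
      = ∑ d : D, F d from rfl, h1, h2, Finset.sum_filter, Fintype.sum_prod_type]
  have key : ∀ i j : Fin n, (if i < j then F (i, j) else 0)
      = (if j = m then (if i < j then (c i * v j - c j * v i) * a i else 0) else 0)
        - (if i = m then (if i < j then (c i * v j - c j * v i) * a j else 0) else 0) := by
    intro i j
    simp only [hF]
    split_ifs <;> ring
  simp only [key, Finset.sum_sub_distrib]
  have c1 : ∀ x : Fin n, (∑ x1 : Fin n, if x1 = m then (if x < x1 then (c x * v x1 - c x1 * v x) * a x else 0) else 0)
      = (if x < m then (c x * v m - c m * v x) * a x else 0) := by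
    intro x; simp [Finset.sum_ite_eq']
  have c2 : (∑ x : Fin n, ∑ x1 : Fin n, if x = m then (if x < x1 then (c x * v x1 - c x1 * v x) * a x1 else 0) else 0)
      = ∑ x1 : Fin n, if m < x1 then (c m * v x1 - c x1 * v m) * a x1 else 0 := by
    rw [Finset.sum_comm]
    refine Finset.sum_congr rfl fun x1 _ => ?_
    simp [Finset.sum_ite_eq']
  rw [c2]
  simp only [c1]
  rw [← Finset.sum_sub_distrib]
  have hr : v m - (∑ i, v i * a i) * c m = ∑ i : Fin n, (v m * (c i * a i) - (v i * a i) * c m) := by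
    rw [Finset.sum_sub_distrib, ← Finset.mul_sum, ← Finset.sum_mul, hc1, mul_one]
  rw [hr]
  refine Finset.sum_congr rfl fun i _ => ?_
  rcases lt_trichotomy i m with h | h | h
  · simp only [if_pos h, if_neg (lt_asymm h)]; ring
  · subst h; simp only [lt_irrefl, if_neg (lt_irrefl i)]; ring
  · simp only [if_neg (lt_asymm h), if_pos h]; ring

lemma dAux_fAux (a : Fin n → R) (D : Set (Fin n × Fin n)) [Fintype D] (x : D → R) :
    dAux a (fAux a D x) = 0 := by
  classical
  simp only [dAux, fAux, LinearMap.coe_mk, AddHom.coe_mk]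
  rw [Finset.sum_congr rfl fun m (_ : m ∈ Finset.univ) => Finset.sum_mul _ _ (a m)]
  rw [Finset.sum_comm]
  refine Finset.sum_eq_zero fun d _ => ?_
  have expand : ∀ m : Fin n,
      (x d * ((if (d : Fin n × Fin n).2 = m then a (d : Fin n × Fin n).1 else 0)
        - (if (d : Fin n × Fin n).1 = m then a (d : Fin n × Fin n).2 else 0))) * a m
      = x d * ((if (d : Fin n × Fin n).2 = m then a (d : Fin n × Fin n).1 * a m else 0)
        - (if (d : Fin n × Fin n).1 = m then a (d : Fin n × Fin n).2 * a m else 0)) := by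
    intro m; split_ifs <;> ring
  rw [Finset.sum_congr rfl fun m _ => expand m, ← Finset.mul_sum, Finset.sum_sub_distrib]
  simp [Finset.sum_ite_eq', mul_comm]

end Aux

/-- Over a principal ideal domain, `X/Y` is a free `R`-module of rank `n−1`;
equivalently, `Y` is free of rank `d − (n−1)` (where `d = |D|`) and is a direct
summand of `X`. -/
theorem stmt_3 {R : Type*} [CommRing R] [IsDomain R] [IsPrincipalIdealRing R]
    {n : ℕ} (hn : 3 ≤ n) (a : Fin n → R)
    (huni : Ideal.span (Set.range a) = ⊤)
    (M : Finset (Fin n)) (hMcard : 2 ≤ M.card)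
    (hM : Ideal.span (a '' (M : Set (Fin n))) = ⊤)
    (D : Set (Fin n × Fin n))
    (hD : D = {q | q.1 < q.2 ∧ (q.1 ∈ M ∨ q.2 ∈ M)})
    (Y : Submodule R (D → R))
    (hY : Y = Submodule.span R {y | ∃ i j k : Fin n, i < j ∧ j < k ∧
      ((i ∈ M ∧ j ∈ M) ∨ (i ∈ M ∧ k ∈ M) ∨ (j ∈ M ∧ k ∈ M)) ∧
      y = fun d : D => a k * (if (d : Fin n × Fin n) = (i, j) then 1 else 0)
        - a j * (if (d : Fin n × Fin n) = (i, k) then 1 else 0)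
        + a i * (if (d : Fin n × Fin n) = (j, k) then 1 else 0)}) :
    Module.Free R ((D → R) ⧸ Y) ∧ Module.finrank R ((D → R) ⧸ Y) = n - 1 ∧
    Module.Free R Y ∧ Module.finrank R Y = Nat.card D - (n - 1) ∧
    ∃ Y' : Submodule R (D → R), IsCompl Y Y' := by
  classical
  haveI : Fintype D := Fintype.ofFinite _
  have hDmem : ∀ p : Fin n × Fin n, p ∈ D ↔ p.1 < p.2 ∧ (p.1 ∈ M ∨ p.2 ∈ M) := by
    intro p; rw [hD]; exact Iff.rfl
  -- construct the coefficients c supported on M with ∑ c i * a i = 1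
  have h1 : (1 : R) ∈ Ideal.span (a '' (M : Set (Fin n))) := by rw [hM]; trivial
  have himg : a '' (M : Set (Fin n)) = Set.range (fun i : {x : Fin n // x ∈ M} => a ↑i) := by
    ext r
    constructor
    · rintro ⟨x, hx, rfl⟩; exact ⟨⟨x, hx⟩, rfl⟩
    · rintro ⟨⟨x, hx⟩, rfl⟩; exact ⟨x, hx, rfl⟩
  rw [himg, ← Ideal.submodule_span_eq, Submodule.mem_span_range_iff_exists_fun] at h1
  obtain ⟨c0, hc0sum⟩ := h1
  set c : Fin n → R := fun i => if h : i ∈ M then c0 ⟨i, h⟩ else 0 with hc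
  have hc0 : ∀ i, i ∉ M → c i = 0 := by intro i hi; simp [hc, hi]
  have hc1 : ∑ i, c i * a i = 1 := by
    calc ∑ i, c i * a i = ∑ i ∈ M, c i * a i :=
          (Finset.sum_subset (Finset.subset_univ M)
            (fun i _ hi => by rw [hc0 i hi, zero_mul])).symm
      _ = ∑ i : {x : Fin n // x ∈ M}, c ↑i * a ↑i :=
          (Finset.sum_coe_sort M (fun i => c i * a i)).symm
      _ = ∑ i : {x : Fin n // x ∈ M}, c0 i • a ↑i := by
          refine Finset.sum_congr rfl fun i _ => ?_
          rw [hc, smul_eq_mul]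
          simp [i.2]
      _ = 1 := hc0sum
  -- generators lie in Y
  have hYgen : ∀ i j k : Fin n, i < j → j < k →
      ((i ∈ M ∧ j ∈ M) ∨ (i ∈ M ∧ k ∈ M) ∨ (j ∈ M ∧ k ∈ M)) →
      (fun d : D => a k * (if (d : Fin n × Fin n) = (i, j) then 1 else 0)
        - a j * (if (d : Fin n × Fin n) = (i, k) then 1 else 0)
        + a i * (if (d : Fin n × Fin n) = (j, k) then 1 else 0)) ∈ Y := by
    intro i j k hij hjk hcond
    rw [hY]
    exact Submodule.subset_span ⟨i, j, k, hij, hjk, hcond, rfl⟩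
  -- the homotopy identity
  have hG : ∀ x : D → R, x - hAux c D (fAux a D x) ∈ Y := by
    intro x
    have hle : (⊤ : Submodule R (D → R)) ≤
        Submodule.comap (LinearMap.id - (hAux c D) ∘ₗ (fAux a D)) Y := by
      rw [← (Pi.basisFun R D).span_eq, Submodule.span_le]
      rintro _ ⟨d₀, rfl⟩
      simp only [SetLike.mem_coe, Submodule.mem_comap, LinearMap.sub_apply, LinearMap.id_coe,
        id_eq, LinearMap.coe_comp, Function.comp_apply, Pi.basisFun_apply]
      exact sub_hAux_fAux_single_mem a c M D hDmem hc0 hc1 Y hYgen d₀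
    have hx := hle (Submodule.mem_top (x := x))
    simpa using hx
  -- Y is the kernel of fAux
  have hker : LinearMap.ker (fAux a D) = Y := by
    apply le_antisymm
    · intro x hx
      have h := hG x
      rw [LinearMap.mem_ker] at hx
      rwa [hx, map_zero, sub_zero] at h
    · rw [hY, Submodule.span_le]
      rintro y ⟨i, j, k, hij, hjk, hcond, rfl⟩
      simp only [SetLike.mem_coe, LinearMap.mem_ker]
      exact fAux_gen a M D hDmem i j k hij hjk hcond
  -- the range of fAux is the kernel of dAux
  have hrange : LinearMap.range (fAux a D) = LinearMap.ker (dAux a) := by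
    apply le_antisymm
    · rintro _ ⟨x, rfl⟩
      rw [LinearMap.mem_ker]
      exact dAux_fAux a D x
    · intro v hv
      rw [LinearMap.mem_ker] at hv
      refine ⟨hAux c D v, ?_⟩
      funext m
      rw [fAux_hAux a c M D hDmem hc0 hc1 v m]
      have hv' : ∑ i, v i * a i = 0 := hv
      rw [hv', zero_mul, sub_zero]
  -- the projection onto the complement
  set P : (D → R) →ₗ[R] (D → R) := (hAux c D) ∘ₗ (fAux a D) with hP
  have hYP : ∀ y ∈ Y, P y = 0 := by
    intro y hy
    have h0 : fAux a D y = 0 := by rw [← hker] at hy; exact hy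
    rw [hP, LinearMap.comp_apply, h0, map_zero]
  have hidem : ∀ z, P (P z) = P z := by
    intro z
    have h1 : P (z - P z) = 0 := hYP _ (hG z)
    rw [map_sub, sub_eq_zero] at h1
    exact h1.symm
  set Y' : Submodule R (D → R) := LinearMap.range P with hY'
  have hcompl : IsCompl Y Y' := by
    constructor
    · rw [disjoint_iff, Submodule.eq_bot_iff]
      intro x hx
      rw [Submodule.mem_inf] at hx
      obtain ⟨hxY, z, rfl⟩ := hx
      have h0 := hYP _ hxY
      rwa [hidem z] at h0
    · rw [codisjoint_iff, Submodule.eq_top_iff']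
      intro x
      exact Submodule.mem_sup.2 ⟨x - P x, hG x, P x, ⟨x, rfl⟩, sub_add_cancel x (P x)⟩
  -- quotient is isomorphic to the kernel of dAux
  have eQ : ((D → R) ⧸ Y) ≃ₗ[R] LinearMap.ker (dAux a) :=
    (Submodule.quotEquivOfEq Y (LinearMap.ker (fAux a D)) hker.symm).trans
      ((fAux a D).quotKerEquivRange.trans (LinearEquiv.ofEq _ _ hrange))
  -- kernel of dAux is a complement of a free rank 1 module
  have hdc : dAux a c = 1 := hc1
  have hmemK : ∀ v : Fin n → R, v - dAux a v • c ∈ LinearMap.ker (dAux a) := by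
    intro v
    rw [LinearMap.mem_ker, map_sub, map_smul, hdc, smul_eq_mul, mul_one, sub_self]
  set L1 : (Fin n → R) →ₗ[R] ↥(LinearMap.ker (dAux a)) × R :=
    LinearMap.prod ((LinearMap.id - (dAux a).smulRight c).codRestrict _ (fun v => hmemK v))
      (dAux a) with hL1
  set L2 : ↥(LinearMap.ker (dAux a)) × R →ₗ[R] (Fin n → R) :=
    (LinearMap.ker (dAux a)).subtype ∘ₗ (LinearMap.fst R _ R)
      + (LinearMap.snd R _ R).smulRight c with hL2
  have h12 : L1 ∘ₗ L2 = LinearMap.id := by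
    apply LinearMap.ext
    rintro ⟨⟨v, hv⟩, r⟩
    rw [LinearMap.mem_ker] at hv
    rw [LinearMap.comp_apply, LinearMap.id_apply]
    have hx2 : L2 (⟨v, LinearMap.mem_ker.mpr hv⟩, r) = v + r • c := by
      simp [hL2]
    rw [hx2]
    have hdx : dAux a (v + r • c) = r := by
      rw [map_add, map_smul, hv, hdc, smul_eq_mul, mul_one, zero_add]
    refine Prod.ext (Subtype.ext ?_) ?_
    · show (v + r • c) - dAux a (v + r • c) • c = v
      rw [hdx]
      abel
    · show dAux a (v + r • c) = r
      exact hdx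
  have h21 : L2 ∘ₗ L1 = LinearMap.id := by
    apply LinearMap.ext
    intro v
    rw [LinearMap.comp_apply, LinearMap.id_apply]
    show (v - dAux a v • c) + dAux a v • c = v
    abel
  have eK : (Fin n → R) ≃ₗ[R] ↥(LinearMap.ker (dAux a)) × R :=
    LinearEquiv.ofLinear L1 L2 h12 h21
  -- rank computations
  obtain ⟨kK, bK⟩ := Submodule.basisOfPid (Pi.basisFun R (Fin n)) (LinearMap.ker (dAux a))
  haveI := Module.Free.of_basis bK
  haveI := Module.Finite.of_basis bK
  have hKr : Module.finrank R ↥(LinearMap.ker (dAux a)) = kK := by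
    rw [Module.finrank_eq_card_basis bK, Fintype.card_fin]
  have hnk : n = kK + 1 := by
    have h2 := eK.finrank_eq
    rw [Module.finrank_fintype_fun_eq_card, Fintype.card_fin, Module.finrank_prod, hKr,
      Module.finrank_self] at h2
    exact h2
  have freeQ : Module.Free R ((D → R) ⧸ Y) := Module.Free.of_equiv eQ.symm
  have hQr : Module.finrank R ((D → R) ⧸ Y) = n - 1 := by
    rw [eQ.finrank_eq, hKr]; omega
  obtain ⟨kY, bY⟩ := Submodule.basisOfPid (Pi.basisFun R D) Y
  haveI := Module.Free.of_basis bY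
  haveI := Module.Finite.of_basis bY
  obtain ⟨kY', bY'⟩ := Submodule.basisOfPid (Pi.basisFun R D) Y'
  haveI := Module.Free.of_basis bY'
  haveI := Module.Finite.of_basis bY'
  have hYr : Module.finrank R ↥Y = kY := by
    rw [Module.finrank_eq_card_basis bY, Fintype.card_fin]
  have hY'r : Module.finrank R ↥Y' = kY' := by
    rw [Module.finrank_eq_card_basis bY', Fintype.card_fin]
  have hsumr : Nat.card ↥D = kY + kY' := by
    have h2 := (Submodule.prodEquivOfIsCompl Y Y' hcompl).finrank_eq
    rw [Module.finrank_prod, hYr, hY'r, Module.finrank_fintype_fun_eq_card,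
      ← Nat.card_eq_fintype_card] at h2
    exact h2.symm
  have hY'n : kY' = n - 1 := by
    have h2 := (Submodule.quotientEquivOfIsCompl Y Y' hcompl).finrank_eq
    rw [hQr, hY'r] at h2
    exact h2.symm
  refine ⟨freeQ, hQr, Module.Free.of_basis bY, ?_, ⟨Y', hcompl⟩⟩
  rw [hYr]; omega
end

section
/- Let θ : S → (R/Ra_1)^{n−1} be the R-module homomorphism defined by θ(x_1,…,x_n) = (x_2 + Ra_1, …, x_n + Ra_1). Then the kernel of θ equals S_1. -/
/-- Lemma `theta`: the kernel of `θ : S → (R/Ra₁)^{n−1}`,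
`θ(x₁,…,xₙ) = (x₂ + Ra₁, …, xₙ + Ra₁)`, equals `S₁`.
Here `n = m + 1`. -/
theorem stmt_4 {R : Type*} [Ring R] [Nontrivial R]
    {m : ℕ} (hm : 1 ≤ m) (a : Fin (m + 1) → R)
    (hcen : ∀ i, a i ∈ Set.center R)
    (huni : Ideal.span (Set.range a) = ⊤)
    (S : Submodule R (Fin (m + 1) → R))
    (hS : ∀ x, x ∈ S ↔ ∑ i, a i * x i = 0)
    (v : Fin (m + 1) → Fin (m + 1) → Fin (m + 1) → R)
    (hv : ∀ i j k, v i j k = if k = i then -a j else if k = j then a i else 0)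
    (S1 : Submodule R (Fin (m + 1) → R))
    (hS1 : S1 = Submodule.span R {x | ∃ j, j ≠ 0 ∧ x = v 0 j})
    (θ : S →ₗ[R] (Fin m → R ⧸ Submodule.span R {a 0}))
    (hθ : ∀ (x : S) (j : Fin m),
      θ x j = Submodule.Quotient.mk ((x : Fin (m + 1) → R) j.succ)) :
    LinearMap.ker θ = Submodule.comap S.subtype S1 := by
  have hcomm : ∀ i b, a i * b = b * a i := fun i b =>
    ((Semigroup.mem_center_iff.mp (hcen i)) b).symm
  ext x
  simp only [LinearMap.mem_ker, Submodule.mem_comap, Submodule.subtype_apply]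
  constructor
  · intro hx
    have hmem : ∀ j : Fin m, ∃ c, c * a 0 = (x : Fin (m+1) → R) j.succ := by
      intro j
      have h0 : θ x j = 0 := by rw [hx]; rfl
      rw [hθ, Submodule.Quotient.mk_eq_zero, Submodule.mem_span_singleton] at h0
      obtain ⟨c, hc⟩ := h0
      exact ⟨c, by simpa [smul_eq_mul] using hc⟩
    choose c hc using hmem
    obtain ⟨r, hr⟩ : ∃ r : Fin (m+1) → R, ∑ i, r i • a i = 1 := by
      have h1 : (1 : R) ∈ Ideal.span (Set.range a) := by rw [huni]; trivial
      exact (Submodule.mem_span_range_iff_exists_fun R).mp h1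
    simp only [smul_eq_mul] at hr
    set t : R := (x : Fin (m+1) → R) 0 + ∑ j : Fin m, c j * a j.succ with ht
    have hxS : ∑ i, a i * (x : Fin (m+1) → R) i = 0 := (hS _).mp x.2
    rw [Fin.sum_univ_succ] at hxS
    have hat : a 0 * t = 0 := by
      rw [ht, mul_add, Finset.mul_sum]
      have : ∀ j : Fin m, a 0 * (c j * a j.succ) = a j.succ * (x : Fin (m+1) → R) j.succ := by
        intro j
        rw [← hc j]
        calc a 0 * (c j * a j.succ) = (c j * a j.succ) * a 0 := hcomm 0 _
          _ = c j * (a j.succ * a 0) := by rw [mul_assoc]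
          _ = c j * (a 0 * a j.succ) := by rw [hcomm 0 (a j.succ)]
          _ = (c j * a 0) * a j.succ := by rw [mul_assoc]
          _ = a j.succ * (c j * a 0) := (hcomm j.succ _).symm
      simp only [this]
      exact hxS
    have hxeq : (x : Fin (m+1) → R) = ∑ j : Fin m, (c j - r j.succ * t) • v 0 j.succ := by
      funext k
      rw [Finset.sum_apply]
      induction k using Fin.cases with
      | zero =>
        have hvv : ∀ j : Fin m, v 0 j.succ 0 = -a j.succ := by
          intro j; rw [hv]; simp
        simp only [Pi.smul_apply, hvv, smul_eq_mul, mul_neg, sub_mul, neg_sub,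
          Finset.sum_sub_distrib]
        have h2 : ∑ j : Fin m, r j.succ * t * a j.succ = t := by
          have : ∀ j : Fin m, r j.succ * t * a j.succ = r j.succ * a j.succ * t := by
            intro j; rw [mul_assoc, ← hcomm j.succ t, ← mul_assoc]
          rw [Finset.sum_congr rfl (fun j _ => this j), ← Finset.sum_mul]
          rw [Fin.sum_univ_succ] at hr
          have h3 : ∑ j : Fin m, r j.succ * a j.succ = 1 - r 0 * a 0 :=
            eq_sub_of_add_eq' hr
          rw [h3, sub_mul, one_mul, mul_assoc, hat, mul_zero, sub_zero]
        rw [h2, ht, add_sub_cancel_right]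
      | succ k =>
        have hvv : ∀ j : Fin m, v 0 j.succ k.succ = if j = k then a 0 else 0 := by
          intro j
          rw [hv]
          simp [Fin.succ_ne_zero, Fin.succ_inj, eq_comm]
        simp only [Pi.smul_apply, hvv, smul_eq_mul, mul_ite, mul_zero]
        rw [Finset.sum_ite_eq' Finset.univ k (fun j => (c j - r j.succ * t) * a 0)]
        simp only [Finset.mem_univ, if_true]
        rw [sub_mul, mul_assoc, ← hcomm 0 t, hat, mul_zero, sub_zero, hc]
    rw [hS1, hxeq]
    exact Submodule.sum_mem _ fun j _ => Submodule.smul_mem _ _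
      (Submodule.subset_span ⟨j.succ, Fin.succ_ne_zero j, rfl⟩)
  · intro hx
    have key : ∀ y ∈ Submodule.span R {x | ∃ j, j ≠ 0 ∧ x = v 0 j},
        ∀ k : Fin m, y k.succ ∈ Submodule.span R {a 0} := by
      intro y hy
      induction hy using Submodule.span_induction with
      | mem y hy =>
        obtain ⟨j, hj, rfl⟩ := hy
        intro k
        rw [hv]
        simp only [Fin.succ_ne_zero, if_false]
        split
        · exact Submodule.mem_span_singleton_self _
        · exact Submodule.zero_mem _
      | zero => intro k; exact Submodule.zero_mem _
      | add y z _ _ hy hz => intro k; exact Submodule.add_mem _ (hy k) (hz k)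
      | smul c y _ hy => intro k; exact Submodule.smul_mem _ _ (hy k)
    rw [hS1] at hx
    funext j
    rw [hθ]
    show _ = (0 : R ⧸ Submodule.span R {a 0})
    rw [Submodule.Quotient.mk_eq_zero]
    exact key _ hx j
end

section
/- If R is a commutative K-Hermite ring and 1 ≤ i ≤ n, then the quotient module S/S_i is isomorphic as an R-module to (R/Ra_i)^{n−2}. -/
/-!
Reducing the coordinates other than the `i`-th modulo `aᵢ` maps `S` onto the solution module of
the row `(āⱼ)_{j ≠ i}` over `R/aᵢ`, which is unimodular, and the kernel of this map is exactly
`Sᵢ`: a solution whose other coordinates are divisible by `aᵢ` differs from an element of `Sᵢ`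
by a vector supported at `i` and killed by `aᵢ`, and such a vector lies in `Sᵢ` because the `aⱼ`
generate the unit ideal. The ring `R/aᵢ` is again K-Hermite, so some invertible `Q` gives
`(āⱼ) Q = (d, 0, …, 0)`, where `d` is a unit by unimodularity; the coordinate change `Q⁻¹` then
identifies the solution module with the vectors whose first coordinate vanishes, a free module
of rank `n - 2`.
-/
open Matrix

def IsKHermite (A : Type*) [CommRing A] : Prop :=
  ∀ (k : ℕ) (b : Fin (k + 1) → A), ∃ (Q : Matrix (Fin (k + 1)) (Fin (k + 1)) A) (d : A),
    IsUnit Q.det ∧ b ᵥ* Q = Pi.single 0 d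

section UnimodularRow

variable {A : Type*} [CommRing A]

theorem IsKHermite.of_surjective {R : Type*} [CommRing R] (hR : IsKHermite R) (f : R →+* A)
    (hf : Function.Surjective f) : IsKHermite A := by
  intro k b
  obtain ⟨b', rfl⟩ := hf.comp_left b
  obtain ⟨Q, d, hQ, hbQ⟩ := hR k b'
  refine ⟨Q.map f, f d, ?_, funext fun j => ?_⟩
  · simpa [RingHom.map_det] using hQ.map f
  · rw [← RingHom.map_vecMul, hbQ]
    rcases eq_or_ne j 0 with rfl | hj <;> simp [*]

variable {ι : Type*} [Fintype ι] [DecidableEq ι]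

theorem eq_smul_row_of_vecMul_eq_single {b : ι → A} {Q : Matrix ι ι A} (hQ : IsUnit Q.det)
    {j₀ : ι} {d : A} (hbQ : b ᵥ* Q = Pi.single j₀ d) : b = d • Q⁻¹.row j₀ := by
  rw [← single_vecMul, ← hbQ, vecMul_vecMul, mul_nonsing_inv _ hQ, vecMul_one]

theorem dotProduct_eq_mul_mulVec_inv_apply {b : ι → A} {Q : Matrix ι ι A} (hQ : IsUnit Q.det)
    {j₀ : ι} {d : A} (hbQ : b ᵥ* Q = Pi.single j₀ d) (x : ι → A) :
    b ⬝ᵥ x = d * (Q⁻¹ *ᵥ x) j₀ := by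
  rw [eq_smul_row_of_vecMul_eq_single hQ hbQ, smul_dotProduct, smul_eq_mul]
  rfl

theorem isUnit_of_vecMul_eq_single {b : ι → A} (hb : Ideal.span (Set.range b) = ⊤)
    {Q : Matrix ι ι A} (hQ : IsUnit Q.det) {j₀ : ι} {d : A} (hbQ : b ᵥ* Q = Pi.single j₀ d) :
    IsUnit d := by
  rw [← Ideal.span_singleton_eq_top, eq_top_iff, ← hb, Ideal.span_le]
  rintro _ ⟨k, rfl⟩
  rw [eq_smul_row_of_vecMul_eq_single hQ hbQ]
  exact Ideal.mem_span_singleton'.2 ⟨_, mul_comm _ _⟩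

noncomputable def kerDotProductEquivOfVecMul {k : ℕ} {b : Fin (k + 1) → A}
    {Q : Matrix (Fin (k + 1)) (Fin (k + 1)) A} (hQ : IsUnit Q.det) {d : A} (hd : IsUnit d)
    (hbQ : b ᵥ* Q = Pi.single 0 d) :
    LinearMap.ker (dotProductEquiv A (Fin (k + 1)) b) ≃ₗ[A] (Fin k → A) where
  toFun x := Fin.tail (Q⁻¹ *ᵥ x.1)
  invFun z := ⟨Q *ᵥ Fin.cons 0 z, by
    simp [dotProduct_eq_mul_mulVec_inv_apply hQ hbQ, mulVec_mulVec, nonsing_inv_mul _ hQ]⟩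
  map_add' x y := by ext; simp [mulVec_add, Fin.tail]
  map_smul' r x := by ext; simp [mulVec_smul, Fin.tail]
  left_inv x := by
    have hx0 : (Q⁻¹ *ᵥ x.1) 0 = 0 :=
      hd.mul_right_eq_zero.1 ((dotProduct_eq_mul_mulVec_inv_apply hQ hbQ x.1).symm.trans x.2)
    ext1
    show Q *ᵥ Fin.cons 0 (Fin.tail (Q⁻¹ *ᵥ x.1)) = x.1
    rw [← hx0, Fin.cons_self_tail, mulVec_mulVec, mul_nonsing_inv _ hQ, one_mulVec]
  right_inv z := by
    simp [mulVec_mulVec, nonsing_inv_mul _ hQ]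

theorem IsKHermite.nonempty_ker_dotProduct_equiv (hA : IsKHermite A) {k : ℕ}
    {b : Fin (k + 1) → A} (hb : Ideal.span (Set.range b) = ⊤) :
    Nonempty (LinearMap.ker (dotProductEquiv A (Fin (k + 1)) b) ≃ₗ[A] (Fin k → A)) :=
  let ⟨_, _, hQ, hbQ⟩ := hA k b
  ⟨kerDotProductEquivOfVecMul hQ (isUnit_of_vecMul_eq_single hb hQ hbQ) hbQ⟩

end UnimodularRow

section KoszulSyzygy

variable {R ι : Type*} [CommRing R] [DecidableEq ι] (a : ι → R)

def koszulSyzygy (i j : ι) : ι → R := Pi.single j (a i) - Pi.single i (a j)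

theorem koszulSyzygy_mem_span (i j : ι) :
    koszulSyzygy a i j ∈ Submodule.span R (koszulSyzygy a i '' {i}ᶜ) := by
  rcases eq_or_ne j i with rfl | hj
  · simp [koszulSyzygy]
  · exact Submodule.subset_span ⟨j, hj, rfl⟩

variable [Fintype ι]

theorem dotProduct_koszulSyzygy (i j : ι) : a ⬝ᵥ koszulSyzygy a i j = 0 := by
  simp [koszulSyzygy, dotProduct_sub, mul_comm]

variable {a}

theorem single_mem_span_koszulSyzygy (ha : Ideal.span (Set.range a) = ⊤) {i : ι} {t : R}
    (ht : a i * t = 0) : Pi.single i t ∈ Submodule.span R (koszulSyzygy a i '' {i}ᶜ) := by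
  obtain ⟨r, hr⟩ := Ideal.mem_span_range_iff_exists_fun.1 (ha ▸ Submodule.mem_top : (1 : R) ∈ _)
  have hterm : ∀ k, (-(r k * t)) • koszulSyzygy a i k = Pi.single i (r k * a k * t) := by
    intro k
    ext l
    rcases eq_or_ne l k with rfl | hlk
    · rcases eq_or_ne l i with rfl | hli
      · simp [koszulSyzygy, mul_assoc, ht]
      · simp [koszulSyzygy, hli, mul_assoc, mul_comm t, ht]
    · simp only [koszulSyzygy, Pi.smul_apply, Pi.sub_apply, Pi.single_apply, hlk, if_false]
      split_ifs <;> ring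
  have hsum : Pi.single i t = ∑ k, (-(r k * t)) • koszulSyzygy a i k := by
    ext l
    rcases eq_or_ne l i with rfl | hl
    · simp [hterm, Finset.sum_apply, ← Finset.sum_mul, hr]
    · simp [hterm, Finset.sum_apply, hl]
  rw [hsum]
  exact Submodule.sum_mem _ fun k _ => Submodule.smul_mem _ _ (koszulSyzygy_mem_span a i k)

theorem mem_span_koszulSyzygy_of_dvd (ha : Ideal.span (Set.range a) = ⊤) {i : ι} {x : ι → R}
    (hx : a ⬝ᵥ x = 0) (hdvd : ∀ j ≠ i, a i ∣ x j) :
    x ∈ Submodule.span R (koszulSyzygy a i '' {i}ᶜ) := by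
  choose! c hc using hdvd
  set w := x - ∑ j, c j • koszulSyzygy a i j
  have hw : w = Pi.single i (w i) := by
    ext l
    rcases eq_or_ne l i with rfl | hl
    · simp
    · simp [w, koszulSyzygy, Finset.sum_apply, Pi.single_apply, hl, hc l hl, mul_comm]
  have hwi : a i * w i = 0 := by
    rw [← dotProduct_single, ← hw]
    simp [w, dotProduct_sub, dotProduct_sum, dotProduct_koszulSyzygy, hx]
  rw [show x = w + ∑ j, c j • koszulSyzygy a i j by simp [w]]
  exact add_mem (hw ▸ single_mem_span_koszulSyzygy ha hwi)
    (Submodule.sum_mem _ fun j _ => Submodule.smul_mem _ _ (koszulSyzygy_mem_span a i j))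

end KoszulSyzygy

section ReduceCoords

variable {R : Type*} [CommRing R] {n : ℕ}

noncomputable def reduceCoords (I : Ideal R) (i : Fin (n + 1)) :
    (Fin (n + 1) → R) →ₗ[R] (Fin n → R ⧸ I) :=
  LinearMap.pi fun t => I.mkQ ∘ₗ LinearMap.proj (i.succAbove t)

theorem reduceCoords_apply (I : Ideal R) (i : Fin (n + 1)) (x : Fin (n + 1) → R) (t : Fin n) :
    reduceCoords I i x t = Ideal.Quotient.mk I (x (i.succAbove t)) :=
  rfl

theorem reduceCoords_eq_zero_iff {I : Ideal R} {i : Fin (n + 1)} {x : Fin (n + 1) → R} :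
    reduceCoords I i x = 0 ↔ ∀ j ≠ i, x j ∈ I := by
  simp only [funext_iff, reduceCoords_apply, Pi.zero_apply, Ideal.Quotient.eq_zero_iff_mem]
  exact ⟨fun h j hj => (Fin.exists_succAbove_eq hj).elim fun t ht => ht ▸ h t,
    fun h t => h _ (Fin.succAbove_ne i t)⟩

variable {a : Fin (n + 1) → R} {I : Ideal R} {i : Fin (n + 1)}

theorem dotProduct_reduceCoords (hI : a i ∈ I) (x : Fin (n + 1) → R) :
    (fun t => Ideal.Quotient.mk I (a (i.succAbove t))) ⬝ᵥ reduceCoords I i x =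
      Ideal.Quotient.mk I (a ⬝ᵥ x) := by
  rw [RingHom.map_dotProduct, dotProduct, dotProduct, Fin.sum_univ_succAbove _ i]
  simp [Ideal.Quotient.eq_zero_iff_mem.2 hI, reduceCoords_apply]

theorem span_range_mk_comp_succAbove (ha : Ideal.span (Set.range a) = ⊤) (hI : a i ∈ I) :
    Ideal.span (Set.range fun t => Ideal.Quotient.mk I (a (i.succAbove t))) = ⊤ := by
  obtain ⟨r, hr⟩ := Ideal.mem_span_range_iff_exists_fun.1 (ha ▸ Submodule.mem_top : (1 : R) ∈ _)
  refine (Ideal.eq_top_iff_one _).2 (Ideal.mem_span_range_iff_exists_fun.2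
    ⟨fun t => Ideal.Quotient.mk I (r (i.succAbove t)), ?_⟩)
  rw [← map_one (Ideal.Quotient.mk I), ← hr, map_sum, Fin.sum_univ_succAbove _ i]
  simp [Ideal.Quotient.eq_zero_iff_mem.2 hI]

end ReduceCoords

section QuotientBySpan

variable {R : Type*} [CommRing R] {n : ℕ} {a : Fin (n + 1) → R}

theorem ker_reduceCoords_comp_subtype (ha : Ideal.span (Set.range a) = ⊤) (i : Fin (n + 1)) :
    LinearMap.ker (reduceCoords (Ideal.span {a i}) i ∘ₗ
        (LinearMap.ker (dotProductEquiv R _ a)).subtype) =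
      (Submodule.span R (koszulSyzygy a i '' {i}ᶜ)).comap
        (LinearMap.ker (dotProductEquiv R _ a)).subtype := by
  have hspan : Submodule.span R (koszulSyzygy a i '' {i}ᶜ) ≤
      LinearMap.ker (reduceCoords (Ideal.span {a i}) i) := by
    refine Submodule.span_le.2 ?_
    rintro _ ⟨j, -, rfl⟩
    refine reduceCoords_eq_zero_iff.2 fun k hk => ?_
    simp only [koszulSyzygy, Pi.sub_apply, Pi.single_apply, hk, if_false, sub_zero]
    split_ifs
    exacts [Ideal.mem_span_singleton_self _, zero_mem _]
  ext ⟨x, hx⟩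
  simp only [LinearMap.mem_ker, LinearMap.comp_apply, Submodule.subtype_apply,
    Submodule.mem_comap, reduceCoords_eq_zero_iff, Ideal.mem_span_singleton]
  exact ⟨mem_span_koszulSyzygy_of_dvd ha hx, fun h => by
    simpa [reduceCoords_eq_zero_iff, Ideal.mem_span_singleton] using hspan h⟩

theorem range_reduceCoords_comp_subtype (i : Fin (n + 1)) :
    LinearMap.range (reduceCoords (Ideal.span {a i}) i ∘ₗ
        (LinearMap.ker (dotProductEquiv R _ a)).subtype) =
      (LinearMap.ker (dotProductEquiv (R ⧸ Ideal.span {a i}) (Fin n)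
        fun t => Ideal.Quotient.mk _ (a (i.succAbove t)))).restrictScalars R := by
  have hai := Ideal.mem_span_singleton_self (a i)
  ext y
  simp only [LinearMap.mem_range, LinearMap.comp_apply, Submodule.subtype_apply,
    Submodule.restrictScalars_mem, LinearMap.mem_ker, dotProductEquiv_apply_apply]
  constructor
  · rintro ⟨⟨x, hx : a ⬝ᵥ x = 0⟩, rfl⟩
    rw [dotProduct_reduceCoords hai, hx, map_zero]
  · intro hy
    obtain ⟨z, rfl⟩ := Ideal.Quotient.mk_surjective.comp_left y
    obtain ⟨c, hc⟩ := Ideal.mem_span_singleton'.1 (Ideal.Quotient.eq_zero_iff_mem.1 (by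
      rw [← hy, RingHom.map_dotProduct]; rfl :
      Ideal.Quotient.mk (Ideal.span {a i}) ((fun t => a (i.succAbove t)) ⬝ᵥ z) = 0))
    refine ⟨⟨i.insertNth (-c) z, ?_⟩, funext fun t => by simp [reduceCoords_apply]⟩
    simp only [dotProduct, LinearMap.mem_ker, dotProductEquiv_apply_apply,
      Fin.sum_univ_succAbove _ i, Fin.insertNth_apply_same, Fin.insertNth_apply_succAbove] at hc ⊢
    linear_combination -hc

end QuotientBySpan

theorem IsKHermite.nonempty_quotient_span_koszulSyzygy_equiv {R : Type*} [CommRing R]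
    (hR : IsKHermite R) {m : ℕ} {a : Fin (m + 2) → R} (ha : Ideal.span (Set.range a) = ⊤)
    (i : Fin (m + 2)) :
    Nonempty ((LinearMap.ker (dotProductEquiv R _ a) ⧸
        (Submodule.span R (koszulSyzygy a i '' {i}ᶜ)).comap
          (LinearMap.ker (dotProductEquiv R _ a)).subtype) ≃ₗ[R]
      (Fin m → R ⧸ Ideal.span {a i})) := by
  obtain ⟨e⟩ := (hR.of_surjective _ Ideal.Quotient.mk_surjective).nonempty_ker_dotProduct_equiv
    (span_range_mk_comp_succAbove ha (Ideal.mem_span_singleton_self (a i)))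
  exact ⟨(Submodule.quotEquivOfEq _ _ (ker_reduceCoords_comp_subtype ha i).symm).trans <|
    (LinearMap.quotKerEquivRange _).trans <|
    (LinearEquiv.ofEq _ _ (range_reduceCoords_comp_subtype i)).trans <|
    ((Submodule.restrictScalarsEquiv R _ _ _).restrictScalars R).trans (e.restrictScalars R)⟩

theorem stmt_5_general {R : Type*} [CommRing R]
    (hKH : ∀ (m : ℕ), 1 ≤ m → ∀ b : Fin m → R,
      ∃ (Q : Matrix (Fin m) (Fin m) R) (d : R), IsUnit Q.det ∧
        ∀ j, ∑ k, b k * Q k j = if (j : ℕ) = 0 then d else 0)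
    {n : ℕ} (hn : 2 ≤ n) (a : Fin n → R)
    (huni : Ideal.span (Set.range a) = ⊤)
    (S : Submodule R (Fin n → R))
    (hS : ∀ x, x ∈ S ↔ ∑ i, a i * x i = 0)
    (v : Fin n → Fin n → Fin n → R)
    (hv : ∀ i j k, v i j k = if k = i then -a j else if k = j then a i else 0)
    (Si : Fin n → Submodule R (Fin n → R))
    (hSi : ∀ i, Si i = Submodule.span R {x | ∃ j, j ≠ i ∧ x = v i j})
    (i : Fin n) :
    Nonempty ((S ⧸ Submodule.comap S.subtype (Si i)) ≃ₗ[R]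
      (Fin (n - 2) → R ⧸ Ideal.span {a i})) := by
  obtain ⟨m, rfl⟩ : ∃ m, n = m + 2 := ⟨n - 2, by omega⟩
  have hR : IsKHermite R := fun k b => by
    obtain ⟨Q, d, hQ, hbQ⟩ := hKH (k + 1) k.succ_pos b
    refine ⟨Q, d, hQ, funext fun j => (hbQ j).trans ?_⟩
    simp only [Pi.single_apply, Fin.val_eq_zero_iff]
  have hv_eq : ∀ j ≠ i, v i j = koszulSyzygy a i j := fun j hj => funext fun k => by
    rcases eq_or_ne k i with rfl | hki
    · simp [hv, koszulSyzygy, hj.symm]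
    · simp [hv, koszulSyzygy, Pi.single_apply, hki]
  obtain rfl : S = LinearMap.ker (dotProductEquiv R _ a) := by
    ext x
    simp [hS, dotProduct]
  have hgens : {x | ∃ j, j ≠ i ∧ x = v i j} = koszulSyzygy a i '' {i}ᶜ := by
    ext x
    simp only [Set.mem_ofPred_eq, Set.mem_image, Set.mem_compl_singleton_iff]
    exact exists_congr fun j => ⟨fun ⟨hj, hx⟩ => ⟨hj, (hx.trans (hv_eq j hj)).symm⟩,
      fun ⟨hj, hx⟩ => ⟨hj, hx.symm.trans (hv_eq j hj).symm⟩⟩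
  rw [hSi, hgens, Nat.add_sub_cancel]
  exact hR.nonempty_quotient_span_koszulSyzygy_equiv huni i

/-- Theorem `S/S_1`: if `R` is a commutative K-Hermite ring then
`S/Sᵢ ≅ (R/Raᵢ)^{n−2}` for every `1 ≤ i ≤ n`. -/
theorem stmt_5 {R : Type*} [CommRing R] [Nontrivial R]
    (hKH : ∀ (m : ℕ), 1 ≤ m → ∀ b : Fin m → R,
      ∃ (Q : Matrix (Fin m) (Fin m) R) (d : R), IsUnit Q.det ∧
        ∀ j, ∑ k, b k * Q k j = if (j : ℕ) = 0 then d else 0)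
    {n : ℕ} (hn : 2 ≤ n) (a : Fin n → R)
    (huni : Ideal.span (Set.range a) = ⊤)
    (S : Submodule R (Fin n → R))
    (hS : ∀ x, x ∈ S ↔ ∑ i, a i * x i = 0)
    (v : Fin n → Fin n → Fin n → R)
    (hv : ∀ i j k, v i j k = if k = i then -a j else if k = j then a i else 0)
    (Si : Fin n → Submodule R (Fin n → R))
    (hSi : ∀ i, Si i = Submodule.span R {x | ∃ j, j ≠ i ∧ x = v i j})
    (i : Fin n) :
    Nonempty ((S ⧸ Submodule.comap S.subtype (Si i)) ≃ₗ[R]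
      (Fin (n - 2) → R ⧸ Ideal.span {a i})) :=
  stmt_5_general hKH hn a huni S hS v hv Si hSi i
end

section
/- The quotient R-module W/S is isomorphic to R/Ra_1. -/
/-!
The vectors `w(1,j)` form an `R`-basis of `W`: the last `n - 1` coordinates of `∑ c_j w(1,j)` are
the `c_j`, and its first one is `-(∑ c_j a_j) / a_1`. Such a vector lies in `S` exactly when that
first coordinate is in `R`, i.e. when `a_1 ∣ ∑ c_j a_j`. Hence `W/S` is the quotient of `R^{n-1}`
by the kernel of `c ↦ ∑ c_j a_j mod a_1`, and this map onto `R/Ra_1` is surjective because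
`(a_1, …, a_n)` is unimodular.
-/

theorem Submodule.mkQ_comp_surjective_iff {R M N : Type*} [Ring R] [AddCommGroup M] [Module R M]
    [AddCommGroup N] [Module R N] (p : Submodule R M) (f : N →ₗ[R] M) :
    Function.Surjective (p.mkQ ∘ₗ f) ↔ p ⊔ LinearMap.range f = ⊤ := by
  rw [← LinearMap.range_eq_top, LinearMap.range_comp, map_mkQ_eq_top]

theorem Ideal.mkQ_comp_linearCombination_tail_surjective {R : Type*} [CommRing R] {m : ℕ}
    {a : Fin (m + 1) → R} (huni : Ideal.span (Set.range a) = ⊤) :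
    Function.Surjective
      ((Ideal.span {a 0}).mkQ ∘ₗ Fintype.linearCombination R (Fin.tail a)) := by
  rw [Submodule.mkQ_comp_surjective_iff, Fintype.range_linearCombination, Ideal.span,
    ← Submodule.span_union, Set.singleton_union, ← Fin.range_fin_succ]
  exact huni

theorem exists_algebraMap_eq_div_iff_dvd {R K : Type*} [CommRing R] [Field K] [Algebra R K]
    (hA : Function.Injective (algebraMap R K)) {b : R} (hb : algebraMap R K b ≠ 0) (s : R) :
    (∃ r, algebraMap R K r = algebraMap R K s / algebraMap R K b) ↔ b ∣ s := by
  simp_rw [eq_div_iff hb, ← map_mul, hA.eq_iff, dvd_def, eq_comm (a := s), mul_comm]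

section

variable {R K : Type*} [CommRing R] [Field K] [Algebra R K] {m : ℕ} {a : Fin (m + 1) → R}
  {w : Fin m → Fin (m + 1) → K}

theorem linearCombination_eq_cons
    (hw : ∀ j k, w j k =
      if k = 0 then -(algebraMap R K (a j.succ)) / algebraMap R K (a 0)
      else if k = j.succ then 1 else 0) (c : Fin m → R) :
    Fintype.linearCombination R w c =
      Fin.cons (-algebraMap R K (Fintype.linearCombination R (Fin.tail a) c) /
        algebraMap R K (a 0)) (algebraMap R K ∘ c) := by
  ext k
  refine Fin.cases ?_ (fun i => ?_) k
  · simp only [Fintype.linearCombination_apply, Finset.sum_apply, Fin.cons_zero, Fin.tail,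
      smul_eq_mul, map_sum, map_mul, neg_div, Finset.sum_div, ← Finset.sum_neg_distrib]
    refine Finset.sum_congr rfl fun j _ => ?_
    rw [Pi.smul_apply, hw, if_pos rfl, Algebra.smul_def]
    ring
  · simp [Fintype.linearCombination_apply, hw, Fin.succ_ne_zero, Algebra.smul_def]

theorem linearCombination_injective
    (hw : ∀ j k, w j k =
      if k = 0 then -(algebraMap R K (a j.succ)) / algebraMap R K (a 0)
      else if k = j.succ then 1 else 0)
    (hA : Function.Injective (algebraMap R K)) :
    Function.Injective (Fintype.linearCombination R w) := fun c d h => by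
  rw [linearCombination_eq_cons hw, linearCombination_eq_cons hw] at h
  exact hA.comp_left (Fin.cons_injective2 h).2

theorem linearCombination_mem_iff {S : Submodule R (Fin (m + 1) → K)}
    (hS : ∀ x, x ∈ S ↔ (∀ i, ∃ r : R, algebraMap R K r = x i) ∧
      ∑ i, algebraMap R K (a i) * x i = 0)
    (hw : ∀ j k, w j k =
      if k = 0 then -(algebraMap R K (a j.succ)) / algebraMap R K (a 0)
      else if k = j.succ then 1 else 0)
    (hA : Function.Injective (algebraMap R K)) (ha : algebraMap R K (a 0) ≠ 0)
    (c : Fin m → R) :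
    Fintype.linearCombination R w c ∈ S ↔
      Fintype.linearCombination R (Fin.tail a) c ∈ Ideal.span {a 0} := by
  have hsum : ∑ i, algebraMap R K (a i) * Fintype.linearCombination R w c i = 0 := by
    rw [linearCombination_eq_cons hw, Fin.sum_univ_succ, Fin.cons_zero, mul_div_cancel₀ _ ha]
    simp [Fintype.linearCombination_apply, Fin.tail, mul_comm]
  rw [hS, and_iff_left hsum, Fin.forall_fin_succ, linearCombination_eq_cons hw]
  simp only [Fin.cons_zero, Fin.cons_succ, Function.comp_apply, exists_apply_eq_apply,
    implies_true, and_true]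
  rw [← map_neg, exists_algebraMap_eq_div_iff_dvd hA ha, dvd_neg, Ideal.mem_span_singleton]

end

theorem LinearMap.nonempty_quotient_equiv_of_ker_eq_comap {R M W N : Type*} [Ring R]
    [AddCommGroup M] [Module R M] [AddCommGroup W] [Module R W] [AddCommGroup N] [Module R N]
    (e : M ≃ₗ[R] W) {p : Submodule R W} {f : M →ₗ[R] N} (hf : Function.Surjective f)
    (hker : LinearMap.ker f = p.comap (e : M →ₗ[R] W)) : Nonempty ((W ⧸ p) ≃ₗ[R] N) := by
  have hmap : (LinearMap.ker f).map (e : M →ₗ[R] W) = p := by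
    rw [hker]
    exact Submodule.map_comap_eq_of_surjective e.surjective p
  exact ⟨(Submodule.Quotient.equiv _ p e hmap).symm.trans (f.quotKerEquivOfSurjective hf)⟩

theorem stmt_7_general {R : Type*} [CommRing R] [IsDomain R]
    {K : Type*} [Field K] [Algebra R K] [IsFractionRing R K]
    {m : ℕ} (a : Fin (m + 1) → R)
    (huni : Ideal.span (Set.range a) = ⊤) (ha1 : a 0 ≠ 0)
    (SF : Submodule R (Fin (m + 1) → K))
    (hSF : ∀ x, x ∈ SF ↔ (∀ i, ∃ r : R, algebraMap R K r = x i) ∧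
      ∑ i, algebraMap R K (a i) * x i = 0)
    (w : Fin m → Fin (m + 1) → K)
    (hw : ∀ j k, w j k =
      if k = 0 then -(algebraMap R K (a j.succ)) / algebraMap R K (a 0)
      else if k = j.succ then 1 else 0)
    (W : Submodule R (Fin (m + 1) → K))
    (hW : W = Submodule.span R (Set.range w)) :
    Nonempty ((W ⧸ Submodule.comap W.subtype SF) ≃ₗ[R]
      (R ⧸ Ideal.span {a 0})) := by
  have hA : Function.Injective (algebraMap R K) := IsFractionRing.injective R K
  have ha : algebraMap R K (a 0) ≠ 0 := (map_ne_zero_iff _ hA).mpr ha1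
  have hrange : LinearMap.range (Fintype.linearCombination R w) = W := by
    rw [hW, Fintype.range_linearCombination]
  let e : (Fin m → R) ≃ₗ[R] W :=
    (LinearEquiv.ofInjective _ (linearCombination_injective hw hA)).trans
      (LinearEquiv.ofEq _ _ hrange)
  refine LinearMap.nonempty_quotient_equiv_of_ker_eq_comap e
    (Ideal.mkQ_comp_linearCombination_tail_surjective huni) ?_
  ext c
  rw [LinearMap.mem_ker, LinearMap.comp_apply, Submodule.mkQ_apply,
    Submodule.Quotient.mk_eq_zero, ← linearCombination_mem_iff hSF hw hA ha]
  rfl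

/-- Theorem `ws`: `W/S ≅ R/Ra₁`. Here `n = m + 1`. -/
theorem stmt_7 {R : Type*} [CommRing R] [IsDomain R]
    {K : Type*} [Field K] [Algebra R K] [IsFractionRing R K]
    {m : ℕ} (hm : 1 ≤ m) (a : Fin (m + 1) → R)
    (huni : Ideal.span (Set.range a) = ⊤) (ha1 : a 0 ≠ 0)
    (SF : Submodule R (Fin (m + 1) → K))
    (hSF : ∀ x, x ∈ SF ↔ (∀ i, ∃ r : R, algebraMap R K r = x i) ∧
      ∑ i, algebraMap R K (a i) * x i = 0)
    (w : Fin m → Fin (m + 1) → K)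
    (hw : ∀ j k, w j k =
      if k = 0 then -(algebraMap R K (a j.succ)) / algebraMap R K (a 0)
      else if k = j.succ then 1 else 0)
    (W : Submodule R (Fin (m + 1) → K))
    (hW : W = Submodule.span R (Set.range w))
    (hSW : SF ≤ W) :
    Nonempty ((W ⧸ Submodule.comap W.subtype SF) ≃ₗ[R]
      (R ⧸ Ideal.span {a 0})) :=
  stmt_7_general a huni ha1 SF hSF w hw W hW
end

section
/- Suppose R is a principal ideal domain. Then there exists a basis {u_1,…,u_{n−2},u_{n−1}} of the R-module W such that {u_1,…,u_{n−2}, a_1·u_{n−1}} is a basis of S. Consequently S/S_1 = S/(a_1·W) is isomorphic as an R-module to (R/Ra_1)^{n−2}. -/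
/-
Identify `W` with `R^(n-1)` through its basis `w(1,2), …, w(1,n)`: the vector `∑ t_j w(1,j)` has
integral entries, hence lies in `S`, exactly when `a_1` divides `ψ t = ∑ t_j a_j`. Over a PID the
image of `ψ` is principal, say `(g)`, and `ker ψ` is a direct summand, so `W` has a basis
`u_1, …, u_{n-1}` with `ψ u_i = 0` for `i < n-1` and `ψ u_{n-1} = g`. Unimodularity makes `g`
coprime to `a_1`, so `S` consists of the vectors whose last `u`-coordinate is divisible by `a_1`,
i.e. `S` has basis `u_1, …, u_{n-2}, a_1 u_{n-1}`. In these coordinates `a_1 W` is cut out by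
divisibility by `a_1` of the first `n-2` coordinates, whence `S / a_1 W ≅ (R/Ra_1)^{n-2}`.
-/

open Module
open scoped Pointwise

section
variable {R M : Type*} [CommRing R] [IsDomain R] [IsPrincipalIdealRing R]
  [AddCommGroup M] [Module R M]

theorem LinearMap.exists_basis_map_eq_zero_of_ne_last {k : ℕ} (f : Basis (Fin (k + 1)) R M)
    (ψ : M →ₗ[R] R) :
    ∃ u : Basis (Fin (k + 1)) R M, (∀ i ≠ Fin.last k, ψ (u i) = 0) ∧
      LinearMap.range ψ = Ideal.span {ψ (u (Fin.last k))} := by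
  obtain ⟨g, hg⟩ := (IsPrincipalIdealRing.principal (LinearMap.range ψ)).principal
  have hψg (x : M) : ∃ e, e * g = ψ x := by
    have hx := LinearMap.mem_range_self ψ x
    rw [hg] at hx
    exact Ideal.mem_span_singleton'.mp hx
  by_cases hg0 : g = 0
  · have hψ : ∀ x, ψ x = 0 := fun x => by obtain ⟨e, he⟩ := hψg x; simp [← he, hg0]
    exact ⟨f, fun i _ => hψ _, by rw [hg, hg0, hψ]⟩
  obtain ⟨y, hy⟩ : g ∈ LinearMap.range ψ := hg ▸ Submodule.mem_span_singleton_self g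
  obtain ⟨n, bK⟩ := Submodule.basisOfPid f (LinearMap.ker ψ)
  -- `y` spans a complement of `ker ψ`, since `ψ y` generates the range of `ψ`
  let B := Basis.mkFinCons y bK
    (fun c x hx hc => by
      simpa [hy, LinearMap.mem_ker.mp hx, hg0] using congrArg ψ hc)
    (fun z => by
      obtain ⟨e, he⟩ := hψg z
      exact ⟨-e, by simp [← he, hy]⟩)
  obtain rfl : n = k := by simpa using Fintype.card_congr (B.indexEquiv f)
  refine ⟨B.reindex Fin.revPerm, fun i hi => ?_, ?_⟩
  · obtain ⟨j, hj⟩ := Fin.exists_succ_eq.mpr (Fin.rev_ne_iff.mpr (by simpa using hi) : i.rev ≠ 0)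
    simp [B, ← hj]
  · simp [B, hy, hg]

theorem LinearMap.exists_basis_dvd_iff_dvd_repr_last {k : ℕ} (f : Basis (Fin (k + 1)) R M)
    (ψ : M →ₗ[R] R) {a : R} (ha : Ideal.span {a} ⊔ LinearMap.range ψ = ⊤) :
    ∃ u : Basis (Fin (k + 1)) R M, ∀ x, a ∣ ψ x ↔ a ∣ u.repr x (Fin.last k) := by
  obtain ⟨u, hu, hrange⟩ := ψ.exists_basis_map_eq_zero_of_ne_last f
  have hcop : IsCoprime a (ψ (u (Fin.last k))) := by
    rwa [← Ideal.isCoprime_span_singleton_iff, Ideal.isCoprime_iff_sup_eq, ← hrange]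
  refine ⟨u, fun x => ?_⟩
  have hψx : ψ x = u.repr x (Fin.last k) * ψ (u (Fin.last k)) := by
    conv_lhs => rw [← u.sum_repr x]
    rw [map_sum, Fintype.sum_eq_single (Fin.last k) fun i hi => by simp [hu i hi]]
    simp
  rw [hψx]
  exact ⟨hcop.dvd_of_dvd_mul_right, fun h => h.mul_right _⟩
end

section
variable {R M ι : Type*} [CommRing R] [AddCommGroup M] [Module R M] [Fintype ι]

theorem Submodule.exists_basis_coe_eq_smul [IsDomain R] {W S : Submodule R M} (u : Basis ι R W)
    {c : ι → R} (hc : ∀ i, c i ≠ 0) (hSW : S ≤ W)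
    (hS : ∀ x : W, (x : M) ∈ S ↔ ∀ i, c i ∣ u.repr x i) :
    ∃ b : Basis ι R S, ∀ i, (b i : M) = c i • (u i : M) := by
  classical
  have hli : LinearIndependent R fun i => c i • (u i : M) := by
    refine Fintype.linearIndependent_iff.mpr fun t ht i => ?_
    have h : ∑ i, (t i * c i) • u i = 0 := by
      apply Subtype.ext
      simpa [mul_smul] using ht
    simpa [hc i] using Fintype.linearIndependent_iff.mp u.linearIndependent _ h i
  have hspan : Submodule.span R (Set.range fun i => c i • (u i : M)) = S := by
    apply le_antisymm
    · rw [Submodule.span_le]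
      rintro _ ⟨i, rfl⟩
      refine (hS (c i • u i)).mpr fun j => ?_
      rw [map_smul, Finsupp.smul_apply, u.repr_self_apply]
      split_ifs with hij
      · simp [hij]
      · simp
    · intro x hx
      choose q hq using (hS ⟨x, hSW hx⟩).mp hx
      have hx' : x = ∑ i, q i • c i • (u i : M) := by
        have h := congrArg Subtype.val (u.sum_repr ⟨x, hSW hx⟩)
        simp only [Submodule.coe_sum, Submodule.coe_smul, hq] at h
        simp [← h, smul_smul, mul_comm]
      rw [hx']
      exact Submodule.sum_mem _ fun i _ => Submodule.smul_mem _ _ (Submodule.subset_span ⟨i, rfl⟩)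
  exact ⟨(Basis.span hli).map (LinearEquiv.ofEq _ _ hspan), fun i => by simp⟩

theorem Submodule.coe_mem_smul_iff_dvd {W S : Submodule R M} (u : Basis ι R W)
    (b : Basis ι R S) {c : ι → R} (hb : ∀ i, (b i : M) = c i • (u i : M)) (a : R) (x : S) :
    (x : M) ∈ a • W ↔ ∀ i, a ∣ c i * b.repr x i := by
  set z : W := ∑ i, (c i * b.repr x i) • u i
  have hz : (z : M) = x := by
    conv_rhs => rw [← b.sum_repr x]
    simp only [z, Submodule.coe_sum, Submodule.coe_smul, hb, smul_smul, mul_comm]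
  have hzr (i : ι) : u.repr z i = c i * b.repr x i := by simp only [z, u.repr_sum_self]
  rw [Submodule.mem_smul_pointwise_iff_exists, ← hz]
  constructor
  · rintro ⟨y, hy, hyz⟩
    have : a • (⟨y, hy⟩ : W) = z := Subtype.ext hyz
    intro i
    rw [← hzr, ← this, map_smul, Finsupp.smul_apply, smul_eq_mul]
    exact dvd_mul_right _ _
  · intro h
    choose q hq using h
    refine ⟨(∑ i, q i • u i : W), Submodule.coe_mem _, ?_⟩
    rw [← Submodule.coe_smul]
    congr 1
    refine u.ext_elem fun i => ?_
    simp only [map_smul, Finsupp.smul_apply, u.repr_sum_self, smul_eq_mul, hzr, hq]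

theorem Module.Basis.nonempty_quotient_equiv_pi {N : Type*} [AddCommGroup N] [Module R N]
    {k : ℕ} (b : Basis (Fin (k + 1)) R N) (a : R) (P : Submodule R N)
    (hP : ∀ x, x ∈ P ↔ ∀ i : Fin k, a ∣ b.repr x i.castSucc) :
    Nonempty ((N ⧸ P) ≃ₗ[R] (Fin k → R ⧸ Ideal.span {a})) := by
  let Φ : N →ₗ[R] Fin k → R ⧸ Ideal.span {a} :=
    LinearMap.pi fun i => (Ideal.span {a}).mkQ ∘ₗ b.coord i.castSucc
  have hΦ : Function.Surjective Φ := by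
    intro y
    choose r hr using fun i => Submodule.Quotient.mk_surjective _ (y i)
    refine ⟨b.equivFun.symm (Fin.snoc r 0), funext fun i => ?_⟩
    simp only [Φ, LinearMap.pi_apply, LinearMap.comp_apply, b.coord_equivFun_symm,
      Fin.snoc_castSucc, Submodule.mkQ_apply, hr]
  have hker : LinearMap.ker Φ = P := by
    ext x
    simp [Φ, hP, funext_iff, Ideal.Quotient.eq_zero_iff_mem, Ideal.mem_span_singleton]
  exact ⟨(Submodule.quotEquivOfEq _ _ hker.symm).trans (Φ.quotKerEquivOfSurjective hΦ)⟩
end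

namespace SolutionModule

variable {R K : Type*} [CommRing R] [Field K] [Algebra R K] {m : ℕ} {a : Fin (m + 1) → R}
  {w : Fin m → Fin (m + 1) → K}

theorem sum_smul_apply_succ (hw : ∀ j k, w j k =
      if k = 0 then -(algebraMap R K (a j.succ)) / algebraMap R K (a 0)
      else if k = j.succ then 1 else 0)
    (t : Fin m → R) (i : Fin m) : (∑ j, t j • w j) i.succ = algebraMap R K (t i) := by
  simp [Finset.sum_apply, hw, Algebra.smul_def, Fin.succ_inj]

theorem algebraMap_mul_sum_smul_apply_zero (hw : ∀ j k, w j k =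
      if k = 0 then -(algebraMap R K (a j.succ)) / algebraMap R K (a 0)
      else if k = j.succ then 1 else 0)
    (ha : algebraMap R K (a 0) ≠ 0) (t : Fin m → R) :
    algebraMap R K (a 0) * (∑ j, t j • w j) 0 = -algebraMap R K (∑ j, t j * a j.succ) := by
  simp only [Finset.sum_apply, Pi.smul_apply]
  simp only [hw, if_pos, Algebra.smul_def, Finset.mul_sum, map_sum, ← Finset.sum_neg_distrib,
    map_mul]
  refine Finset.sum_congr rfl fun j _ => ?_
  field_simp

theorem linearIndependent [FaithfulSMul R K] (hw : ∀ j k, w j k =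
      if k = 0 then -(algebraMap R K (a j.succ)) / algebraMap R K (a 0)
      else if k = j.succ then 1 else 0) :
    LinearIndependent R w := by
  refine Fintype.linearIndependent_iff.mpr fun t ht i => ?_
  have h := sum_smul_apply_succ hw t i
  rwa [ht, Pi.zero_apply, eq_comm, map_eq_zero_iff _ (FaithfulSMul.algebraMap_injective R K)] at h

theorem sum_smul_mem_iff [FaithfulSMul R K] (ha : a 0 ≠ 0)
    (SF : Submodule R (Fin (m + 1) → K))
    (hSF : ∀ x, x ∈ SF ↔ (∀ i, ∃ r : R, algebraMap R K r = x i) ∧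
      ∑ i, algebraMap R K (a i) * x i = 0)
    (hw : ∀ j k, w j k =
      if k = 0 then -(algebraMap R K (a j.succ)) / algebraMap R K (a 0)
      else if k = j.succ then 1 else 0)
    (t : Fin m → R) : ∑ j, t j • w j ∈ SF ↔ a 0 ∣ ∑ j, t j * a j.succ := by
  have hinj := FaithfulSMul.algebraMap_injective R K
  have ha' : algebraMap R K (a 0) ≠ 0 := (map_ne_zero_iff _ hinj).mpr ha
  have h0 := algebraMap_mul_sum_smul_apply_zero hw ha' t
  have hsucc := sum_smul_apply_succ hw t
  rw [hSF, Fin.forall_fin_succ]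
  constructor
  · rintro ⟨⟨⟨r, hr⟩, -⟩, -⟩
    refine ⟨-r, hinj ?_⟩
    rw [map_mul, map_neg, hr, mul_neg, h0, neg_neg]
  · rintro ⟨q, hq⟩
    refine ⟨⟨⟨-q, mul_left_cancel₀ ha' ?_⟩, fun i => ⟨t i, (hsucc i).symm⟩⟩, ?_⟩
    · rw [h0, hq, map_neg, map_mul, mul_neg]
    · rw [Fin.sum_univ_succ, h0]
      simp [hsucc, mul_comm]

end SolutionModule

/-- Corollary `quot2`: over a PID there is a basis `{u₁,…,u_{n−1}}` of `W` such
that `{u₁,…,u_{n−2}, a₁·u_{n−1}}` is a basis of `S`; consequently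
`S/S₁ = S/(a₁W) ≅ (R/Ra₁)^{n−2}`. Here `n = m + 1`. -/
theorem stmt_8 {R : Type*} [CommRing R] [IsDomain R] [IsPrincipalIdealRing R]
    {K : Type*} [Field K] [Algebra R K] [IsFractionRing R K]
    {m : ℕ} (hm : 1 ≤ m) (a : Fin (m + 1) → R)
    (huni : Ideal.span (Set.range a) = ⊤) (ha1 : a 0 ≠ 0)
    (SF : Submodule R (Fin (m + 1) → K))
    (hSF : ∀ x, x ∈ SF ↔ (∀ i, ∃ r : R, algebraMap R K r = x i) ∧
      ∑ i, algebraMap R K (a i) * x i = 0)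
    (w : Fin m → Fin (m + 1) → K)
    (hw : ∀ j k, w j k =
      if k = 0 then -(algebraMap R K (a j.succ)) / algebraMap R K (a 0)
      else if k = j.succ then 1 else 0)
    (W : Submodule R (Fin (m + 1) → K))
    (hW : W = Submodule.span R (Set.range w))
    (hSW : SF ≤ W) :
    (∃ (u : Module.Basis (Fin m) R W) (b : Module.Basis (Fin m) R SF),
      ∀ i : Fin m, (b i : Fin (m + 1) → K) =
        if (i : ℕ) = m - 1 then a 0 • ((u i : Fin (m + 1) → K))
        else (u i : Fin (m + 1) → K)) ∧
    Nonempty ((SF ⧸ Submodule.comap SF.subtype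
        (Submodule.span R (Set.range fun j => a 0 • w j))) ≃ₗ[R]
      (Fin (m - 1) → R ⧸ Ideal.span {a 0})) := by
  obtain ⟨k, rfl⟩ : ∃ k, m = k + 1 := ⟨m - 1, by omega⟩
  let u₀ : Basis (Fin (k + 1)) R W :=
    (Basis.span (SolutionModule.linearIndependent hw)).map (LinearEquiv.ofEq _ _ hW.symm)
  let ψ : W →ₗ[R] R := u₀.constr R fun j => a j.succ
  have hcop : Ideal.span {a 0} ⊔ LinearMap.range ψ = ⊤ := by
    rw [Basis.constr_range, ← huni, ← Fin.cons_self_tail a, Fin.range_cons, Set.insert_eq,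
      Ideal.span_union]
    rfl
  obtain ⟨u, hu⟩ := ψ.exists_basis_dvd_iff_dvd_repr_last u₀ hcop
  have hS (x : W) : (x : Fin (k + 2) → K) ∈ SF ↔ a 0 ∣ ψ x := by
    have hx : (x : Fin (k + 2) → K) = ∑ j, u₀.repr x j • w j := by
      conv_lhs => rw [← u₀.sum_repr x]
      simp [u₀]
    rw [hx, SolutionModule.sum_smul_mem_iff ha1 SF hSF hw, Basis.constr_apply_fintype]
    rfl
  obtain ⟨b, hb⟩ := Submodule.exists_basis_coe_eq_smul u (c := fun i => if i = Fin.last k then a 0 else 1)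
    (fun i => by split_ifs <;> simp [ha1]) hSW
    (fun x => by simp [hS, hu, Fin.forall_fin_succ'])
  refine ⟨⟨u, b, fun i => ?_⟩, b.nonempty_quotient_equiv_pi (a 0) _ fun x => ?_⟩
  · simp [hb, Fin.ext_iff, ite_smul]
  · rw [Submodule.mem_comap, Set.range_smul, Submodule.span_smul, ← hW, Submodule.coe_subtype,
      Submodule.coe_mem_smul_iff_dvd u b hb, Fin.forall_fin_succ']
    simp [Fin.castSucc_ne_last]
end

section
/- Let X ≤ Y ≤ Z be free R-modules of finite rank r ≥ 1, with bases {x_1,…,x_r}, {y_1,…,y_r}, and {z_1,…,z_r} respectively. Let A ∈ M_r(R) (respectively B ∈ M_r(R)) be the matrix whose j-th column consists of the coordinates of x_j (respectively y_j) relative to the basis {z_1,…,z_r}. If det(A) = det(B), then X = Y. -/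
/-! If `C` is the matrix of the inclusion `X → Y`, then `A = B * C`. Since `Y → Z` is injective,
`det B ≠ 0`, so `det A = det B` forces `det C = 1` and the inclusion is an isomorphism. -/

open Module

theorem LinearMap.det_toMatrix_ne_zero_of_injective {R M N ι : Type*} [CommRing R] [IsDomain R]
    [AddCommGroup M] [Module R M] [AddCommGroup N] [Module R N] [Fintype ι] [DecidableEq ι]
    (b : Basis ι R M) (c : Basis ι R N) {f : M →ₗ[R] N} (hf : Function.Injective f) :
    (LinearMap.toMatrix b c f).det ≠ 0 := by
  intro h
  obtain ⟨v, hv0, hv⟩ := Matrix.exists_mulVec_eq_zero_iff.mpr h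
  set x := b.equivFun.symm v
  have hrepr : ⇑(b.repr x) = v := b.equivFun.apply_symm_apply v
  have hfx : f x = 0 := by
    refine c.repr.map_eq_zero_iff.mp (Finsupp.coe_eq_zero.mp ?_)
    rw [← LinearMap.toMatrix_mulVec_repr b c, hrepr, hv]
  exact hv0 (by rw [← hrepr, hf (hfx.trans f.map_zero.symm), map_zero, Finsupp.coe_zero])

theorem Submodule.eq_of_isUnit_det_toMatrix_inclusion {R Z ι : Type*} [CommRing R]
    [AddCommGroup Z] [Module R Z] [Fintype ι] [DecidableEq ι] {X Y : Submodule R Z} (h : X ≤ Y)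
    (bx : Basis ι R X) (by' : Basis ι R Y)
    (hu : IsUnit (LinearMap.toMatrix bx by' (Submodule.inclusion h)).det) : X = Y := by
  refine le_antisymm h fun y hy => ?_
  obtain ⟨x, hx⟩ := (LinearEquiv.ofIsUnitDet hu).surjective ⟨y, hy⟩
  rw [← show (x : Z) = y from congrArg Subtype.val hx]
  exact x.2

theorem stmt_9_general {R : Type*} [CommRing R] [IsDomain R]
    {Z : Type*} [AddCommGroup Z] [Module R Z]
    {r : ℕ}
    (X Y : Submodule R Z) (hXY : X ≤ Y)
    (bx : Module.Basis (Fin r) R X) (by' : Module.Basis (Fin r) R Y) (bz : Module.Basis (Fin r) R Z)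
    (A B : Matrix (Fin r) (Fin r) R)
    (hA : ∀ i j, A i j = bz.repr (bx j : Z) i)
    (hB : ∀ i j, B i j = bz.repr (by' j : Z) i)
    (hdet : A.det = B.det) :
    X = Y := by
  set C := LinearMap.toMatrix bx by' (Submodule.inclusion hXY)
  have hA' : A = LinearMap.toMatrix bx bz X.subtype := by
    ext i j; simp [hA, LinearMap.toMatrix_apply]
  have hB' : B = LinearMap.toMatrix by' bz Y.subtype := by
    ext i j; simp [hB, LinearMap.toMatrix_apply]
  have hAB : A = B * C := by
    rw [hA', hB', ← LinearMap.toMatrix_comp]; rfl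
  have hB0 : B.det ≠ 0 :=
    hB' ▸ LinearMap.det_toMatrix_ne_zero_of_injective by' bz Y.injective_subtype
  have hC : C.det = 1 :=
    mul_left_cancel₀ hB0 (by rw [← Matrix.det_mul, ← hAB, hdet, mul_one])
  exact Submodule.eq_of_isUnit_det_toMatrix_inclusion hXY bx by' (hC ▸ isUnit_one)

/-- Lemma `Z0`: if `X ≤ Y ≤ Z` are free `R`-modules of rank `r ≥ 1` with bases
whose coordinate matrices relative to a basis of `Z` have equal determinants,
then `X = Y`. -/
theorem stmt_9 {R : Type*} [CommRing R] [IsDomain R] [IsPrincipalIdealRing R]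
    {Z : Type*} [AddCommGroup Z] [Module R Z]
    {r : ℕ} (hr : 1 ≤ r)
    (X Y : Submodule R Z) (hXY : X ≤ Y)
    (bx : Module.Basis (Fin r) R X) (by' : Module.Basis (Fin r) R Y) (bz : Module.Basis (Fin r) R Z)
    (A B : Matrix (Fin r) (Fin r) R)
    (hA : ∀ i j, A i j = bz.repr (bx j : Z) i)
    (hB : ∀ i j, B i j = bz.repr (by' j : Z) i)
    (hdet : A.det = B.det) :
    X = Y :=
  stmt_9_general X Y hXY bx by' bz A B hA hB hdet
end

section
/- Suppose R is a principal ideal domain and a_1 ≠ 0. Let Z be an R-submodule of S having a basis {z_2,…,z_n} such that the determinant of the matrix whose j-th column consists of the coordinates of z_j relative to w(1,2),…,w(1,n) is equal to a_1. Then Z = S, and hence {z_2,…,z_n} is a basis of S. -/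
/-!
Write `δ = a₁` and `v = (a₂, …, aₙ)`. An element of `S` is determined by its last `n - 1`
coordinates `c`, and these can be any `c ∈ Rⁿ⁻¹` with `δ ∣ v ⬝ c`; in particular the columns of
`C` are such vectors, as `Z ≤ S`. So `Z = S` amounts to solving `C d = c` over `R`, i.e. to
`δ ∣ adj(C) c`. By Cramer's rule each entry of `adj(C) c` is the determinant of a matrix `M`
with `δ ∣ v ᵀM`, and then `δ` divides `det M • v = vᵀM adj(M)`; since `δ` and the entries of `v`
generate the unit ideal, `δ ∣ det M`.
-/

open Matrix

theorem dvd_of_forall_dvd_mul_of_span_insert_eq_top {R ι : Type*} [CommRing R] {δ x : R}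
    {v : ι → R} (hcop : Ideal.span (insert δ (Set.range v)) = ⊤) (h : ∀ i, δ ∣ x * v i) :
    δ ∣ x := by
  rw [← Ideal.span_singleton_le_span_singleton, ← Ideal.mul_top (Ideal.span {x}), ← hcop,
    Ideal.span_mul_span', Ideal.span_le]
  rintro _ ⟨_, rfl, y, hy, rfl⟩
  rw [SetLike.mem_coe, Ideal.mem_span_singleton]
  rcases hy with rfl | ⟨i, rfl⟩
  exacts [dvd_mul_left _ _, h i]

section Cramer

variable {R : Type*} [CommRing R] {n : Type*} [Fintype n] [DecidableEq n]

theorem dvd_det_mul_of_forall_dvd_vecMul {δ : R} {v : n → R} {M : Matrix n n R}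
    (h : ∀ k, δ ∣ (v ᵥ* M) k) (i : n) : δ ∣ M.det * v i := by
  have key : (v ᵥ* M ᵥ* M.adjugate) i = M.det * v i := by
    rw [vecMul_vecMul, mul_adjugate, vecMul_smul, vecMul_one, Pi.smul_apply, smul_eq_mul]
  rw [← key]
  exact Finset.dvd_sum fun k _ => (h k).mul_right _

theorem dvd_det_of_forall_dvd_vecMul {δ : R} {v : n → R} {M : Matrix n n R}
    (hcop : Ideal.span (insert δ (Set.range v)) = ⊤) (h : ∀ k, δ ∣ (v ᵥ* M) k) : δ ∣ M.det :=
  dvd_of_forall_dvd_mul_of_span_insert_eq_top hcop (dvd_det_mul_of_forall_dvd_vecMul h)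

theorem dvd_adjugate_mulVec {δ : R} {v c : n → R} {C : Matrix n n R}
    (hcop : Ideal.span (insert δ (Set.range v)) = ⊤) (hC : ∀ k, δ ∣ (v ᵥ* C) k)
    (hc : δ ∣ v ⬝ᵥ c) (j : n) : δ ∣ (C.adjugate *ᵥ c) j := by
  rw [← cramer_eq_adjugate_mulVec, cramer_apply]
  refine dvd_det_of_forall_dvd_vecMul hcop fun k => ?_
  rw [vecMul_updateCol, Function.update_apply]
  split_ifs
  exacts [hc, hC k]

theorem exists_mulVec_eq_of_det_eq [IsDomain R] {δ : R} {v c : n → R} {C : Matrix n n R}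
    (hδ : δ ≠ 0) (hdet : C.det = δ) (hcop : Ideal.span (insert δ (Set.range v)) = ⊤)
    (hC : ∀ k, δ ∣ (v ᵥ* C) k) (hc : δ ∣ v ⬝ᵥ c) : ∃ d, C *ᵥ d = c := by
  choose d hd using dvd_adjugate_mulVec hcop hC hc
  refine ⟨d, funext fun i => mul_left_cancel₀ hδ ?_⟩
  have := congrFun (congrArg (C *ᵥ ·) (funext hd : C.adjugate *ᵥ c = δ • d)) i
  rw [mulVec_mulVec, mul_adjugate, hdet, smul_mulVec, one_mulVec, mulVec_smul] at this
  exact this.symm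

end Cramer

theorem dvd_tail_dotProduct_of_dotProduct_eq_zero {R K : Type*} [CommRing R] [CommRing K]
    {f : R →+* K} (hf : Function.Injective f) {m : ℕ} {a : Fin (m + 1) → R}
    {x : Fin (m + 1) → K} {c : Fin m → R} (hx₀ : ∃ r, f r = x 0) (hc : Fin.tail x = f ∘ c)
    (h : (f ∘ a) ⬝ᵥ x = 0) : a 0 ∣ Fin.tail a ⬝ᵥ c := by
  obtain ⟨r, hr⟩ := hx₀
  have hc' : ∀ i : Fin m, x i.succ = f (c i) := congrFun hc
  have : a 0 * r + Fin.tail a ⬝ᵥ c = 0 := by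
    apply hf
    rw [dotProduct, Fin.sum_univ_succ] at h
    simpa [dotProduct, Fin.tail, hr, hc'] using h
  exact ⟨-r, by linear_combination this⟩

theorem eq_of_dotProduct_eq_zero_of_tail_eq {K : Type*} [CommRing K] [IsDomain K] {m : ℕ}
    {a x y : Fin (m + 1) → K} (ha : a 0 ≠ 0) (hx : a ⬝ᵥ x = 0) (hy : a ⬝ᵥ y = 0)
    (h : Fin.tail x = Fin.tail y) : x = y := by
  have htail : ∀ i : Fin m, x i.succ = y i.succ := congrFun h
  rw [← Fin.cons_self_tail x, ← Fin.cons_self_tail y, h]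
  congr 1
  rw [dotProduct, Fin.sum_univ_succ] at hx hy
  simp only [htail] at hx
  exact mul_left_cancel₀ ha (by linear_combination hx - hy)

theorem exists_eq_sum_smul_of_det_eq {R K : Type*} [CommRing R] [IsDomain R] [CommRing K]
    [IsDomain K] [Algebra R K] (hf : Function.Injective (algebraMap R K)) {m : ℕ}
    {a : Fin (m + 1) → R} (huni : Ideal.span (Set.range a) = ⊤) (ha : a 0 ≠ 0)
    {v : Fin m → Fin (m + 1) → K} {C : Matrix (Fin m) (Fin m) R}
    (hv₀ : ∀ j, ∃ r, algebraMap R K r = v j 0) (hv : ∀ j, (algebraMap R K ∘ a) ⬝ᵥ v j = 0)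
    (hv_succ : ∀ i j, v j i.succ = algebraMap R K (C i j)) (hdet : C.det = a 0)
    {x : Fin (m + 1) → K} (hx_int : ∀ i, ∃ r, algebraMap R K r = x i)
    (hx : (algebraMap R K ∘ a) ⬝ᵥ x = 0) : ∃ d : Fin m → R, x = ∑ j, d j • v j := by
  have hcop : Ideal.span (insert (a 0) (Set.range (Fin.tail a))) = ⊤ := by
    rwa [← Fin.range_cons, Fin.cons_self_tail]
  have hC : ∀ k, a 0 ∣ (Fin.tail a ᵥ* C) k := fun k =>
    dvd_tail_dotProduct_of_dotProduct_eq_zero hf (hv₀ k) (funext fun i => hv_succ i k) (hv k)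
  choose c hc using fun i : Fin m => hx_int i.succ
  have hx_tail : Fin.tail x = algebraMap R K ∘ c := funext fun i => (hc i).symm
  obtain ⟨d, rfl⟩ := exists_mulVec_eq_of_det_eq ha hdet hcop hC
    (dvd_tail_dotProduct_of_dotProduct_eq_zero hf (hx_int 0) hx_tail hx)
  refine ⟨d, eq_of_dotProduct_eq_zero_of_tail_eq (by simpa using hf.ne ha) hx ?_ ?_⟩
  · simp [dotProduct_sum, dotProduct_smul, hv]
  · rw [hx_tail]
    funext i
    simp [Fin.tail, Finset.sum_apply, hv_succ, mulVec, dotProduct, Algebra.smul_def, mul_comm]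

theorem stmt_10_general {R : Type*} [CommRing R] [IsDomain R]
    {K : Type*} [Field K] [Algebra R K] [IsFractionRing R K]
    {m : ℕ} (a : Fin (m + 1) → R)
    (huni : Ideal.span (Set.range a) = ⊤) (ha1 : a 0 ≠ 0)
    (SF : Submodule R (Fin (m + 1) → K))
    (hSF : ∀ x, x ∈ SF ↔ (∀ i, ∃ r : R, algebraMap R K r = x i) ∧
      ∑ i, algebraMap R K (a i) * x i = 0)
    (w : Fin m → Fin (m + 1) → K)
    (hw : ∀ j k, w j k =
      if k = 0 then -(algebraMap R K (a j.succ)) / algebraMap R K (a 0)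
      else if k = j.succ then 1 else 0)
    (Z : Submodule R (Fin (m + 1) → K)) (hZS : Z ≤ SF)
    (bz : Module.Basis (Fin m) R Z)
    (C : Matrix (Fin m) (Fin m) R)
    (hC : ∀ j, (bz j : Fin (m + 1) → K) = ∑ i, algebraMap R K (C i j) • w i)
    (hdet : C.det = a 0) :
    Z = SF ∧ ∃ b : Module.Basis (Fin m) R SF,
      ∀ j, (b j : Fin (m + 1) → K) = (bz j : Fin (m + 1) → K) := by
  have hZmem : ∀ j, (bz j : Fin (m + 1) → K) ∈ SF := fun j => hZS (bz j).2
  have hbz_succ : ∀ i j, (bz j : Fin (m + 1) → K) i.succ = algebraMap R K (C i j) := by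
    simp [hC, hw, Finset.sum_apply, Fin.succ_ne_zero, Algebra.smul_def]
  have hSZ : SF ≤ Z := by
    intro x hx
    obtain ⟨d, rfl⟩ := exists_eq_sum_smul_of_det_eq (IsFractionRing.injective R K) huni ha1
      (fun j => ((hSF _).1 (hZmem j)).1 0) (fun j => ((hSF _).1 (hZmem j)).2) hbz_succ hdet
      ((hSF x).1 hx).1 ((hSF x).1 hx).2
    exact Z.sum_mem fun j _ => Z.smul_mem _ (bz j).2
  have hZSF : Z = SF := le_antisymm hZS hSZ
  exact ⟨hZSF, bz.map (LinearEquiv.ofEq Z SF hZSF), fun j => rfl⟩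

/-- Corollary `Z`: if `Z ≤ S` has a basis `{z₂,…,zₙ}` whose coordinate matrix
relative to `w(1,2),…,w(1,n)` has determinant `a₁`, then `Z = S` (and the
`zⱼ` form a basis of `S`). Here `n = m + 1`. -/
theorem stmt_10 {R : Type*} [CommRing R] [IsDomain R] [IsPrincipalIdealRing R]
    {K : Type*} [Field K] [Algebra R K] [IsFractionRing R K]
    {m : ℕ} (hm : 1 ≤ m) (a : Fin (m + 1) → R)
    (huni : Ideal.span (Set.range a) = ⊤) (ha1 : a 0 ≠ 0)
    (SF : Submodule R (Fin (m + 1) → K))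
    (hSF : ∀ x, x ∈ SF ↔ (∀ i, ∃ r : R, algebraMap R K r = x i) ∧
      ∑ i, algebraMap R K (a i) * x i = 0)
    (w : Fin m → Fin (m + 1) → K)
    (hw : ∀ j k, w j k =
      if k = 0 then -(algebraMap R K (a j.succ)) / algebraMap R K (a 0)
      else if k = j.succ then 1 else 0)
    (Z : Submodule R (Fin (m + 1) → K)) (hZS : Z ≤ SF)
    (bz : Module.Basis (Fin m) R Z)
    (C : Matrix (Fin m) (Fin m) R)
    (hC : ∀ j, (bz j : Fin (m + 1) → K) = ∑ i, algebraMap R K (C i j) • w i)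
    (hdet : C.det = a 0) :
    Z = SF ∧ ∃ b : Module.Basis (Fin m) R SF,
      ∀ j, (b j : Fin (m + 1) → K) = (bz j : Fin (m + 1) → K) :=
  stmt_10_general a huni ha1 SF hSF w hw Z hZS bz C hC hdet
end

section
/- Suppose R is a principal ideal domain, a_1 ≠ 0, and gcd(a_1,a_2) = 1. Let b ∈ R satisfy a_2·b ≡ 1 (mod a_1), and set c_i = −a_i·b for 3 ≤ i ≤ n. Then the vectors z_2 = a_1·w(1,2) and z_i = c_i·w(1,2) + w(1,i) for 3 ≤ i ≤ n form an R-basis of S. -/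
/-! Since `a₁ ≠ 0`, a solution is determined by its last `n - 1` coordinates, and
`y ↦ ∑ⱼ yⱼ • w(1,j)` identifies `S` with the lattice of `y ∈ Rⁿ⁻¹` such that
`a₁ ∣ a₂y₂ + ⋯ + aₙyₙ`. Write `a₂b - 1 = a₁e`. The combination `∑ tⱼuⱼ` of `u₂ = a₁e₂` and
`uᵢ = eᵢ - aᵢb e₂` is `t` with its entry `t₂` replaced by `a₁t₂ - b(a₃t₃ + ⋯ + aₙtₙ)`; this
gives independence, and for `y` in the lattice, with `a₁q = a₂y₂ + ⋯ + aₙyₙ`, the choice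
`t₂ = bq - ey₂`, `tᵢ = yᵢ` recovers `y`. -/

open Finset

section DivisibilityLattice

variable {R ι : Type*} [CommRing R]

section Shear

variable [DecidableEq ι]

def shearVec (d b : R) (c : ι → R) (i₀ j : ι) : ι → R :=
  if j = i₀ then d • Pi.single i₀ 1 else (-(c j * b)) • Pi.single i₀ 1 + Pi.single j 1

variable {d b : R} {c : ι → R} {i₀ : ι}

theorem shearVec_apply_self (j : ι) :
    shearVec d b c i₀ j i₀ = if j = i₀ then d else -(c j * b) := by
  unfold shearVec; split_ifs with h <;> simp [h]

theorem shearVec_apply_of_ne (j : ι) {k : ι} (hk : k ≠ i₀) :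
    shearVec d b c i₀ j k = (Pi.single j (1 : R) : ι → R) k := by
  unfold shearVec; split_ifs with h <;> simp [h, hk]

end Shear

variable [Fintype ι]

def divisibilityLattice (d : R) (c : ι → R) : Submodule R (ι → R) :=
  Submodule.comap (Fintype.linearCombination R c) (Ideal.span {d})

theorem mem_divisibilityLattice {d : R} {c y : ι → R} :
    y ∈ divisibilityLattice d c ↔ d ∣ ∑ i, c i * y i := by
  simp [divisibilityLattice, Fintype.linearCombination_apply, Ideal.mem_span_singleton, mul_comm]

variable [DecidableEq ι] {d b : R} {c : ι → R} {i₀ : ι}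

theorem sum_smul_shearVec (t : ι → R) :
    ∑ j, t j • shearVec d b c i₀ j =
      Function.update t i₀ (d * t i₀ - b * ∑ j ∈ univ.erase i₀, c j * t j) := by
  ext k
  rw [Finset.sum_apply]
  by_cases hk : k = i₀
  · subst hk
    simp only [Pi.smul_apply, smul_eq_mul, shearVec_apply_self, Function.update_self]
    rw [← add_sum_erase _ _ (mem_univ k), if_pos rfl, mul_sum, sub_eq_add_neg, ← sum_neg_distrib]
    congr 1
    · ring
    · exact sum_congr rfl fun j hj => by rw [if_neg (ne_of_mem_erase hj)]; ring
  · simp [Function.update_of_ne hk, shearVec_apply_of_ne _ hk, Pi.single_apply]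

theorem shearVec_mem (hb : d ∣ c i₀ * b - 1) (j : ι) :
    shearVec d b c i₀ j ∈ divisibilityLattice d c := by
  obtain ⟨e, he⟩ := hb
  simp only [divisibilityLattice, Submodule.mem_comap, shearVec, Ideal.mem_span_singleton]
  split_ifs
  · simp
  · simp only [map_add, map_smul, Fintype.linearCombination_apply_single, smul_eq_mul]
    exact ⟨-(c j * e), by linear_combination (-c j) * he⟩

theorem linearIndependent_shearVec [IsDomain R] (hd : d ≠ 0) :
    LinearIndependent R (shearVec d b c i₀) := by
  refine Fintype.linearIndependent_iff.2 fun t ht => ?_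
  rw [sum_smul_shearVec] at ht
  have hne : ∀ j, j ≠ i₀ → t j = 0 := fun j hj => by
    simpa [Function.update_of_ne hj] using congr_fun ht j
  have h0 : d * t i₀ = 0 := by
    have h := congr_fun ht i₀
    rwa [Function.update_self, sum_eq_zero fun j hj => by rw [hne j (ne_of_mem_erase hj), mul_zero],
      mul_zero, sub_zero] at h
  intro j
  by_cases hj : j = i₀
  · exact hj ▸ (mul_eq_zero.1 h0).resolve_left hd
  · exact hne j hj

theorem exists_sum_smul_shearVec_eq (hb : d ∣ c i₀ * b - 1) {y : ι → R}
    (hy : y ∈ divisibilityLattice d c) : ∃ t : ι → R, ∑ j, t j • shearVec d b c i₀ j = y := by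
  obtain ⟨e, he⟩ := hb
  obtain ⟨q, hq⟩ := mem_divisibilityLattice.1 hy
  refine ⟨Function.update y i₀ (b * q - e * y i₀), ?_⟩
  have hrest : ∑ j ∈ univ.erase i₀, c j * Function.update y i₀ (b * q - e * y i₀) j =
      d * q - c i₀ * y i₀ := by
    rw [← hq, ← add_sum_erase _ _ (mem_univ i₀), add_sub_cancel_left]
    exact sum_congr rfl fun j hj => by rw [Function.update_of_ne (ne_of_mem_erase hj)]
  rw [sum_smul_shearVec, hrest, Function.update_idem, Function.update_self]
  convert Function.update_eq_self i₀ y using 2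
  linear_combination y i₀ * he

variable [IsDomain R]

noncomputable def shearBasis (hd : d ≠ 0) (hb : d ∣ c i₀ * b - 1) :
    Module.Basis ι R (divisibilityLattice d c) :=
  Module.Basis.mk (v := fun j => ⟨shearVec d b c i₀ j, shearVec_mem hb j⟩)
    (LinearIndependent.of_comp (divisibilityLattice d c).subtype (linearIndependent_shearVec hd))
    fun y _ => (Submodule.mem_span_range_iff_exists_fun R).2 <| by
      obtain ⟨t, ht⟩ := exists_sum_smul_shearVec_eq hb y.2
      exact ⟨t, Subtype.ext (by simpa using ht)⟩

theorem coe_shearBasis (hd : d ≠ 0) (hb : d ∣ c i₀ * b - 1) (j : ι) :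
    (shearBasis hd hb j : ι → R) = shearVec d b c i₀ j := by
  simp [shearBasis]

end DivisibilityLattice

section IntegralSolutions

variable {R : Type*} (K : Type*) [CommRing R] [Field K] [Algebra R K] {m : ℕ} (a : Fin (m + 1) → R)

-- `basicSolution K a j` is the paper's `w(1, j + 2)`: coordinates are numbered from `0`.
def basicSolution (j : Fin m) : Fin (m + 1) → K := fun k =>
  if k = 0 then -(algebraMap R K (a j.succ)) / algebraMap R K (a 0)
  else if k = j.succ then 1 else 0

def solutionMap : (Fin m → R) →ₗ[R] Fin (m + 1) → K :=
  Fintype.linearCombination R (basicSolution K a)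

variable {K a}

theorem solutionMap_apply_zero (y : Fin m → R) :
    solutionMap K a y 0 = -algebraMap R K (∑ k, a k.succ * y k) / algebraMap R K (a 0) := by
  simp only [solutionMap, Fintype.linearCombination_apply, Algebra.smul_def, Finset.sum_apply,
    Pi.mul_apply, Pi.algebraMap_apply, basicSolution, ↓reduceIte, map_sum, map_mul]
  rw [neg_div, sum_div, ← sum_neg_distrib]
  exact sum_congr rfl fun k _ => by ring

theorem solutionMap_apply_succ (y : Fin m → R) (k : Fin m) :
    solutionMap K a y k.succ = algebraMap R K (y k) := by
  simp [solutionMap, Fintype.linearCombination_apply, basicSolution, Algebra.smul_def]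

theorem solutionMap_injective [FaithfulSMul R K] : Function.Injective (solutionMap K a) :=
  fun y y' h => funext fun k => FaithfulSMul.algebraMap_injective R K <| by
    rw [← solutionMap_apply_succ, ← solutionMap_apply_succ, h]

theorem mem_map_solutionMap_iff [FaithfulSMul R K] (ha : a 0 ≠ 0) {x : Fin (m + 1) → K} :
    x ∈ (divisibilityLattice (a 0) fun k => a k.succ).map (solutionMap K a) ↔
      (∀ i, ∃ r : R, algebraMap R K r = x i) ∧ ∑ i, algebraMap R K (a i) * x i = 0 := by
  have ha' : algebraMap R K (a 0) ≠ 0 :=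
    (map_ne_zero_iff _ (FaithfulSMul.algebraMap_injective R K)).2 ha
  constructor
  · rintro ⟨y, hy, rfl⟩
    obtain ⟨q, hq⟩ := mem_divisibilityLattice.1 hy
    refine ⟨Fin.cases ⟨-q, ?_⟩ fun k => ⟨y k, (solutionMap_apply_succ y k).symm⟩, ?_⟩
    · rw [Fin.sum_univ_succ, solutionMap_apply_zero]
      simp only [solutionMap_apply_succ, map_sum, map_mul]
      field_simp
      ring
    · rw [solutionMap_apply_zero, hq, map_mul, map_neg]
      field_simp
  · rintro ⟨hint, hsum⟩
    choose r hr using hint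
    have hr_sum : ∑ i, a i * r i = 0 := FaithfulSMul.algebraMap_injective R K <| by
      simpa [hr] using hsum
    rw [Fin.sum_univ_succ] at hr_sum
    refine ⟨fun k => r k.succ, mem_divisibilityLattice.2 ⟨-r 0, by linear_combination hr_sum⟩, ?_⟩
    ext k
    induction k using Fin.cases with
    | zero =>
      rw [solutionMap_apply_zero, ← hr, show ∑ k : Fin m, a k.succ * r k.succ = a 0 * -r 0 by
        linear_combination hr_sum, map_mul, map_neg]
      field_simp
    | succ k => rw [solutionMap_apply_succ, hr]

end IntegralSolutions

/-- The vectors `z₂ = a₁·w(1,2)` and `zᵢ = cᵢ·w(1,2) + w(1,i)` (`3 ≤ i ≤ n`),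
where `cᵢ = −aᵢ·b` and `a₂·b ≡ 1 (mod a₁)`, form an `R`-basis of `S`,
provided `gcd(a₁,a₂) = 1`. Here `n = m + 1`. -/
theorem stmt_11 {R : Type*} [CommRing R] [IsDomain R]
    {K : Type*} [Field K] [Algebra R K] [IsFractionRing R K]
    {m : ℕ} (hm : 1 ≤ m) (a : Fin (m + 1) → R)
    (ha1 : a 0 ≠ 0)
    (b : R) (hb : a 0 ∣ a (⟨1, by omega⟩ : Fin (m + 1)) * b - 1)
    (SF : Submodule R (Fin (m + 1) → K))
    (hSF : ∀ x, x ∈ SF ↔ (∀ i, ∃ r : R, algebraMap R K r = x i) ∧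
      ∑ i, algebraMap R K (a i) * x i = 0)
    (w : Fin m → Fin (m + 1) → K)
    (hw : ∀ j k, w j k =
      if k = 0 then -(algebraMap R K (a j.succ)) / algebraMap R K (a 0)
      else if k = j.succ then 1 else 0) :
    ∃ bS : Module.Basis (Fin m) R SF, ∀ j : Fin m,
      (bS j : Fin (m + 1) → K) =
        if j = (⟨0, by omega⟩ : Fin m) then a 0 • w ⟨0, by omega⟩
        else (-(a j.succ * b)) • w ⟨0, by omega⟩ + w j := by
  obtain rfl : w = basicSolution K a := funext₂ hw
  obtain rfl : SF = (divisibilityLattice (a 0) fun k => a k.succ).map (solutionMap K a) :=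
    SetLike.ext fun x => (hSF x).trans (mem_map_solutionMap_iff ha1).symm
  refine ⟨(shearBasis (i₀ := ⟨0, by omega⟩) ha1 hb).map
    (Submodule.equivMapOfInjective _ solutionMap_injective _), fun j => ?_⟩
  rw [Module.Basis.map_apply, Submodule.coe_equivMapOfInjective_apply, coe_shearBasis, shearVec,
    apply_ite (solutionMap K a)]
  simp only [map_add, map_smul, solutionMap, Fintype.linearCombination_apply_single, one_smul]
end

section
/- Suppose R is a principal ideal domain, a_1 ≠ 0, n > 2, and (a_1,…,a_n) = 1. Let A = (x_{i,j}) ∈ M_{n−1}(R) be any upper triangular matrix with diagonal entries x_{i,i} = (a_1,…,a_i)/(a_1,…,a_{i+1}) for 1 ≤ i < n, whose columns satisfy a_2·x_{1,j} + ⋯ + a_j·x_{j−1,j} + a_{j+1}·(a_1,…,a_j)/(a_1,…,a_{j+1}) ≡ 0 (mod a_1) for 1 ≤ j < n. Let D = diag(a_1/(a_1,a_2),…,a_1/(a_1,a_n)) ∈ M_{n−1}(R). Then det(A) = a_1, the matrix C = A^{−1}·D (computed over the fraction field of R) has all entries in R, and for all 1 ≤ i < j ≤ n−1 one has C_{i,j}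 ∈ R·C_{i,i} + R·C_{j,j}. -/
/-!
Induction on the size, peeling off the first row and column. With `g₁ = (a₁, a₂)`, the lower
right block of `A` satisfies the same hypotheses for the vector `(g₁, a₃, …, aₙ)`, so it has a
solution `C'`. Rescaling column `j` of `C'` by `ρⱼ = d_{j+1} / d'ⱼ` gives the lower right block of
`C`; `ρⱼ` is integral because `(a₁, x)` divides `(a₁ / g₁) · (g₁, x)`. The first row of `C` is then
forced, and it is integral because the column congruences make `a₁` divide `a₂` times it, while
the corner entry `g₁ / (a₁, a₂)` is a unit. Since `ρⱼ ∈ (a₁ / g₁, d_{j+1})` and every `ρᵢ` divides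
`a₁ / g₁`, the rescaling preserves `C_{ij} ∈ (C_{ii}, C_{jj})`. Finally `det A` telescopes to
`g₀ / g_{n-1} = a₁`.
-/

open Matrix

theorem Fin.prod_mul_eq_of_forall_mul_eq {M : Type*} [CommMonoid M] {N : ℕ} (x : Fin N → M)
    (g : ℕ → M) (h : ∀ k : Fin N, x k * g (k + 1) = g k) : (∏ k, x k) * g N = g 0 := by
  induction N with
  | zero => simp
  | succ N ih =>
    have hlast : x (Fin.last N) * g (N + 1) = g N := by simpa using h (Fin.last N)
    rw [Fin.prod_univ_castSucc, mul_assoc, hlast]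
    exact ih _ fun k => by simpa using h k.castSucc

namespace Matrix

variable {R : Type*} {N : ℕ}

def border [Zero R] (e : R) (f : Fin N → R) (C : Matrix (Fin N) (Fin N) R) :
    Matrix (Fin (N + 1)) (Fin (N + 1)) R :=
  of (vecCons (vecCons e f) fun i => vecCons 0 (C i))

section Zero
variable [Zero R] (e : R) (f : Fin N → R) (C : Matrix (Fin N) (Fin N) R)

@[simp] lemma border_zero_zero : border e f C 0 0 = e := rfl
@[simp] lemma border_zero_succ (j : Fin N) : border e f C 0 j.succ = f j := rfl
@[simp] lemma border_succ_zero (i : Fin N) : border e f C i.succ 0 = 0 := rfl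
@[simp] lemma border_succ_succ (i j : Fin N) : border e f C i.succ j.succ = C i j := rfl

end Zero

lemma diagonal_eq_border [Zero R] (d : Fin (N + 1) → R) :
    diagonal d = border (d 0) 0 (diagonal (Fin.tail d)) := by
  ext i j
  cases i using Fin.cases <;> cases j using Fin.cases <;>
    simp [diagonal_apply, Fin.tail, (Fin.succ_ne_zero _).symm]

lemma mul_border [Semiring R] {A : Matrix (Fin (N + 1)) (Fin (N + 1)) R}
    (hA : ∀ i : Fin N, A i.succ 0 = 0) (e : R) (f : Fin N → R) (C : Matrix (Fin N) (Fin N) R) :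
    A * border e f C = border (A 0 0 * e)
      (fun j => A 0 0 * f j + ∑ k, A 0 k.succ * C k j) (A.submatrix Fin.succ Fin.succ * C) := by
  ext i j
  cases i using Fin.cases <;> cases j using Fin.cases <;>
    simp [mul_apply, Fin.sum_univ_succ, hA]

lemma vecMul_border_succ [Semiring R] (v : Fin (N + 1) → R) (e : R) (f : Fin N → R)
    (C : Matrix (Fin N) (Fin N) R) (j : Fin N) :
    (v ᵥ* border e f C) j.succ = v 0 * f j + (Fin.tail v ᵥ* C) j := by
  simp [vecMul, dotProduct, Fin.sum_univ_succ, Fin.tail]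

def UpperEntriesInDiagSpan [CommSemiring R] {n : Type*} [LT n] (C : Matrix n n R) : Prop :=
  ∀ i j, i < j → C i j ∈ Ideal.span {C i i, C j j}

lemma UpperEntriesInDiagSpan.mul_diagonal [CommSemiring R] {n : Type*} [LT n] [Fintype n]
    [DecidableEq n] {C : Matrix n n R} (hC : C.UpperEntriesInDiagSpan) {ρ : n → R}
    (hρ : ∀ i j, i < j → C i i * ρ j ∈ Ideal.span {C i i * ρ i, C j j * ρ j}) :
    (C * diagonal ρ).UpperEntriesInDiagSpan := by
  intro i j hij
  obtain ⟨u, v, huv⟩ := Ideal.mem_span_pair.mp (hC i j hij)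
  simp only [Matrix.mul_diagonal, ← huv, add_mul, mul_assoc]
  exact add_mem (Ideal.mul_mem_left _ _ (hρ i j hij))
    (Ideal.mul_mem_left _ _ (Ideal.subset_span (by simp)))

lemma UpperEntriesInDiagSpan.border [CommSemiring R] {C : Matrix (Fin N) (Fin N) R}
    (hC : C.UpperEntriesInDiagSpan) {e : R} (he : IsUnit e) (f : Fin N → R) :
    (border e f C).UpperEntriesInDiagSpan := by
  intro i j hij
  cases j using Fin.cases with
  | zero => exact absurd hij (Fin.not_lt_zero i)
  | succ j =>
    cases i using Fin.cases with
    | zero =>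
      simp only [border_zero_zero, border_zero_succ, border_succ_succ]
      exact Ideal.mem_span_pair.mpr ⟨f j * he.unit⁻¹, 0, by rw [mul_assoc, he.val_inv_mul]; simp⟩
    | succ i => simpa using hC i j (Fin.succ_lt_succ_iff.mp hij)

lemma dvd_vecMul_submatrix_succ [CommRing R] {m g : R} {v : Fin (N + 1) → R}
    {A : Matrix (Fin (N + 1)) (Fin (N + 1)) R} (hgm : g ∣ m) (hgv : g ∣ v 0)
    (hvA : ∀ k, m ∣ (v ᵥ* A) k) (k : Fin N) :
    g ∣ (Fin.tail v ᵥ* A.submatrix Fin.succ Fin.succ) k := by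
  have h := hgm.trans (hvA k.succ)
  rw [vecMul, dotProduct, Fin.sum_univ_succ] at h
  exact (dvd_add_right (dvd_mul_of_dvd_left hgv _)).mp h

lemma dvd_mul_sum_of_dvd_vecMul [CommRing R] {m : R} {v : Fin (N + 1) → R}
    {A : Matrix (Fin (N + 1)) (Fin (N + 1)) R} (hA : ∀ i : Fin N, A i.succ 0 = 0)
    (hvA : ∀ k, m ∣ (v ᵥ* A) k) {C : Matrix (Fin N) (Fin N) R} {δ : Fin N → R}
    (hC : A.submatrix Fin.succ Fin.succ * C = diagonal δ) {j : Fin N}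
    (hδ : m ∣ v j.succ * δ j) :
    m ∣ v 0 * ∑ k, A 0 k.succ * C k j := by
  have h : m ∣ (v ᵥ* A ᵥ* border 0 0 C) j.succ := by
    show m ∣ ∑ i, (v ᵥ* A) i * border 0 0 C i j.succ
    exact Finset.dvd_sum fun i _ => dvd_mul_of_dvd_left (hvA i) _
  rw [vecMul_vecMul, mul_border hA, vecMul_border_succ, hC, vecMul_diagonal] at h
  simpa using (dvd_add_left hδ).mp h

end Matrix

section GcdChain

variable {R : Type*} [CommRing R] {N : ℕ}

def IsGcdChain (a : Fin (N + 1) → R) (g : ℕ → R) : Prop :=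
  g 0 = a 0 ∧ ∀ t : Fin N, Ideal.span {g (t + 1)} = Ideal.span {g t, a t.succ}

lemma isGcdChain_of_span_eq {a : Fin (N + 1) → R} {g : ℕ → R} (hg0 : g 0 = a 0)
    (hg : ∀ t, Ideal.span {g t} = Ideal.span {x | ∃ i : Fin (N + 1), (i : ℕ) ≤ t ∧ x = a i}) :
    IsGcdChain a g := by
  refine ⟨hg0, fun t => ?_⟩
  have hset : {x | ∃ i : Fin (N + 1), (i : ℕ) ≤ t + 1 ∧ x = a i} =
      insert (a t.succ) {x | ∃ i : Fin (N + 1), (i : ℕ) ≤ t ∧ x = a i} := by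
    ext x
    constructor
    · rintro ⟨i, hi, rfl⟩
      rcases hi.lt_or_eq with hi | hi
      · exact Or.inr ⟨i, Nat.le_of_lt_succ hi, rfl⟩
      · exact Or.inl (congrArg a (Fin.ext hi))
    · rintro (rfl | ⟨i, hi, rfl⟩)
      · exact ⟨t.succ, le_rfl, rfl⟩
      · exact ⟨i, hi.trans (Nat.le_succ _), rfl⟩
  rw [hg, hset, Ideal.span_insert, ← hg, Ideal.span_insert, sup_comm]

lemma IsGcdChain.span_one {a : Fin (N + 2) → R} {g : ℕ → R} (h : IsGcdChain a g) :
    Ideal.span {g 1} = Ideal.span {a 0, a 1} := by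
  simpa [h.1] using h.2 0

lemma IsGcdChain.tail {a : Fin (N + 2) → R} {g : ℕ → R} (h : IsGcdChain a g) :
    IsGcdChain (vecCons (g 1) fun i => a i.succ.succ) (fun t => g (t + 1)) :=
  ⟨rfl, fun t => by simpa using h.2 t.succ⟩

end GcdChain

section Divisibility

variable {R : Type*} [CommRing R] [IsDomain R]

lemma exists_quotient_of_span_eq_pair {a g q x c c' d d' : R} (ha : a ≠ 0) (hqg : q * g = a)
    (hc : Ideal.span {c} = Ideal.span {a, x}) (hc' : Ideal.span {c'} = Ideal.span {g, x})
    (hd : d * c = a) (hd' : d' * c' = g) :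
    ∃ ρ, ρ * d' = d ∧ ρ ∣ q ∧ ρ ∈ Ideal.span {q, d} := by
  have hg0 : g ≠ 0 := right_ne_zero_of_mul (hqg ▸ ha)
  have hc'0 : c' ≠ 0 := right_ne_zero_of_mul (hd' ▸ hg0)
  have hcx : c ∣ x := Ideal.mem_span_singleton.mp (hc ▸ Ideal.subset_span (by simp))
  have hc'g : c' ∣ g := Ideal.mem_span_singleton.mp (hc' ▸ Ideal.subset_span (by simp))
  have hc'x : c' ∣ x := Ideal.mem_span_singleton.mp (hc' ▸ Ideal.subset_span (by simp))
  obtain ⟨z, hz⟩ : c' ∣ c := by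
    obtain ⟨u, v, huv⟩ := Ideal.mem_span_pair.mp (hc ▸ Ideal.mem_span_singleton_self c)
    rw [← huv, ← hqg]
    exact dvd_add ((hc'g.mul_left q).mul_left u) (hc'x.mul_left v)
  obtain ⟨s, t, hst⟩ : ∃ s t, s * g + t * c = c' := by
    obtain ⟨s, t', hst'⟩ := Ideal.mem_span_pair.mp (hc' ▸ Ideal.mem_span_singleton_self c')
    obtain ⟨y, rfl⟩ := hcx
    exact ⟨s, t' * y, by rw [← hst']; ring⟩
  have hρg : (s * d + t * q) * g = d * c' := by linear_combination t * hqg - t * hd + d * hst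
  refine ⟨s * d + t * q, ?_, ⟨z, ?_⟩, Ideal.mem_span_pair.mpr ⟨t, s, by ring⟩⟩
  · exact mul_right_cancel₀ hc'0 (by linear_combination (s * d + t * q) * hd' + hρg)
  · refine mul_right_cancel₀ (mul_ne_zero hc'0 hg0) ?_
    linear_combination -(z * c') * hρg + (d * c') * hz - c' * hd + c' * hqg

lemma dvd_of_span_eq_of_dvd_mul {a b g q s : R} (hg0 : g ≠ 0) (hqg : q * g = a)
    (hg : Ideal.span {g} = Ideal.span {a, b}) (hbs : a ∣ b * s) : q ∣ s := by
  obtain ⟨u, v, huv⟩ := Ideal.mem_span_pair.mp (hg ▸ Ideal.mem_span_singleton_self g)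
  have : q * g ∣ s * g := by
    rw [hqg, ← huv, show s * (u * a + v * b) = a * (s * u) + v * (b * s) by ring]
    exact dvd_add (dvd_mul_right _ _) (dvd_mul_of_dvd_right hbs _)
  exact (mul_dvd_mul_iff_right hg0).mp this

end Divisibility

section Induction

variable {R : Type*} [CommRing R] [IsDomain R] {N : ℕ}

lemma exists_mul_eq_diagonal_succ {a : Fin (N + 2) → R} (ha : a 0 ≠ 0) {g : ℕ → R}
    (hg : IsGcdChain a g) {c : Fin (N + 1) → R}
    (hc : ∀ k, Ideal.span {c k} = Ideal.span {a 0, a k.succ})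
    {A : Matrix (Fin (N + 1)) (Fin (N + 1)) R} (hAtri : A.IsUpperTriangular)
    (hq : A 0 0 * g 1 = a 0) (hAcol : ∀ k, a 0 ∣ (Fin.tail a ᵥ* A) k)
    {d : Fin (N + 1) → R} (hd : ∀ k, d k * c k = a 0) {c' d' : Fin N → R}
    (hc' : ∀ k, Ideal.span {c' k} = Ideal.span {g 1, a k.succ.succ})
    (hd' : ∀ k, d' k * c' k = g 1) {C' : Matrix (Fin N) (Fin N) R}
    (hAC' : A.submatrix Fin.succ Fin.succ * C' = diagonal d') (hC'dvd : ∀ k, C' k k ∣ d' k)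
    (hC'span : C'.UpperEntriesInDiagSpan) :
    ∃ C : Matrix (Fin (N + 1)) (Fin (N + 1)) R,
      A * C = diagonal d ∧ (∀ k, C k k ∣ d k) ∧ C.UpperEntriesInDiagSpan := by
  have hA0 : ∀ i : Fin N, A i.succ 0 = 0 := fun i => hAtri (Fin.succ_pos i)
  have had : ∀ k, a 0 ∣ a k.succ * d k := fun k => by
    rw [← hd k, mul_comm (d k)]
    exact mul_dvd_mul_right (Ideal.mem_span_singleton.mp (hc k ▸ Ideal.subset_span (by simp))) _
  choose ρ hρd hρq hρspan using fun j : Fin N =>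
    exists_quotient_of_span_eq_pair ha hq (hc j.succ) (hc' j) (hd j.succ) (hd' j)
  set C'' := C' * diagonal ρ
  have hAC'' : A.submatrix Fin.succ Fin.succ * C'' = diagonal (Fin.tail d) := by
    rw [← Matrix.mul_assoc, hAC', diagonal_mul_diagonal]
    exact congrArg diagonal (funext fun j => (mul_comm _ _).trans (hρd j))
  have hC''span : C''.UpperEntriesInDiagSpan := by
    refine hC'span.mul_diagonal fun i j _ => ?_
    obtain ⟨u, v, huv⟩ := Ideal.mem_span_pair.mp (hρspan j)
    obtain ⟨z, hz⟩ := hρq i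
    obtain ⟨w, hw⟩ := hC'dvd j
    refine Ideal.mem_span_pair.mpr ⟨u * z, v * C' i i * w, ?_⟩
    linear_combination C' i i * huv - C' i i * u * hz + C' i i * v * hρd j
      - C' i i * v * ρ j * hw
  choose F hF using fun j : Fin N => dvd_of_span_eq_of_dvd_mul (right_ne_zero_of_mul (hq ▸ ha))
    hq hg.span_one (dvd_mul_sum_of_dvd_vecMul hA0 hAcol hAC'' (j := j) (had j.succ))
  obtain ⟨e, he⟩ : Associated (c 0) (g 1) := by
    rw [← Ideal.span_singleton_eq_span_singleton, hc 0, hg.span_one]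
    rfl
  have hqe : A 0 0 * e = d 0 := by
    refine mul_right_cancel₀ (right_ne_zero_of_mul (hd 0 ▸ ha)) ?_
    linear_combination A 0 0 * he + hq - hd 0
  refine ⟨border e (-F) C'', ?_, ?_, hC''span.border e.isUnit _⟩
  · rw [mul_border hA0, hAC'', hqe, diagonal_eq_border d]
    congr
    funext j
    simp [hF j]
  · intro k
    cases k using Fin.cases with
    | zero => exact e.isUnit.dvd
    | succ k => simpa [C'', ← hρd k, mul_comm (ρ k)] using mul_dvd_mul_right (hC'dvd k) (ρ k)

theorem exists_mul_eq_diagonal_of_isGcdChain [IsPrincipalIdealRing R] (a : Fin (N + 1) → R)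
    (ha : a 0 ≠ 0) (g : ℕ → R) (hg : IsGcdChain a g) (c : Fin N → R)
    (hc : ∀ k, Ideal.span {c k} = Ideal.span {a 0, a k.succ})
    (A : Matrix (Fin N) (Fin N) R) (hAtri : A.IsUpperTriangular)
    (hAdiag : ∀ k : Fin N, A k k * g ((k : ℕ) + 1) = g k)
    (hAcol : ∀ k, a 0 ∣ (Fin.tail a ᵥ* A) k) (d : Fin N → R) (hd : ∀ k, d k * c k = a 0) :
    ∃ C : Matrix (Fin N) (Fin N) R,
      A * C = diagonal d ∧ (∀ k, C k k ∣ d k) ∧ C.UpperEntriesInDiagSpan := by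
  induction N generalizing g with
  | zero => exact ⟨0, Subsingleton.elim _ _, finZeroElim, fun i => i.elim0⟩
  | succ N ih =>
    have hq : A 0 0 * g 1 = a 0 := by simpa [hg.1] using hAdiag 0
    have hg1a1 : g 1 ∣ a 1 :=
      Ideal.mem_span_singleton.mp (hg.span_one ▸ Ideal.subset_span (by simp))
    obtain ⟨c', hc'⟩ : ∃ c' : Fin N → R,
        ∀ k, Ideal.span {c' k} = Ideal.span {g 1, a k.succ.succ} :=
      ⟨fun k => Submodule.IsPrincipal.generator _, fun k => Ideal.span_singleton_generator _⟩
    choose d' hd' using fun k => Ideal.mem_span_singleton.mp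
      ((hc' k).symm ▸ Ideal.subset_span (by simp) : g 1 ∈ Ideal.span {c' k})
    have hd'c' : ∀ k, d' k * c' k = g 1 := fun k => (mul_comm _ _).trans (hd' k).symm
    have hA'col := dvd_vecMul_submatrix_succ (Dvd.intro_left _ hq) hg1a1 hAcol
    obtain ⟨C', hAC', hC'dvd, hC'span⟩ := ih (vecCons (g 1) fun i => a i.succ.succ)
      (right_ne_zero_of_mul (hq ▸ ha)) (fun t => g (t + 1)) hg.tail c' hc'
      (A.submatrix Fin.succ Fin.succ) (fun i j h => hAtri (Fin.succ_lt_succ_iff.mpr h))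
      (fun k => by simpa using hAdiag k.succ) hA'col d' hd'c'
    exact exists_mul_eq_diagonal_succ ha hg hc hAtri hq hAcol hd hc' hd'c' hAC' hC'dvd hC'span

end Induction

/-- `a i` is the paper's `a_{i+1}` and `n = N + 1`; `g t` generates `(a₁,…,a_{t+1})`, `c k`
generates `(a₁, a_{k+2})`, and the paper's quotients appear as exact-division identities. -/
theorem stmt_13_general {R : Type*} [CommRing R] [IsDomain R] [IsPrincipalIdealRing R]
    {N : ℕ} (a : Fin (N + 1) → R) (ha1 : a 0 ≠ 0)
    (g : ℕ → R) (hg0 : g 0 = a 0)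
    (hg : ∀ t, Ideal.span {g t} =
      Ideal.span {x | ∃ i : Fin (N + 1), (i : ℕ) ≤ t ∧ x = a i})
    (hglast : g N = 1)
    (c : Fin N → R)
    (hc : ∀ k, Ideal.span {c k} = Ideal.span {a 0, a k.succ})
    (A : Matrix (Fin N) (Fin N) R)
    (hAtri : ∀ i j : Fin N, j < i → A i j = 0)
    (hAdiag : ∀ k : Fin N, A k k * g ((k : ℕ) + 1) = g (k : ℕ))
    (hAcol : ∀ k : Fin N, a 0 ∣ ∑ t, a t.succ * A t k)
    (d : Fin N → R) (hd : ∀ k, d k * c k = a 0)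
    (Dm : Matrix (Fin N) (Fin N) R) (hDm : Dm = Matrix.diagonal d) :
    A.det = a 0 ∧
    ∃ C : Matrix (Fin N) (Fin N) R, A * C = Dm ∧
      ∀ i j : Fin N, i < j → ∃ u v : R, C i j = u * C i i + v * C j j := by
  have hAtri' : A.IsUpperTriangular := fun i j h => hAtri i j h
  obtain ⟨C, hAC, -, hC⟩ := exists_mul_eq_diagonal_of_isGcdChain a ha1 g
    (isGcdChain_of_span_eq hg0 hg) c hc A hAtri' hAdiag hAcol d hd
  refine ⟨?_, C, hDm ▸ hAC, fun i j hij => ?_⟩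
  · calc A.det = (∏ k, A k k) * g N := by rw [det_of_isUpperTriangular hAtri', hglast, mul_one]
      _ = a 0 := by rw [Fin.prod_mul_eq_of_forall_mul_eq _ g hAdiag, hg0]
  · obtain ⟨u, v, huv⟩ := Ideal.mem_span_pair.mp (hC i j hij)
    exact ⟨u, v, huv.symm⟩

/-- The main technical theorem: for any upper triangular `A` with diagonal
entries `(a₁,…,aᵢ)/(a₁,…,a_{i+1})` whose columns satisfy the congruence
`a₂x_{1,j} + ⋯ + aⱼx_{j−1,j} + a_{j+1}(a₁,…,aⱼ)/(a₁,…,a_{j+1}) ≡ 0 (mod a₁)`,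
and `D = diag(a₁/(a₁,a₂),…,a₁/(a₁,aₙ))`, one has `det A = a₁`, the matrix
`C = A⁻¹D` has entries in `R`, and `C_{i,j} ∈ R·C_{i,i} + R·C_{j,j}` for
`i < j`. Here `n = N + 1`, `g t` is a gcd of `a₁,…,a_{t+1}` with `g 0 = a₁`
and `g N = 1` (i.e. `(a₁,…,aₙ) = 1`), `c k` is a gcd of `a₁` and `a_{k+2}`,
and quotients are expressed by exact-division identities. -/
theorem stmt_13 {R : Type*} [CommRing R] [IsDomain R] [IsPrincipalIdealRing R]
    {N : ℕ} (hN : 2 ≤ N) (a : Fin (N + 1) → R) (ha1 : a 0 ≠ 0)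
    (g : ℕ → R) (hg0 : g 0 = a 0)
    (hg : ∀ t, Ideal.span {g t} =
      Ideal.span {x | ∃ i : Fin (N + 1), (i : ℕ) ≤ t ∧ x = a i})
    (hglast : g N = 1)
    (c : Fin N → R)
    (hc : ∀ k, Ideal.span {c k} = Ideal.span {a 0, a k.succ})
    (A : Matrix (Fin N) (Fin N) R)
    (hAtri : ∀ i j : Fin N, j < i → A i j = 0)
    (hAdiag : ∀ k : Fin N, A k k * g ((k : ℕ) + 1) = g (k : ℕ))
    (hAcol : ∀ k : Fin N, a 0 ∣ ∑ t, a t.succ * A t k)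
    (d : Fin N → R) (hd : ∀ k, d k * c k = a 0)
    (Dm : Matrix (Fin N) (Fin N) R) (hDm : Dm = Matrix.diagonal d) :
    A.det = a 0 ∧
    ∃ C : Matrix (Fin N) (Fin N) R, A * C = Dm ∧
      ∀ i j : Fin N, i < j → ∃ u v : R, C i j = u * C i i + v * C j j :=
  stmt_13_general a ha1 g hg0 hg hglast c hc A hAtri hAdiag hAcol d hd Dm hDm
end

section
/- Suppose R is a principal ideal domain and a_1 = 0. Then U_1 = S_1, and consequently S/U_1 is isomorphic as an R-module to R^{n−2}. -/
open Module in
theorem aux_ker_equiv {R : Type*} [CommRing R] [IsDomain R] [IsPrincipalIdealRing R]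
    {m : ℕ} (hm : 1 ≤ m) (f : (Fin m → R) →ₗ[R] R) (hf : Function.Surjective f) :
    Nonempty (LinearMap.ker f ≃ₗ[R] (Fin (m - 1) → R)) := by
  obtain ⟨x1, hx1⟩ := hf 1
  set g : R →ₗ[R] (Fin m → R) := LinearMap.toSpanSingleton R _ x1 with hg
  have hfg : ∀ s, f (g s) = s := by
    intro s; simp [hg, LinearMap.toSpanSingleton_apply, map_smul, hx1]
  set K := LinearMap.ker f
  have hmem : ∀ x, x - g (f x) ∈ K := by
    intro x; simp [K, LinearMap.mem_ker, map_sub, hfg]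
  let φ : (Fin m → R) →ₗ[R] K × R :=
    LinearMap.prod ((LinearMap.id - g.comp f).codRestrict K (fun x => hmem x)) f
  let ψ : K × R →ₗ[R] (Fin m → R) :=
    K.subtype.comp (LinearMap.fst R K R) + g.comp (LinearMap.snd R K R)
  have h1 : φ.comp ψ = LinearMap.id := by
    apply LinearMap.ext; rintro ⟨⟨k, hk⟩, s⟩
    have hk0 : f k = 0 := hk
    refine Prod.ext (Subtype.ext ?_) ?_ <;>
      simp [φ, ψ, LinearMap.codRestrict, hfg, hk0, map_add]
  have h2 : ψ.comp φ = LinearMap.id := by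
    ext x
    simp [φ, ψ, LinearMap.codRestrict]
  let E : (Fin m → R) ≃ₗ[R] K × R := LinearEquiv.ofLinear φ ψ h1 h2
  obtain ⟨d, bK⟩ := Submodule.basisOfPid (Pi.basisFun R (Fin m)) K
  haveI := Module.Free.of_basis bK
  haveI := Module.Finite.of_basis bK
  have hd : d + 1 = m := by
    have h1 : finrank R (Fin m → R) = m := by simp
    have h2 : finrank R (Fin m → R) = finrank R (K × R) := E.finrank_eq
    have h3 : finrank R (K × R) = finrank R K + finrank R R := Module.finrank_prod
    have h4 : finrank R K = d := (Module.finrank_eq_card_basis bK).trans (Fintype.card_fin d)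
    have h5 : finrank R R = 1 := Module.finrank_self R
    omega
  exact ⟨(bK.reindex (finCongr (by omega))).equivFun⟩


/-- If `a₁ = 0` then `U₁ = S₁`, and consequently `S/U₁ ≅ R^{n−2}`.
Here `n = m + 1`; `v j = v(1, j+2)` and `u j = u(1, j+2)` for `j : Fin m`,
where `c j` is a gcd of `a₁` and `a_{j+2}`. -/
theorem stmt_14 {R : Type*} [CommRing R] [IsDomain R] [IsPrincipalIdealRing R]
    {m : ℕ} (hm : 1 ≤ m) (a : Fin (m + 1) → R)
    (huni : Ideal.span (Set.range a) = ⊤) (ha1 : a 0 = 0)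
    (S : Submodule R (Fin (m + 1) → R))
    (hS : ∀ x, x ∈ S ↔ ∑ i, a i * x i = 0)
    (v : Fin m → Fin (m + 1) → R)
    (hv : ∀ j k, v j k = if k = 0 then -a j.succ else if k = j.succ then a 0 else 0)
    (c : Fin m → R) (hc : ∀ j, Ideal.span {c j} = Ideal.span {a 0, a j.succ})
    (u : Fin m → Fin (m + 1) → R)
    (hu : ∀ j, c j • u j = v j)
    (hu0 : ∀ j, a 0 = 0 → a j.succ = 0 → u j = v j)
    (S1 U1 : Submodule R (Fin (m + 1) → R))
    (hS1 : S1 = Submodule.span R (Set.range v))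
    (hU1 : U1 = Submodule.span R (Set.range u)) :
    U1 = S1 ∧
    Nonempty ((S ⧸ Submodule.comap S.subtype U1) ≃ₗ[R] (Fin (m - 1) → R)) := by
  classical
  set e0 : Fin (m + 1) → R := Pi.single 0 1 with he0
  -- v j is a scalar multiple of e0
  have hve : ∀ j, v j = (-(a j.succ)) • e0 := by
    intro j
    funext k
    rw [hv]
    refine Fin.cases ?_ (fun i => ?_) k
    · simp [he0]
    · simp [he0, Fin.succ_ne_zero, Pi.single_apply]
      intro h
      exact ha1
  -- the tail of a is unimodular
  have hbtop : Ideal.span (Set.range fun j : Fin m => a j.succ) = ⊤ := by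
    rw [eq_top_iff, ← huni, Ideal.span_le]
    rintro _ ⟨i, rfl⟩
    refine Fin.cases ?_ (fun j => ?_) i
    · rw [ha1]; exact zero_mem _
    · exact Ideal.subset_span ⟨j, rfl⟩
  -- coefficients writing 1
  obtain ⟨r, hr⟩ : ∃ r : Fin m → R, ∑ j, r j • a j.succ = 1 := by
    have : (1 : R) ∈ Ideal.span (Set.range fun j : Fin m => a j.succ) := by
      rw [hbtop]; trivial
    rw [Ideal.span, Finsupp.mem_span_range_iff_exists_finsupp] at this
    obtain ⟨w, hw⟩ := this
    exact ⟨w, by rw [← hw, Finsupp.sum_fintype] ; simp⟩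
  -- e0 ∈ S1
  have he0S1 : e0 ∈ S1 := by
    have : e0 = ∑ j, (-(r j)) • v j := by
      have : ∑ j, (-(r j)) • v j = (∑ j, r j * a j.succ) • e0 := by
        rw [Finset.sum_smul]
        refine Finset.sum_congr rfl fun j _ => ?_
        rw [hve j, smul_smul, mul_comm]
        ring_nf
      rw [this]
      have : ∑ j, r j * a j.succ = 1 := by simpa [smul_eq_mul] using hr
      rw [this, one_smul]
    rw [this, hS1]
    exact Submodule.sum_mem _ fun j _ =>
      Submodule.smul_mem _ _ (Submodule.subset_span ⟨j, rfl⟩)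
  -- S1 ≤ U1
  have hS1U1 : S1 ≤ U1 := by
    rw [hS1, hU1, Submodule.span_le]
    rintro _ ⟨j, rfl⟩
    rw [← hu j]
    exact Submodule.smul_mem _ _ (Submodule.subset_span ⟨j, rfl⟩)
  -- each u j is a scalar multiple of e0
  have hue : ∀ j, ∃ s : R, u j = s • e0 := by
    intro j
    by_cases hz : a j.succ = 0
    · exact ⟨-(a j.succ), by rw [hu0 j ha1 hz, hve j]⟩
    · have hcne : c j ≠ 0 := by
        intro h0
        apply hz
        have : a j.succ ∈ Ideal.span {c j} := by
          rw [hc j]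
          exact Ideal.subset_span (by simp)
        rw [h0, Ideal.span_singleton_eq_bot.mpr rfl] at this
        simpa using this
      refine ⟨u j 0, ?_⟩
      funext k
      refine Fin.cases ?_ (fun i => ?_) k
      · simp [he0]
      · have h1 : c j * u j i.succ = v j i.succ := by
          have := congrFun (hu j) i.succ
          simpa using this
        have h2 : v j i.succ = 0 := by
          rw [hv]
          simp [Fin.succ_ne_zero, ha1]
        rw [h2] at h1
        rcases mul_eq_zero.mp h1 with h | h
        · exact absurd h hcne
        · simp [he0, h, Pi.single_apply, Fin.succ_ne_zero]
  -- U1 ≤ span {e0}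
  have hU1le : U1 ≤ Submodule.span R {e0} := by
    rw [hU1, Submodule.span_le]
    rintro _ ⟨j, rfl⟩
    obtain ⟨s, hs⟩ := hue j
    rw [hs]
    exact Submodule.smul_mem _ _ (Submodule.subset_span rfl)
  have hspanU1 : Submodule.span R {e0} ≤ U1 := by
    rw [Submodule.span_le, Set.singleton_subset_iff]
    exact hS1U1 he0S1
  have hU1e : U1 = Submodule.span R {e0} := le_antisymm hU1le hspanU1
  -- S1 ≤ span {e0}
  have hS1e : S1 = Submodule.span R {e0} := by
    refine le_antisymm ?_ ?_
    · rw [hS1, Submodule.span_le]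
      rintro _ ⟨j, rfl⟩
      rw [hve j]
      exact Submodule.smul_mem _ _ (Submodule.subset_span rfl)
    · rw [Submodule.span_le, Set.singleton_subset_iff]
      exact he0S1
  refine ⟨hU1e.trans hS1e.symm, ?_⟩
  -- the linear form f
  let f : (Fin m → R) →ₗ[R] R :=
    { toFun := fun y => ∑ j, a j.succ * y j
      map_add' := by intros x y; simp [mul_add, Finset.sum_add_distrib]
      map_smul' := by intros s y; simp [Finset.mul_sum, mul_left_comm] }
  have hfapp : ∀ y, f y = ∑ j, a j.succ * y j := fun y => rfl
  have hfsurj : Function.Surjective f := by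
    intro s
    refine ⟨s • r, ?_⟩
    rw [hfapp]
    have : ∑ j, a j.succ * (s • r) j = s * ∑ j, r j * a j.succ := by
      rw [Finset.mul_sum]
      exact Finset.sum_congr rfl fun j _ => by simp [smul_eq_mul]; ring
    rw [this]
    have : ∑ j, r j * a j.succ = 1 := by simpa [smul_eq_mul] using hr
    rw [this, mul_one]
  obtain ⟨E⟩ := aux_ker_equiv hm f hfsurj
  -- the tail map T : S → ker f
  have hmemT : ∀ x : S, f (fun j => (x : Fin (m+1) → R) j.succ) = 0 := by
    rintro ⟨x, hx⟩
    rw [hfapp]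
    have := (hS x).mp hx
    rw [Fin.sum_univ_succ, ha1, zero_mul, zero_add] at this
    simpa using this
  let T : S →ₗ[R] LinearMap.ker f :=
    LinearMap.codRestrict (LinearMap.ker f)
      ((LinearMap.funLeft R R Fin.succ).comp S.subtype) (fun x => hmemT x)
  have hTsurj : Function.Surjective T := by
    rintro ⟨y, hy⟩
    have hyS : (Fin.cons 0 y : Fin (m+1) → R) ∈ S := by
      rw [hS, Fin.sum_univ_succ]
      simp only [Fin.cons_zero, Fin.cons_succ, mul_zero, zero_add]
      simpa [hfapp] using hy
    refine ⟨⟨Fin.cons 0 y, hyS⟩, ?_⟩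
    apply Subtype.ext
    funext j
    simp [T, LinearMap.codRestrict, LinearMap.funLeft]
  have hker : LinearMap.ker T = Submodule.comap S.subtype U1 := by
    ext ⟨x, hx⟩
    simp only [LinearMap.mem_ker, Submodule.mem_comap, Submodule.subtype_apply]
    rw [hU1e]
    constructor
    · intro h
      have htail : ∀ j : Fin m, x j.succ = 0 := by
        intro j
        have := congrFun (congrArg Subtype.val h) j
        simpa [T, LinearMap.codRestrict, LinearMap.funLeft] using this
      have : x = x 0 • e0 := by
        funext k
        refine Fin.cases ?_ (fun i => ?_) k
        · simp [he0]
        · simp [he0, htail i, Pi.single_apply, Fin.succ_ne_zero]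
      rw [this]
      exact Submodule.smul_mem _ _ (Submodule.subset_span rfl)
    · intro h
      obtain ⟨s, hs⟩ := Submodule.mem_span_singleton.mp h
      apply Subtype.ext
      funext j
      have := congrFun hs j.succ
      simp [he0, Pi.single_apply, Fin.succ_ne_zero] at this
      simp [T, LinearMap.codRestrict, LinearMap.funLeft, ← this]
  exact ⟨(Submodule.quotEquivOfEq _ _ hker.symm).trans
    ((T.quotKerEquivOfSurjective hTsurj).trans E)⟩
end

section
/- Suppose R is a principal ideal domain, a_1 ≠ 0, and n > 2. Then S = U_1 if and only if a_1^{n−2} = (a_1,a_2)·(a_1,a_3)⋯(a_1,a_n) up to multiplication by a unit of R. -/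
/-! Write `α = a₁`, `bⱼ = a_{j+1}`, and `α = cⱼ dⱼ`, `bⱼ = cⱼ b'ⱼ` with `cⱼ = (α, bⱼ)`, so that
`u(1,j) = (-b'ⱼ, 0, …, dⱼ, …, 0)`. A solution is determined by its tail `y`: the tails of
elements of `S` are the `y` with `α ∣ ∑ bⱼ yⱼ`, those of elements of `U₁` the `y` with `dⱼ ∣ yⱼ`
for all `j`. So `S = U₁` says that the first condition forces the second. Testing it on
`y = cⱼ e_k - t b_k e_j`, for a Bézout relation `cⱼ = s α + t bⱼ`, shows that it is equivalent
to `d_k ∣ cⱼ` for all `j ≠ k`. By unimodularity this makes `d_k` prime to `b_k` and the `dⱼ`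
pairwise prime, so it is equivalent to `∏ dⱼ ∣ α`; unimodularity also gives `α ∣ ∏ dⱼ`.
Finally `∏ cⱼ ∏ dⱼ = α^(n-1)`, so `α ~ ∏ dⱼ` iff `α^(n-2) ~ ∏ cⱼ`. -/

namespace Ideal

variable {R : Type*} [CommRing R] {s : Set R}

theorem dvd_of_forall_dvd_mul_of_span_eq_top {x y : R} (hs : span s = ⊤)
    (h : ∀ z ∈ s, x ∣ z * y) : x ∣ y := by
  have hle : span s ≤ (span {x}).colon {y} :=
    span_le.2 fun z hz => Submodule.mem_colon_singleton.2 (mem_span_singleton.2 (h z hz))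
  rw [hs] at hle
  have h1 := Submodule.mem_colon_singleton.1 (hle (Submodule.mem_top (x := (1 : R))))
  exact mem_span_singleton.1 (by simpa using h1)

theorem isUnit_of_forall_dvd_of_span_eq_top {g : R} (hs : span s = ⊤) (h : ∀ z ∈ s, g ∣ z) :
    IsUnit g :=
  isUnit_of_dvd_one (dvd_of_forall_dvd_mul_of_span_eq_top hs fun z hz => by simpa using h z hz)

end Ideal

section Cofactors

variable {R : Type*} [CommRing R] {ι : Type*} {α : R} {b c d : ι → R}

theorem isRelPrime_of_forall_dvd_of_ne (hunim : Ideal.span (insert α (Set.range b)) = ⊤)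
    (hcd : ∀ j, c j * d j = α) (hcb : ∀ j, c j ∣ b j) (hdc : ∀ j k, j ≠ k → d k ∣ c j)
    (k : ι) : IsRelPrime (d k) (b k) := by
  intro g hgd hgb
  refine Ideal.isUnit_of_forall_dvd_of_span_eq_top hunim ?_
  rintro _ (rfl | ⟨j, rfl⟩)
  · exact hgd.trans (Dvd.intro_left _ (hcd k))
  · by_cases hjk : j = k
    · exact hjk ▸ hgb
    · exact hgd.trans ((hdc j k hjk).trans (hcb j))

variable [Fintype ι]

theorem dvd_prod_of_mul_eq (hunim : Ideal.span (insert α (Set.range b)) = ⊤)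
    (hcd : ∀ j, c j * d j = α) (hcb : ∀ j, c j ∣ b j) : α ∣ ∏ j, d j := by
  refine Ideal.dvd_of_forall_dvd_mul_of_span_eq_top hunim ?_
  rintro _ (rfl | ⟨j, rfl⟩)
  · exact dvd_mul_right _ _
  · exact hcd j ▸ mul_dvd_mul (hcb j) (Finset.dvd_prod_of_mem d (Finset.mem_univ j))

theorem dvd_of_ne_of_forall_dvd_sum (hc : ∀ j, c j ∈ Ideal.span {α, b j})
    (hdvd : ∀ y : ι → R, α ∣ ∑ i, b i * y i → ∀ k, d k ∣ y k) {j k : ι} (hjk : j ≠ k) :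
    d k ∣ c j := by
  classical
  obtain ⟨s, t, hst⟩ := Ideal.mem_span_pair.1 (hc j)
  have hsum : ∑ i, b i * (Pi.single k (c j) - Pi.single j (t * b k) : ι → R) i =
      α * (s * b k) := by
    simp only [Pi.sub_apply, mul_sub, Finset.sum_sub_distrib, Pi.single_apply, mul_ite,
      mul_zero, Finset.sum_ite_eq', Finset.mem_univ, if_true]
    linear_combination (-b k) * hst
  simpa [hjk] using hdvd _ ⟨_, hsum⟩ k

theorem dvd_of_ne_of_prod_dvd [IsDomain R] (hα : α ≠ 0) (hcd : ∀ j, c j * d j = α)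
    (h : ∏ j, d j ∣ α) {j k : ι} (hjk : j ≠ k) : d k ∣ c j := by
  classical
  have hdj : d j ≠ 0 := right_ne_zero_of_mul (hcd j ▸ hα)
  rw [← Finset.mul_prod_erase _ _ (Finset.mem_univ j), ← hcd j, mul_comm (c j)] at h
  exact (Finset.dvd_prod_of_mem d (by simp [hjk.symm])).trans ((mul_dvd_mul_iff_left hdj).1 h)

variable [DecompositionMonoid R]

theorem forall_dvd_of_dvd_sum (hunim : Ideal.span (insert α (Set.range b)) = ⊤)
    (hcd : ∀ j, c j * d j = α) (hcb : ∀ j, c j ∣ b j) (hdc : ∀ j k, j ≠ k → d k ∣ c j)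
    (y : ι → R) (hy : α ∣ ∑ i, b i * y i) (k : ι) : d k ∣ y k := by
  classical
  refine (isRelPrime_of_forall_dvd_of_ne hunim hcd hcb hdc k).dvd_of_dvd_mul_left ?_
  have hrest : d k ∣ ∑ i ∈ Finset.univ.erase k, b i * y i :=
    Finset.dvd_sum fun i hi => ((hdc i k (Finset.ne_of_mem_erase hi)).trans (hcb i)).mul_right _
  rw [← Finset.add_sum_erase _ _ (Finset.mem_univ k)] at hy
  exact (dvd_add_left hrest).1 ((Dvd.intro_left _ (hcd k)).trans hy)

theorem prod_dvd_of_forall_dvd_of_ne (hunim : Ideal.span (insert α (Set.range b)) = ⊤)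
    (hcd : ∀ j, c j * d j = α) (hcb : ∀ j, c j ∣ b j) (hdc : ∀ j k, j ≠ k → d k ∣ c j) :
    ∏ j, d j ∣ α :=
  Fintype.prod_dvd_of_isRelPrime
    (fun i k hik => (isRelPrime_of_forall_dvd_of_ne hunim hcd hcb hdc i).of_dvd_right
      ((hdc i k hik).trans (hcb i)))
    fun k => Dvd.intro_left _ (hcd k)

theorem forall_dvd_of_dvd_sum_iff_associated [IsDomain R] (hα : α ≠ 0)
    (hunim : Ideal.span (insert α (Set.range b)) = ⊤) (hcd : ∀ j, c j * d j = α)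
    (hcb : ∀ j, c j ∣ b j) (hc : ∀ j, c j ∈ Ideal.span {α, b j}) :
    (∀ y : ι → R, α ∣ ∑ i, b i * y i → ∀ k, d k ∣ y k) ↔ Associated α (∏ j, d j) :=
  ⟨fun hdvd => associated_of_dvd_dvd (dvd_prod_of_mul_eq hunim hcd hcb)
      (prod_dvd_of_forall_dvd_of_ne hunim hcd hcb fun _ _ => dvd_of_ne_of_forall_dvd_sum hc hdvd),
    fun h => forall_dvd_of_dvd_sum hunim hcd hcb fun _ _ => dvd_of_ne_of_prod_dvd hα hcd h.symm.dvd⟩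

end Cofactors

section Solutions

variable {R : Type*} [CommRing R] {m : ℕ}

/-- `reducedKoszul b' d j` is the paper's `u(1, j+2)` when `a₁ = cⱼ dⱼ` and `a_{j+2} = cⱼ b'ⱼ`. -/
def reducedKoszul (b' d : Fin m → R) (j : Fin m) : Fin (m + 1) → R :=
  Fin.cons (-b' j) (Pi.single j (d j))

variable {b' d : Fin m → R}

theorem sum_smul_reducedKoszul (t : Fin m → R) :
    ∑ j, t j • reducedKoszul b' d j = Fin.cons (-∑ j, t j * b' j) fun k => t k * d k := by
  ext i
  refine Fin.cases ?_ (fun k => ?_) i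
  · simp [reducedKoszul, Finset.sum_apply]
  · simp [reducedKoszul, Finset.sum_apply, Pi.single_apply]

theorem eq_span_reducedKoszul_iff [IsDomain R] {α : R} {b : Fin m → R} (hα : α ≠ 0)
    (hbd : ∀ j, d j * b j = α * b' j) (S : Submodule R (Fin (m + 1) → R))
    (hS : ∀ x, x ∈ S ↔ α * x 0 + ∑ j, b j * x j.succ = 0) :
    S = Submodule.span R (Set.range (reducedKoszul b' d)) ↔
      ∀ y : Fin m → R, α ∣ ∑ j, b j * y j → ∀ k, d k ∣ y k := by
  have hmem : ∀ x, x ∈ Submodule.span R (Set.range (reducedKoszul b' d)) ↔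
      ∃ t : Fin m → R, Fin.cons (-∑ j, t j * b' j) (fun k => t k * d k) = x := by
    simp [Submodule.mem_span_range_iff_exists_fun, sum_smul_reducedKoszul]
  have hle : Submodule.span R (Set.range (reducedKoszul b' d)) ≤ S := by
    rw [Submodule.span_le]
    rintro _ ⟨j, rfl⟩
    simp [reducedKoszul, hS, Pi.single_apply, ← hbd j, mul_comm]
  rw [le_antisymm_iff, and_iff_left hle]
  constructor
  · rintro hSU y ⟨q, hq⟩ k
    obtain ⟨t, ht⟩ := (hmem _).1 (hSU ((hS (Fin.cons (-q) y)).2 (by simp [hq])))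
    exact ⟨t k, by simpa [mul_comm] using (congrFun ht k.succ).symm⟩
  · intro hdvd x hx
    have hx' := (hS x).1 hx
    choose t ht using hdvd (fun k => x k.succ) ⟨-x 0, by linear_combination hx'⟩
    refine (hmem x).2 ⟨t, ?_⟩
    rw [← Fin.cons_self_tail x]
    congr 1
    · have hterm : ∀ j, α * (t j * b' j) = b j * x j.succ := fun j => by
        rw [ht j]; linear_combination (-t j) * hbd j
      refine mul_left_cancel₀ hα ?_
      rw [mul_neg, Finset.mul_sum, Finset.sum_congr rfl fun j _ => hterm j]
      linear_combination -hx'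
    · funext k; simp [Fin.tail, ht k, mul_comm]

end Solutions

theorem associated_pow_iff_of_mul_eq_pow {M : Type*} [CommMonoidWithZero M] [IsCancelMulZero M]
    {x p q : M} {n : ℕ} (hx : x ≠ 0) (h : p * q = x ^ (n + 1)) :
    Associated (x ^ n) p ↔ Associated x q := by
  have h' : Associated (x ^ n * x) (p * q) := by rw [h, pow_succ]
  exact ⟨fun hp => h'.of_mul_left hp (pow_ne_zero n hx),
    fun hq => h'.of_mul_right hq hx⟩

/-- `S = U₁` if and only if `a₁^{n−2} = (a₁,a₂)⋯(a₁,aₙ)` up to a unit.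
Here `n = m + 1`; `v j = v(1, j+2)` and `u j = u(1, j+2)` for `j : Fin m`,
where `c j` is a gcd of `a₁` and `a_{j+2}`. -/
theorem stmt_15 {R : Type*} [CommRing R] [IsDomain R] [IsPrincipalIdealRing R]
    {m : ℕ} (hm : 2 ≤ m) (a : Fin (m + 1) → R)
    (huni : Ideal.span (Set.range a) = ⊤) (ha1 : a 0 ≠ 0)
    (S : Submodule R (Fin (m + 1) → R))
    (hS : ∀ x, x ∈ S ↔ ∑ i, a i * x i = 0)
    (v : Fin m → Fin (m + 1) → R)
    (hv : ∀ j k, v j k = if k = 0 then -a j.succ else if k = j.succ then a 0 else 0)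
    (c : Fin m → R) (hc : ∀ j, Ideal.span {c j} = Ideal.span {a 0, a j.succ})
    (u : Fin m → Fin (m + 1) → R)
    (hu : ∀ j, c j • u j = v j)
    (U1 : Submodule R (Fin (m + 1) → R))
    (hU1 : U1 = Submodule.span R (Set.range u)) :
    S = U1 ↔ Associated (a 0 ^ (m - 1)) (∏ j : Fin m, c j) := by
  obtain ⟨n, rfl⟩ : ∃ n, m = n + 1 := ⟨m - 1, by omega⟩
  have hc_mem : ∀ j, c j ∈ Ideal.span {a 0, a j.succ} := fun j =>
    hc j ▸ Ideal.mem_span_singleton_self _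
  have hc_dvd : ∀ j x, x ∈ Ideal.span {a 0, a j.succ} → c j ∣ x := fun j x hx =>
    Ideal.mem_span_singleton.1 (hc j ▸ hx)
  choose d hd using fun j => hc_dvd j _ (Ideal.subset_span (Set.mem_insert _ _))
  choose b' hb' using fun j => hc_dvd j _ (Ideal.subset_span (Set.mem_insert_of_mem _ rfl))
  have hc0 : ∀ j, c j ≠ 0 := fun j h => ha1 (by rw [hd j, h, zero_mul])
  have hu_eq : u = reducedKoszul b' d := by
    funext j k
    refine mul_left_cancel₀ (hc0 j) ?_
    rw [← smul_eq_mul, ← Pi.smul_apply, hu j, hv, reducedKoszul]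
    refine Fin.cases ?_ (fun k => ?_) k
    · simp [hb' j]
    · by_cases hkj : k = j <;> simp [hkj, hd j, Fin.succ_ne_zero]
  have hunim : Ideal.span (insert (a 0) (Set.range fun j : Fin (n + 1) => a j.succ)) = ⊤ := by
    rwa [Fin.range_fin_succ] at huni
  have hbd : ∀ j, d j * a j.succ = a 0 * b' j := fun j => by rw [hb' j, hd j]; ring
  have hprod : (∏ j, c j) * ∏ j, d j = a 0 ^ (n + 1) := by
    rw [← Finset.prod_mul_distrib, Finset.prod_congr rfl fun j _ => (hd j).symm]; simp
  rw [hU1, hu_eq, eq_span_reducedKoszul_iff ha1 hbd S fun x => by rw [hS, Fin.sum_univ_succ],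
    forall_dvd_of_dvd_sum_iff_associated ha1 hunim (fun j => (hd j).symm)
      (fun j => ⟨b' j, hb' j⟩) hc_mem,
    Nat.add_sub_cancel, associated_pow_iff_of_mul_eq_pow ha1 hprod]
end
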